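/- arXiv:2509.19722 — 9 statements merged into one kernel-verified Lean document; each statement's English description precedes it below -/
import Mathlib

section
/- Let (w(n)) be a non-increasing sequence of positive reals with W(N) = Σ_{n=1}^N w(n) → ∞. If a sequence (a_n) of complex numbers satisfies (1/N) Σ_{n=1}^N a_n → a, then (1/W(N)) Σ_{n=1}^N w(n) a_n → a. -/
open Filter Finset Topology

lemma abel_bound (w : ℕ → ℝ) (hmono : ∀ n, w (n + 1) ≤ w n) (b : ℕ → ℂ) (N : ℕ) :
    ‖(∑ n ∈ Icc 1 N, (w n : ℂ) * b n) - (w N : ℂ) * ∑ n ∈ Icc 1 N, b n‖ ≤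
      ∑ n ∈ Ico 1 N, (w n - w (n + 1)) * ‖∑ k ∈ Icc 1 n, b k‖ := by
  induction N with
  | zero => simp
  | succ N ih =>
    rcases Nat.eq_zero_or_pos N with rfl | hN
    · simp
    rw [Finset.sum_Icc_succ_top (by omega : 1 ≤ N + 1),
      Finset.sum_Icc_succ_top (by omega : 1 ≤ N + 1),
      Finset.sum_Ico_succ_top (by omega : 1 ≤ N)]
    have key : (∑ n ∈ Icc 1 N, (w n : ℂ) * b n) + (w (N+1) : ℂ) * b (N+1) -
        (w (N+1) : ℂ) * ((∑ n ∈ Icc 1 N, b n) + b (N+1)) =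
        ((∑ n ∈ Icc 1 N, (w n : ℂ) * b n) - (w N : ℂ) * ∑ n ∈ Icc 1 N, b n)
          + ((w N : ℂ) - (w (N+1) : ℂ)) * ∑ n ∈ Icc 1 N, b n := by ring
    rw [key]
    refine (norm_add_le _ _).trans (add_le_add ih ?_)
    rw [norm_mul]
    have : ‖(w N : ℂ) - (w (N+1) : ℂ)‖ = w N - w (N + 1) := by
      rw [← Complex.ofReal_sub, Complex.norm_real, Real.norm_of_nonneg (by linarith [hmono N])]
    rw [this]

lemma weight_id (w : ℕ → ℝ) (N : ℕ) :
    ∑ n ∈ Ico 1 N, (w n - w (n + 1)) * n + w N * N = ∑ n ∈ Icc 1 N, w n := by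
  induction N with
  | zero => simp
  | succ N ih =>
    rcases Nat.eq_zero_or_pos N with rfl | hN
    · simp
    rw [Finset.sum_Icc_succ_top (by omega : 1 ≤ N + 1),
      Finset.sum_Ico_succ_top (by omega : 1 ≤ N), ← ih]
    push_cast
    ring

theorem weighted_cesaro
    (w : ℕ → ℝ) (hpos : ∀ n, 0 < w n) (hmono : ∀ n, w (n + 1) ≤ w n)
    (hW : Tendsto (fun N : ℕ => ∑ n ∈ Icc 1 N, w n) atTop atTop)
    (a : ℕ → ℂ) (L : ℂ)
    (ha : Tendsto (fun N : ℕ => (N : ℂ)⁻¹ * ∑ n ∈ Icc 1 N, a n) atTop (𝓝 L)) :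
    Tendsto (fun N : ℕ => ((∑ n ∈ Icc 1 N, w n : ℝ) : ℂ)⁻¹ *
      ∑ n ∈ Icc 1 N, (w n : ℂ) * a n) atTop (𝓝 L) := by
  set b : ℕ → ℂ := fun n => a n - L with hb
  set S : ℕ → ℂ := fun N => ∑ n ∈ Icc 1 N, b n with hS
  set T : ℕ → ℂ := fun N => ∑ n ∈ Icc 1 N, (w n : ℂ) * b n with hT
  set W : ℕ → ℝ := fun N => ∑ n ∈ Icc 1 N, w n with hWdef
  have hWpos : ∀ N, 1 ≤ N → 0 < W N := by
    intro N hN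
    exact Finset.sum_pos (fun n _ => hpos n) (Finset.nonempty_Icc.2 hN)
  have hwnonneg : ∀ n, 0 ≤ w n - w (n + 1) := fun n => by linarith [hmono n]
  -- S N / N → 0
  have hS0 : Tendsto (fun N : ℕ => (N : ℂ)⁻¹ * S N) atTop (𝓝 0) := by
    have := ha.sub_const L
    rw [sub_self] at this
    apply this.congr'
    filter_upwards [Ici_mem_atTop 1] with N hN
    have hN' : 1 ≤ N := hN
    have hNne : (N : ℂ) ≠ 0 := Nat.cast_ne_zero.2 (by omega)
    simp only [hS, hb, Finset.sum_sub_distrib, Finset.sum_const, Nat.card_Icc,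
      Nat.add_sub_cancel, nsmul_eq_mul, mul_sub]
    rw [← mul_assoc, inv_mul_cancel₀ hNne, one_mul]
  -- key estimate
  have key : ∀ ε : ℝ, 0 < ε → ∀ᶠ N in atTop, ‖T N‖ ≤ ε * W N := by
    intro ε hε
    have hε2 : 0 < ε / 2 := by linarith
    obtain ⟨M, hM⟩ : ∃ M : ℕ, 1 ≤ M ∧ ∀ n ≥ M, ‖S n‖ ≤ ε / 2 * n := by
      have := (Metric.tendsto_atTop.1 hS0 (ε / 2) hε2)
      obtain ⟨M, hM⟩ := this
      refine ⟨max M 1, le_max_right _ _, fun n hn => ?_⟩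
      have h1 : 1 ≤ n := le_trans (le_max_right M 1) hn
      have := hM n (le_trans (le_max_left M 1) hn)
      rw [dist_zero_right, norm_mul, norm_inv, Complex.norm_natCast] at this
      have hnpos : (0 : ℝ) < n := by exact_mod_cast h1
      rw [inv_mul_eq_div, div_lt_iff₀ hnpos] at this
      linarith [this]
    obtain ⟨hM1, hM2⟩ := hM
    set C : ℝ := ∑ n ∈ Ico 1 M, (w n - w (n + 1)) * ‖S n‖ with hC
    have hWC : ∀ᶠ N in atTop, C / (ε / 2) ≤ W N := hW.eventually_ge_atTop _
    filter_upwards [hWC, Ici_mem_atTop M] with N hN1 hN2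
    have hN1' : 1 ≤ N := le_trans hM1 hN2
    have hCle : C ≤ ε / 2 * W N := by
      rw [div_le_iff₀ hε2] at hN1
      linarith [hN1]
    -- main bound
    have h1 : ‖T N‖ ≤ ‖T N - (w N : ℂ) * S N‖ + w N * ‖S N‖ := by
      have h1a := norm_sub_norm_le (T N) ((w N : ℂ) * S N)
      have h1b : ‖(w N : ℂ) * S N‖ = w N * ‖S N‖ := by
        rw [norm_mul, Complex.norm_real, Real.norm_of_nonneg (hpos N).le]
      linarith
    have h2 := abel_bound w hmono b N
    have hsplit : ∑ n ∈ Ico 1 N, (w n - w (n + 1)) * ‖S n‖ =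
        C + ∑ n ∈ Ico M N, (w n - w (n + 1)) * ‖S n‖ := by
      rw [hC, Finset.sum_Ico_consecutive _ hM1 hN2]
    have h3 : ∑ n ∈ Ico M N, (w n - w (n + 1)) * ‖S n‖ ≤
        ε / 2 * ∑ n ∈ Ico M N, (w n - w (n + 1)) * n := by
      rw [Finset.mul_sum]
      apply Finset.sum_le_sum
      intro n hn
      have hn' : M ≤ n := (Finset.mem_Ico.1 hn).1
      have := hM2 n hn'
      calc (w n - w (n + 1)) * ‖S n‖ ≤ (w n - w (n + 1)) * (ε / 2 * n) :=
            mul_le_mul_of_nonneg_left this (hwnonneg n)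
        _ = ε / 2 * ((w n - w (n + 1)) * n) := by ring
    have h4 : w N * ‖S N‖ ≤ ε / 2 * (w N * N) := by
      have := hM2 N hN2
      calc w N * ‖S N‖ ≤ w N * (ε / 2 * N) := mul_le_mul_of_nonneg_left this (hpos N).le
        _ = ε / 2 * (w N * N) := by ring
    have hWN : W N = ∑ n ∈ Icc 1 N, w n := rfl
    have h5 : ∑ n ∈ Ico M N, (w n - w (n + 1)) * n + w N * N ≤ W N := by
      rw [hWN, ← weight_id w N]
      have : ∑ n ∈ Ico M N, (w n - w (n + 1)) * (n : ℝ) ≤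
          ∑ n ∈ Ico 1 N, (w n - w (n + 1)) * (n : ℝ) := by
        apply Finset.sum_le_sum_of_subset_of_nonneg
        · apply Finset.Ico_subset_Ico hM1 le_rfl
        · intro n _ _
          exact mul_nonneg (hwnonneg n) (Nat.cast_nonneg n)
      linarith
    calc ‖T N‖ ≤ ‖T N - (w N : ℂ) * S N‖ + w N * ‖S N‖ := h1
      _ ≤ (C + ∑ n ∈ Ico M N, (w n - w (n + 1)) * ‖S n‖) + w N * ‖S N‖ := by
          rw [← hsplit]; linarith [h2]
      _ ≤ C + ε / 2 * (∑ n ∈ Ico M N, (w n - w (n + 1)) * n + w N * N) := by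
          rw [mul_add]; linarith
      _ ≤ ε / 2 * W N + ε / 2 * W N := by
          have := mul_le_mul_of_nonneg_left h5 hε2.le
          linarith
      _ = ε * W N := by ring
  -- conclude
  rw [← tendsto_sub_nhds_zero_iff]
  have heq : ∀ᶠ N in atTop, ((W N : ℝ) : ℂ)⁻¹ * (∑ n ∈ Icc 1 N, (w n : ℂ) * a n) - L =
      ((W N : ℝ) : ℂ)⁻¹ * T N := by
    filter_upwards [Ici_mem_atTop 1] with N hN
    have hWne : ((W N : ℝ) : ℂ) ≠ 0 := by
      exact_mod_cast (hWpos N hN).ne'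
    have hcast : ((W N : ℝ) : ℂ) = ∑ i ∈ Icc 1 N, ((w i : ℝ) : ℂ) := by
      rw [show W N = ∑ i ∈ Icc 1 N, w i from rfl]
      push_cast
      ring
    have hsum : ∑ n ∈ Icc 1 N, (w n : ℂ) * a n = T N + ((W N : ℝ) : ℂ) * L := by
      simp only [hT, hb, mul_sub, Finset.sum_sub_distrib]
      rw [← Finset.sum_mul, hcast]
      ring
    rw [hsum, mul_add, ← mul_assoc, inv_mul_cancel₀ hWne, one_mul]
    ring
  refine Tendsto.congr' (EventuallyEq.symm heq) ?_
  rw [NormedAddCommGroup.tendsto_nhds_zero]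
  intro ε hε
  filter_upwards [key (ε/2) (by linarith), Ici_mem_atTop 1] with N hk hN
  have hWp := hWpos N hN
  have hnorm : ‖((W N : ℝ) : ℂ)⁻¹ * T N‖ = (W N)⁻¹ * ‖T N‖ := by
    rw [norm_mul, norm_inv, Complex.norm_real, Real.norm_of_nonneg hWp.le]
  rw [hnorm]
  calc (W N)⁻¹ * ‖T N‖ ≤ (W N)⁻¹ * (ε / 2 * W N) :=
        mul_le_mul_of_nonneg_left hk (inv_nonneg.2 hWp.le)
    _ = ε / 2 := by field_simp
    _ < ε := by linarith
end

section
/- Let u be an eventually increasing differentiable function on [x₀,∞) with u(x) → ∞ and u'(x) ≤ C/x for x ≥ x₀, and suppose u(x)/log log x → ∞ as x → ∞. Then u(x log x)/u(x) → 1 as x → ∞. -/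
open Filter Topology

theorem u_xlogx_ratio_tendsto_one
    (u u' : ℝ → ℝ) (x₀ C : ℝ) (hC : 0 < C)
    (hmono : ∀ x y, x₀ ≤ x → x ≤ y → u x ≤ u y)
    (hinf : Tendsto u atTop atTop)
    (hderiv : ∀ x, x₀ ≤ x → HasDerivAt u (u' x) x)
    (hbound : ∀ x, x₀ ≤ x → u' x ≤ C / x)
    (hfast : Tendsto (fun x => u x / Real.log (Real.log x)) atTop atTop) :
    Tendsto (fun x => u (x * Real.log x) / u x) atTop (𝓝 1) := by
  set a := max x₀ 1 with ha
  -- key inequality from derivative bound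
  have key : ∀ x y, a ≤ x → x ≤ y → u y - u x ≤ C * (Real.log y - Real.log x) := by
    intro x y hx hxy
    have hmonoG : MonotoneOn (fun t => C * Real.log t - u t) (Set.Ici a) := by
      refine monotoneOn_of_deriv_nonneg (convex_Ici a) ?_ ?_ ?_
      · intro t ht
        have ht1 : (1:ℝ) ≤ t := le_trans (le_max_right _ _) ht
        have hd := ((Real.hasDerivAt_log (by linarith)).const_mul C).sub
          (hderiv t (le_trans (le_max_left _ _) ht))
        exact hd.continuousAt.continuousWithinAt
      · intro t ht
        rw [interior_Ici] at ht
        have ht1 : (1:ℝ) < t := lt_of_le_of_lt (le_max_right _ _) ht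
        have hx0 : x₀ ≤ t := le_of_lt (lt_of_le_of_lt (le_max_left _ _) ht)
        have hd := ((Real.hasDerivAt_log (by linarith)).const_mul C).sub (hderiv t hx0)
        exact hd.differentiableAt.differentiableWithinAt
      · intro t ht
        rw [interior_Ici] at ht
        have ht1 : (1:ℝ) < t := lt_of_le_of_lt (le_max_right _ _) ht
        have hx0 : x₀ ≤ t := le_of_lt (lt_of_le_of_lt (le_max_left _ _) ht)
        have hd := ((Real.hasDerivAt_log (by linarith)).const_mul C).sub (hderiv t hx0)
        have hd' : HasDerivAt (fun t => C * Real.log t - u t) (C * t⁻¹ - u' t) t := hd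
        rw [hd'.deriv]
        have hb := hbound t hx0
        rw [div_eq_mul_inv] at hb
        linarith
    have := hmonoG (Set.mem_Ici.mpr hx) (Set.mem_Ici.mpr (le_trans hx hxy)) hxy
    simp only at this
    nlinarith [this]
  have h3 : (1:ℝ) < Real.log 3 := by
    rw [Real.lt_log_iff_exp_lt (by norm_num)]
    have := Real.exp_one_lt_d9
    linarith
  have hub : Tendsto (fun x => 1 + C * Real.log (Real.log x) / u x) atTop (𝓝 1) := by
    have h0 : Tendsto (fun x => C * (u x / Real.log (Real.log x))⁻¹) atTop (𝓝 (C * 0)) :=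
      tendsto_const_nhds.mul hfast.inv_tendsto_atTop
    have h1 : Tendsto (fun x => 1 + C * Real.log (Real.log x) / u x) atTop (𝓝 (1 + C * 0)) := by
      apply tendsto_const_nhds.add
      convert h0 using 2 with x
      rw [inv_div, mul_div_assoc]
    simpa using h1
  apply tendsto_of_tendsto_of_tendsto_of_le_of_le' tendsto_const_nhds hub
  · filter_upwards [eventually_ge_atTop (max a 3), hinf.eventually_gt_atTop 0] with x hx hux
    have hxa : a ≤ x := le_trans (le_max_left _ _) hx
    have hx3 : (3:ℝ) ≤ x := le_trans (le_max_right _ _) hx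
    have hlog : 1 < Real.log x := lt_of_lt_of_le h3 (Real.log_le_log (by norm_num) hx3)
    have hxy : x ≤ x * Real.log x := by nlinarith
    rw [le_div_iff₀ hux, one_mul]
    exact hmono x _ (le_trans (le_max_left _ _) hxa) hxy
  · filter_upwards [eventually_ge_atTop (max a 3), hinf.eventually_gt_atTop 0] with x hx hux
    have hxa : a ≤ x := le_trans (le_max_left _ _) hx
    have hx3 : (3:ℝ) ≤ x := le_trans (le_max_right _ _) hx
    have hlog : 1 < Real.log x := lt_of_lt_of_le h3 (Real.log_le_log (by norm_num) hx3)
    have hxy : x ≤ x * Real.log x := by nlinarith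
    have hk := key x (x * Real.log x) hxa hxy
    have hsplit : Real.log (x * Real.log x) = Real.log x + Real.log (Real.log x) :=
      Real.log_mul (by linarith) (by linarith)
    rw [hsplit] at hk
    rw [div_le_iff₀ hux]
    have : u (x * Real.log x) ≤ u x + C * Real.log (Real.log x) := by nlinarith
    calc u (x * Real.log x) ≤ u x + C * Real.log (Real.log x) := this
      _ = (1 + C * Real.log (Real.log x) / u x) * u x := by field_simp
end

section
/- Let (w(n)) be positive non-increasing with W(N) = Σ_{n=1}^N w(n) → ∞. Suppose (y_n) is a real sequence with |y_n − y_{n−1}| ≤ C·w(n)/W(n) for all n ≥ 2, for some constant C > 0. If (x_n) is w(n)-uniformly distributed mod 1, then (x_n + y_n) is also w(n)-uniformly distributed mod 1. -/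
open Filter Finset Topology

/-- Lipschitz bound for the circle map. -/
lemma exp_I_lipschitz (a b : ℝ) :
    ‖Complex.exp (a * Complex.I) - Complex.exp (b * Complex.I)‖ ≤ |a - b| := by
  have h := (lipschitzWith_circleMap 0 1).dist_le_mul a b
  simpa [circleMap, Complex.dist_eq, Real.dist_eq] using h

/-- Abel summation in the form we need. -/
lemma abel_aux (a f : ℕ → ℂ) (N : ℕ) :
    ∑ n ∈ Icc 1 N, a n * f n =
      (∑ n ∈ Icc 1 N, a n) * f N +
        ∑ n ∈ range N, (∑ k ∈ Icc 1 n, a k) * (f n - f (n + 1)) := by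
  induction N with
  | zero => simp
  | succ N ih =>
    have h1 : ∑ n ∈ Icc 1 (N + 1), a n * f n
        = (∑ n ∈ Icc 1 N, a n * f n) + a (N + 1) * f (N + 1) :=
      Finset.sum_Icc_succ_top (by omega) _
    have h2 : ∑ n ∈ Icc 1 (N + 1), a n = (∑ n ∈ Icc 1 N, a n) + a (N + 1) :=
      Finset.sum_Icc_succ_top (by omega) _
    rw [h1, ih, h2, Finset.sum_range_succ]
    ring

/-- Tendsto of the normalized averages is the same as little-o. -/
lemma inv_mul_tendsto_iff_isLittleO (W : ℕ → ℝ) (hW : ∀ᶠ N in atTop, 0 < W N)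
    (u : ℕ → ℂ) :
    Tendsto (fun N => ((W N : ℝ) : ℂ)⁻¹ * u N) atTop (𝓝 0) ↔
      u =o[atTop] W := by
  have h1 : (u =o[atTop] fun N => ((W N : ℝ) : ℂ)) ↔ u =o[atTop] W := by
    simp only [Asymptotics.isLittleO_iff, Complex.norm_real]
  have hgf : ∀ᶠ N in atTop, ((W N : ℝ) : ℂ) = 0 → u N = 0 := by
    filter_upwards [hW] with N hN h
    exact absurd (by exact_mod_cast h) hN.ne'
  rw [← h1, Asymptotics.isLittleO_iff_tendsto' hgf]
  exact tendsto_congr fun N => (div_eq_inv_mul (u N) _).symm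

set_option maxHeartbeats 1000000 in
theorem weighted_ud_perturbation
    (w : ℕ → ℝ) (hpos : ∀ n, 0 < w n) (hmono : ∀ n, w (n + 1) ≤ w n)
    (hW : Tendsto (fun N : ℕ => ∑ n ∈ Icc 1 N, w n) atTop atTop)
    (x y : ℕ → ℝ) (C : ℝ) (hC : 0 < C)
    (hy : ∀ n : ℕ, 2 ≤ n →
      |y n - y (n - 1)| ≤ C * w n / (∑ k ∈ Icc 1 n, w k))
    (hx : ∀ m : ℤ, m ≠ 0 →
      Tendsto (fun N : ℕ => ((∑ n ∈ Icc 1 N, w n : ℝ) : ℂ)⁻¹ *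
        ∑ n ∈ Icc 1 N, (w n : ℂ) *
          Complex.exp (2 * Real.pi * Complex.I * m * x n)) atTop (𝓝 0)) :
    ∀ m : ℤ, m ≠ 0 →
      Tendsto (fun N : ℕ => ((∑ n ∈ Icc 1 N, w n : ℝ) : ℂ)⁻¹ *
        ∑ n ∈ Icc 1 N, (w n : ℂ) *
          Complex.exp (2 * Real.pi * Complex.I * m * (x n + y n))) atTop (𝓝 0) := by
  intro m hm
  set W : ℕ → ℝ := fun N => ∑ n ∈ Icc 1 N, w n with hWdef
  set E : ℝ → ℂ := fun t => Complex.exp (2 * Real.pi * Complex.I * m * t) with hEdef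
  set S : ℕ → ℂ := fun N => ∑ n ∈ Icc 1 N, (w n : ℂ) * E (x n) with hSdef
  set T : ℕ → ℂ := fun N => ∑ n ∈ Icc 1 N, (w n : ℂ) *
    Complex.exp (2 * Real.pi * Complex.I * m * (x n + y n)) with hTdef
  have hWpos : ∀ N : ℕ, 1 ≤ N → 0 < W N := fun N hN =>
    Finset.sum_pos (fun i _ => hpos i) ⟨1, by simp [hN]⟩
  have hWev : ∀ᶠ N in atTop, 0 < W N := by
    filter_upwards [eventually_ge_atTop 1] with N hN using hWpos N hN
  have hWmono : ∀ a b : ℕ, a ≤ b → W a ≤ W b := fun a b hab =>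
    Finset.sum_le_sum_of_subset_of_nonneg (Finset.Icc_subset_Icc_right hab)
      (fun i _ _ => (hpos i).le)
  -- basic facts about E
  have hE1 : ∀ t : ℝ, ‖E t‖ = 1 := by
    intro t
    have : 2 * (Real.pi : ℂ) * Complex.I * m * t = ((2 * Real.pi * m * t : ℝ) : ℂ) * Complex.I := by
      push_cast; ring
    rw [hEdef]; simp only []
    rw [this]
    exact Complex.norm_exp_ofReal_mul_I _
  have hEadd : ∀ s t : ℝ, E (s + t) = E s * E t := by
    intro s t
    rw [hEdef]; simp only []
    rw [← Complex.exp_add]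
    congr 1
    push_cast; ring
  have hEsub : ∀ s t : ℝ, ‖E s - E t‖ ≤ 2 * Real.pi * |(m : ℝ)| * |s - t| := by
    intro s t
    have e1 : 2 * (Real.pi : ℂ) * Complex.I * m * s
        = ((2 * Real.pi * m * s : ℝ) : ℂ) * Complex.I := by push_cast; ring
    have e2 : 2 * (Real.pi : ℂ) * Complex.I * m * t
        = ((2 * Real.pi * m * t : ℝ) : ℂ) * Complex.I := by push_cast; ring
    rw [hEdef]; simp only []
    rw [e1, e2]
    calc ‖Complex.exp (((2 * Real.pi * m * s : ℝ) : ℂ) * Complex.I)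
          - Complex.exp (((2 * Real.pi * m * t : ℝ) : ℂ) * Complex.I)‖
        ≤ |2 * Real.pi * (m : ℝ) * s - 2 * Real.pi * (m : ℝ) * t| := exp_I_lipschitz _ _
      _ = |2 * Real.pi * (m : ℝ)| * |s - t| := by rw [← abs_mul]; ring_nf
      _ = 2 * Real.pi * |(m : ℝ)| * |s - t| := by
            rw [abs_mul, abs_of_pos (by positivity : (0:ℝ) < 2 * Real.pi)]
  -- S is little-o of W, from the hypothesis
  have hS : S =o[atTop] W :=
    (inv_mul_tendsto_iff_isLittleO W hWev S).mp (hx m hm)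
  -- Abel summation
  have key : ∀ N, T N = S N * E (y N) +
      ∑ n ∈ range N, S n * (E (y n) - E (y (n + 1))) := by
    intro N
    have := abel_aux (fun n => (w n : ℂ) * E (x n)) (fun n => E (y n)) N
    simp only [mul_assoc] at this
    calc T N = ∑ n ∈ Icc 1 N, (w n : ℂ) * (E (x n) * E (y n)) := by
          rw [hTdef]
          refine Finset.sum_congr rfl fun n _ => ?_
          rw [hEdef]
          simp only []
          rw [← Complex.exp_add]
          congr 2
          push_cast
          ring
      _ = _ := this
  -- first term is little-o
  have hfirst : (fun N => S N * E (y N)) =o[atTop] W := by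
    have hO : (fun N => E (y N)) =O[atTop] (fun _ : ℕ => (1 : ℝ)) :=
      Asymptotics.isBigO_of_le _ fun N => by simp [hE1]
    have := hS.mul_isBigO hO
    refine this.congr (fun N => rfl) fun N => ?_
    simp
  -- the summand in the Abel sum is little-o of w (n+1)
  have hterm : (fun n => S n * (E (y n) - E (y (n + 1)))) =o[atTop]
      (fun n => w (n + 1)) := by
    rw [Asymptotics.isLittleO_iff]
    intro ε hε
    have hπm : (0 : ℝ) < 2 * Real.pi * |(m : ℝ)| := by
      have : (m : ℝ) ≠ 0 := Int.cast_ne_zero.mpr hm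
      positivity
    have hK : (0 : ℝ) < 2 * Real.pi * |(m : ℝ)| * C := by positivity
    filter_upwards [Asymptotics.isLittleO_iff.mp hS (div_pos hε hK),
      eventually_ge_atTop 1] with n hn h1
    have hWn : 0 < W n := hWpos n h1
    have hWn1 : 0 < W (n + 1) := hWpos (n + 1) (by omega)
    have hSn : ‖S n‖ ≤ ε / (2 * Real.pi * |(m : ℝ)| * C) * W n := by
      calc ‖S n‖ ≤ ε / (2 * Real.pi * |(m : ℝ)| * C) * ‖W n‖ := hn
        _ = _ := by rw [Real.norm_of_nonneg hWn.le]
    have hyb : |y n - y (n + 1)| ≤ C * w (n + 1) / W (n + 1) := by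
      rw [abs_sub_comm]
      have := hy (n + 1) (by omega)
      simpa using this
    have hEd : ‖E (y n) - E (y (n + 1))‖
        ≤ 2 * Real.pi * |(m : ℝ)| * (C * w (n + 1) / W (n + 1)) := by
      calc ‖E (y n) - E (y (n + 1))‖
          ≤ 2 * Real.pi * |(m : ℝ)| * |y n - y (n + 1)| := hEsub _ _
        _ ≤ _ := by
            exact mul_le_mul_of_nonneg_left hyb hπm.le
    calc ‖S n * (E (y n) - E (y (n + 1)))‖
        = ‖S n‖ * ‖E (y n) - E (y (n + 1))‖ := norm_mul _ _
      _ ≤ (ε / (2 * Real.pi * |(m : ℝ)| * C) * W n) *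
            (2 * Real.pi * |(m : ℝ)| * (C * w (n + 1) / W (n + 1))) := by
          exact mul_le_mul hSn hEd (norm_nonneg _)
            (mul_nonneg (by positivity) hWn.le)
      _ = ε * w (n + 1) * (W n / W (n + 1)) := by
          field_simp
      _ ≤ ε * w (n + 1) * 1 := by
          apply mul_le_mul_of_nonneg_left _ (mul_nonneg hε.le (hpos _).le)
          exact div_le_one_of_le₀ (hWmono n (n + 1) (by omega)) hWn1.le
      _ = ε * ‖w (n + 1)‖ := by rw [mul_one, Real.norm_of_nonneg (hpos _).le]
  -- sum up: the Abel remainder is little-o of W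
  have hrangeW : ∀ N : ℕ, ∑ i ∈ range N, w (i + 1) = W N := by
    intro N
    rw [hWdef]
    simp only []
    rw [← Finset.Ico_add_one_right_eq_Icc, Finset.sum_Ico_eq_sum_range]
    simp [add_comm]
  have hsum : (fun N => ∑ n ∈ range N, S n * (E (y n) - E (y (n + 1)))) =o[atTop] W := by
    have := hterm.sum_range (fun i => (hpos (i + 1)).le)
      (by apply hW.congr fun N => (hrangeW N).symm)
    exact this.congr (fun N => rfl) hrangeW
  -- conclude
  have hT : T =o[atTop] W := by
    refine ((hfirst.add hsum).congr (fun N => (key N).symm) (fun N => rfl))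
  exact (inv_mul_tendsto_iff_isLittleO W hWev T).mpr hT
end

section
/- If (x_n) is uniformly distributed mod 1 and (y_n) satisfies |y_n − y_{n−1}| ≤ C/n for all n ≥ 2 and some C > 0, then (x_n + y_n) is uniformly distributed mod 1. -/
open Filter Finset Topology

lemma norm_exp_real_mul_I_sub_one (θ : ℝ) :
    ‖Complex.exp (θ * Complex.I) - 1‖ ≤ |θ| := by
  rw [Complex.norm_def]
  have h1 : Complex.normSq (Complex.exp (θ * Complex.I) - 1) = 2 - 2 * Real.cos θ := by
    simp [Complex.normSq_apply, Complex.sub_re, Complex.sub_im,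
      Complex.exp_ofReal_mul_I_re, Complex.exp_ofReal_mul_I_im]
    nlinarith [Real.sin_sq_add_cos_sq θ]
  rw [h1]
  have h2 : 2 - 2 * Real.cos θ ≤ θ ^ 2 := by
    nlinarith [Real.one_sub_sq_div_two_le_cos (x := θ)]
  calc Real.sqrt (2 - 2 * Real.cos θ) ≤ Real.sqrt (θ ^ 2) := Real.sqrt_le_sqrt h2
    _ = |θ| := Real.sqrt_sq_eq_abs θ

theorem ud_perturbation
    (x y : ℕ → ℝ) (C : ℝ) (hC : 0 < C)
    (hy : ∀ n : ℕ, 2 ≤ n → |y n - y (n - 1)| ≤ C / n)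
    (hx : ∀ m : ℤ, m ≠ 0 →
      Tendsto (fun N : ℕ => (N : ℂ)⁻¹ *
        ∑ n ∈ Icc 1 N, Complex.exp (2 * Real.pi * Complex.I * m * x n)) atTop (𝓝 0)) :
    ∀ m : ℤ, m ≠ 0 →
      Tendsto (fun N : ℕ => (N : ℂ)⁻¹ *
        ∑ n ∈ Icc 1 N, Complex.exp (2 * Real.pi * Complex.I * m * (x n + y n)))
        atTop (𝓝 0) := by
  intro m hm
  set c : ℂ := 2 * Real.pi * Complex.I * m with hc
  set a : ℕ → ℂ := fun n => Complex.exp (c * x n) with ha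
  set b : ℕ → ℂ := fun n => Complex.exp (c * y n) with hb
  set S : ℕ → ℂ := fun N => ∑ n ∈ Icc 1 N, a n with hS
  set T : ℕ → ℂ := fun N => ∑ n ∈ Icc 1 N, a n * b n with hT
  -- basic rewriting of exponentials
  have hct : ∀ t : ℝ, c * t = ((2 * Real.pi * m * t : ℝ) : ℂ) * Complex.I := by
    intro t; push_cast [hc]; ring
  have hbnorm : ∀ t : ℝ, ‖Complex.exp (c * t)‖ = 1 := by
    intro t
    rw [hct, Complex.norm_exp_ofReal_mul_I]
  have hblip : ∀ s t : ℝ, ‖Complex.exp (c * s) - Complex.exp (c * t)‖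
      ≤ 2 * Real.pi * |(m : ℝ)| * |s - t| := by
    intro s t
    have h1 : Complex.exp (c * s) - Complex.exp (c * t)
        = Complex.exp (c * t) * (Complex.exp (c * (s - t)) - 1) := by
      rw [mul_sub, ← Complex.exp_add, mul_one]
      ring_nf
    rw [h1, norm_mul, hbnorm, one_mul]
    have h2 : c * ((s : ℂ) - (t : ℂ)) = ((2 * Real.pi * m * (s - t) : ℝ) : ℂ) * Complex.I := by
      rw [hc]; push_cast; ring
    calc ‖Complex.exp (c * ((s:ℂ) - (t:ℂ))) - 1‖ ≤ |2 * Real.pi * (m:ℝ) * (s - t)| := by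
          rw [h2]; exact norm_exp_real_mul_I_sub_one _
      _ = 2 * Real.pi * |(m : ℝ)| * |s - t| := by
          rw [abs_mul, abs_mul]
          rw [abs_of_pos (by positivity : (0:ℝ) < 2 * Real.pi)]
  set K : ℝ := 2 * Real.pi * |(m : ℝ)| * C with hK
  have hmabs : (0:ℝ) < |(m : ℝ)| := by
    simp only [abs_pos, ne_eq, Int.cast_eq_zero]; exact hm
  have hKpos : 0 < K := by positivity
  -- u n
  set u : ℕ → ℝ := fun n => ‖(n : ℂ)⁻¹ * S n‖ with hu
  have hunn : ∀ n, 0 ≤ u n := fun n => norm_nonneg _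
  have hulim : Tendsto u atTop (𝓝 0) := by
    have h := (hx m hm).norm
    rw [norm_zero] at h
    exact h
  have hSu : ∀ n : ℕ, ‖S n‖ = n * u n := by
    intro n
    rcases Nat.eq_zero_or_pos n with h | h
    · subst h; simp [hS]
    · have hn0 : ((n : ℂ)) ≠ 0 := Nat.cast_ne_zero.2 h.ne'
      rw [hu]
      simp only [norm_mul, norm_inv, Complex.norm_natCast]
      field_simp
  -- Abel summation
  have habel : ∀ N : ℕ, T N = b N * S N
      - ∑ i ∈ range (N - 1), (b (i + 2) - b (i + 1)) * S (i + 1) := by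
    intro N
    rcases Nat.eq_zero_or_pos N with h | h
    · subst h; simp [hT, hS]
    have hshift : ∀ M : ℕ, S M = ∑ i ∈ range M, a (i + 1) := by
      intro M
      simp only [hS]
      rw [← Finset.Ico_add_one_right_eq_Icc, Finset.sum_Ico_eq_sum_range]
      simp [add_comm 1]
    have hshiftT : T N = ∑ i ∈ range N, b (i + 1) * a (i + 1) := by
      simp only [hT]
      rw [← Finset.Ico_add_one_right_eq_Icc, Finset.sum_Ico_eq_sum_range]
      simp [add_comm 1, mul_comm]
    rw [hshiftT]
    have := Finset.sum_range_by_parts (fun i => b (i + 1)) (fun i => a (i + 1)) N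
    simp only [smul_eq_mul] at this
    rw [this]
    congr 1
    · rw [← hshift, Nat.sub_add_cancel h]
    · apply Finset.sum_congr rfl
      intro i _
      rw [← hshift]
  -- bound on b differences
  have hbd : ∀ i : ℕ, ‖b (i + 2) - b (i + 1)‖ ≤ K / (i + 2) := by
    intro i
    have h2 : (2:ℕ) ≤ i + 2 := by omega
    have := hy (i + 2) h2
    have h3 : (i + 2 : ℕ) - 1 = i + 1 := by omega
    rw [h3] at this
    calc ‖b (i + 2) - b (i + 1)‖ ≤ 2 * Real.pi * |(m : ℝ)| * |y (i + 2) - y (i + 1)| :=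
          hblip _ _
      _ ≤ 2 * Real.pi * |(m : ℝ)| * (C / (i + 2)) := by
          apply mul_le_mul_of_nonneg_left _ (by positivity)
          calc |y (i + 2) - y (i + 1)| ≤ C / ((i + 2 : ℕ) : ℝ) := this
            _ = C / (i + 2) := by push_cast; ring
      _ = K / (i + 2) := by rw [hK]; ring
  -- main bound
  have hTbound : ∀ N : ℕ, ‖T N‖ ≤ ‖S N‖ + K * ∑ j ∈ range N, u j := by
    intro N
    rw [habel N]
    calc ‖b N * S N - ∑ i ∈ range (N - 1), (b (i + 2) - b (i + 1)) * S (i + 1)‖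
        ≤ ‖b N * S N‖ + ‖∑ i ∈ range (N - 1), (b (i + 2) - b (i + 1)) * S (i + 1)‖ :=
          norm_sub_le _ _
      _ ≤ ‖S N‖ + ∑ i ∈ range (N - 1), ‖(b (i + 2) - b (i + 1)) * S (i + 1)‖ := by
          gcongr
          · rw [norm_mul, hbnorm, one_mul]
          · exact norm_sum_le _ _
      _ ≤ ‖S N‖ + ∑ i ∈ range (N - 1), K * u (i + 1) := by
          gcongr with i hi
          rw [norm_mul, hSu]
          calc ‖b (i + 2) - b (i + 1)‖ * ((i + 1 : ℕ) * u (i + 1))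
              ≤ (K / (i + 2)) * ((i + 1 : ℕ) * u (i + 1)) := by
                apply mul_le_mul_of_nonneg_right (hbd i) (by positivity)
            _ ≤ K * u (i + 1) := by
                rw [div_mul_eq_mul_div, div_le_iff₀ (by positivity : (0:ℝ) < (i:ℝ) + 2)]
                have := hunn (i + 1)
                push_cast
                nlinarith
      _ = ‖S N‖ + K * ∑ i ∈ range (N - 1), u (i + 1) := by rw [Finset.mul_sum]
      _ ≤ ‖S N‖ + K * ∑ j ∈ range N, u j := by
          gcongr
          have : ∑ i ∈ range (N - 1), u (i + 1) = ∑ j ∈ Ico 1 N, u j := by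
            rw [Finset.sum_Ico_eq_sum_range]
            apply Finset.sum_congr (by congr 1) (fun i _ => by rw [add_comm])
          rw [this]
          apply Finset.sum_le_sum_of_subset_of_nonneg
          · intro j hj
            simp only [Finset.mem_Ico] at hj
            exact Finset.mem_range.2 hj.2
          · exact fun j _ _ => hunn j
  -- squeeze
  rw [tendsto_zero_iff_norm_tendsto_zero]
  have hbound : ∀ N : ℕ, ‖(N : ℂ)⁻¹ * T N‖ ≤ u N + K * ((N : ℝ)⁻¹ * ∑ j ∈ range N, u j) := by
    intro N
    rw [norm_mul, norm_inv, Complex.norm_natCast]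
    calc ((N:ℝ))⁻¹ * ‖T N‖ ≤ ((N:ℝ))⁻¹ * (‖S N‖ + K * ∑ j ∈ range N, u j) := by
          apply mul_le_mul_of_nonneg_left (hTbound N) (by positivity)
      _ = ((N:ℝ))⁻¹ * ‖S N‖ + K * (((N:ℝ))⁻¹ * ∑ j ∈ range N, u j) := by ring
      _ = u N + K * ((N : ℝ)⁻¹ * ∑ j ∈ range N, u j) := by
          rw [hu]
          simp [norm_mul]
  have hlim : Tendsto (fun N : ℕ => u N + K * ((N : ℝ)⁻¹ * ∑ j ∈ range N, u j))
      atTop (𝓝 0) := by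
    have h2 : Tendsto (fun N : ℕ => (N : ℝ)⁻¹ * ∑ j ∈ range N, u j) atTop (𝓝 0) :=
      hulim.cesaro
    have := hulim.add (h2.const_mul K)
    simpa using this
  have hTeq : ∀ N : ℕ, (∑ n ∈ Icc 1 N, Complex.exp (c * ((x n : ℂ) + (y n : ℂ)))) = T N := by
    intro N
    simp only [hT]
    apply Finset.sum_congr rfl
    intro n _
    rw [mul_add, Complex.exp_add]
  refine squeeze_zero (fun N => norm_nonneg _) (fun N => ?_) hlim
  rw [hTeq N]
  exact hbound N
end

section
/- Let (w(n)) be positive non-increasing with W(N) → ∞, and let (x_n) be a real sequence. If for every positive integer h, lim sup_N |(1/W(N)) Σ_{n=1}^N w(n) e^{2πi(x_{n+h} − x_n)}| = c_h with c_h → 0 as h → ∞, then (1/W(N)) Σ_{n=1}^N w(n) e^{2πi x_n} → 0. -/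
open Filter Finset Topology ComplexConjugate


private lemma tel_sum (g : ℕ → ℝ) (a b : ℕ) (hab : a ≤ b + 1) :
    ∑ n ∈ Icc a b, (g n - g (n + 1)) = g a - g (b + 1) := by
  rw [← Finset.Ico_add_one_right_eq_Icc, Finset.sum_Ico_eq_sum_range]
  have h1 : ∀ i ∈ range (b + 1 - a), g (a + i) - g (a + i + 1) = (fun j => g (a + j)) i - (fun j => g (a + j)) (i + 1) := by
    intro i _
    have h : a + i + 1 = a + (i + 1) := by omega
    rw [h]
  rw [Finset.sum_congr rfl h1, Finset.sum_range_sub' (fun j => g (a + j)) (b + 1 - a)]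
  congr 2
  omega

private lemma swap_sum {M : Type*} [AddCommMonoid M] (N e : ℕ) (F : ℕ → ℕ → M) :
    ∑ k ∈ Icc 1 N, ∑ n ∈ Icc 1 (k - e), F k n
      = ∑ n ∈ Icc 1 (N - e), ∑ k ∈ Icc (n + e) N, F k n := by
  apply Finset.sum_comm'
  intro k n
  simp only [Finset.mem_Icc]
  omega

private lemma mu_tel (w : ℕ → ℝ) (N n : ℕ) (h1 : 1 ≤ n) (h2 : n ≤ N) :
    ∑ k ∈ Icc n N, (if k = N then w N else w k - w (k + 1)) = w n := by
  rcases Nat.exists_eq_add_of_le h2 with ⟨m, rfl⟩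
  rw [← Finset.Ico_add_one_right_eq_Icc, Finset.sum_Ico_succ_top (by omega)]
  have h3 : ∀ k ∈ Ico n (n + m), (if k = n + m then w (n + m) else w k - w (k + 1)) = w k - w (k + 1) := by
    intro k hk
    rw [Finset.mem_Ico] at hk
    rw [if_neg (by omega)]
  rw [Finset.sum_congr rfl h3, if_pos rfl]
  have := tel_sum w n (n + m - 1) (by omega)
  rcases Nat.eq_zero_or_pos m with hm | hm
  · subst hm; simp
  · rw [show Ico n (n + m) = Icc n (n + m - 1) by rw [← Finset.Ico_add_one_right_eq_Icc]; congr 1; omega]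
    rw [this, show n + m - 1 + 1 = n + m by omega]
    ring


section
variable (w : ℕ → ℝ)

private lemma mu_decomp (N e : ℕ) (g : ℕ → ℂ) :
    ∑ k ∈ Icc 1 N, ((if k = N then w N else w k - w (k + 1) : ℝ) : ℂ) * ∑ n ∈ Icc 1 (k - e), g n
      = ∑ n ∈ Icc 1 (N - e), ((w (n + e) : ℝ) : ℂ) * g n := by
  have h1 : ∀ k ∈ Icc 1 N, ((if k = N then w N else w k - w (k + 1) : ℝ) : ℂ) * ∑ n ∈ Icc 1 (k - e), g n
      = ∑ n ∈ Icc 1 (k - e), ((if k = N then w N else w k - w (k + 1) : ℝ) : ℂ) * g n := by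
    intro k _; rw [Finset.mul_sum]
  rw [Finset.sum_congr rfl h1]
  rw [show (∑ k ∈ Icc 1 N, ∑ n ∈ Icc 1 (k - e), ((if k = N then w N else w k - w (k + 1) : ℝ) : ℂ) * g n)
      = ∑ n ∈ Icc 1 (N - e), ∑ k ∈ Icc (n + e) N, ((if k = N then w N else w k - w (k + 1) : ℝ) : ℂ) * g n
    from swap_sum N e _]
  apply Finset.sum_congr rfl
  intro n hn
  rw [Finset.mem_Icc] at hn
  rw [← Finset.sum_mul]
  congr 1
  rw [← Complex.ofReal_sum]
  rw [mu_tel w N (n + e) (by omega) (by omega)]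

private lemma mu_W (N : ℕ) :
    ∑ k ∈ Icc 1 N, (if k = N then w N else w k - w (k + 1)) * (k : ℝ)
      = ∑ n ∈ Icc 1 N, w n := by
  have h1 : ∀ k ∈ Icc 1 N, (if k = N then w N else w k - w (k + 1)) * (k : ℝ)
      = ∑ n ∈ Icc 1 (k - 0), (if k = N then w N else w k - w (k + 1)) := by
    intro k _
    rw [Finset.sum_const, Nat.card_Icc, nsmul_eq_mul]
    simp [mul_comm]
  rw [Finset.sum_congr rfl h1, swap_sum N 0 (fun k _ => (if k = N then w N else w k - w (k + 1)))]
  apply Finset.sum_congr (by simp) 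
  intro n hn
  rw [Finset.mem_Icc] at hn
  rw [show n + 0 = n by omega]
  exact mu_tel w N n (by omega) (by omega)

end

private lemma vdc_shift_sum (K H h : ℕ) (hh : h < H) (g : ℕ → ℂ)
    (hg : ∀ n, n ∉ Icc 1 K → g n = 0) :
    ∑ m ∈ Icc 1 (K + H - 1), g (m - h) = ∑ n ∈ Icc 1 K, g n := by
  rw [← Finset.sum_subset (s₁ := Icc (h + 1) (h + K)) (f := fun m => g (m - h))
      (Finset.Icc_subset_Icc (by omega) (by omega))
      (by
        intro m hm hm2
        rw [Finset.mem_Icc] at hm hm2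
        exact hg _ (by rw [Finset.mem_Icc]; omega))]
  rw [show Icc (h + 1) (h + K) = Finset.map (addLeftEmbedding h) (Icc 1 K) from (Finset.map_add_left_Icc 1 K h).symm]
  rw [Finset.sum_map]
  apply Finset.sum_congr rfl
  intro n _
  simp only [addLeftEmbedding_apply]
  congr 1
  omega

private lemma vdc_core (K H : ℕ) (hH : 1 ≤ H) (z : ℕ → ℂ) (hz : ∀ n, ‖z n‖ ≤ 1) :
    ‖∑ n ∈ Icc 1 K, z n‖ ^ 2 * (H : ℝ) ^ 2 ≤
      ((K : ℝ) + H) * ((H : ℝ) * K +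
        2 * ∑ d ∈ Icc 1 (H - 1), ((H : ℝ) - d) *
          (∑ n ∈ Icc 1 (K - d), z (n + d) * conj (z n)).re) := by
  set y : ℕ → ℂ := fun n => if n ∈ Icc 1 K then z n else 0 with hy
  have hy0 : ∀ n, n ∉ Icc 1 K → y n = 0 := fun n hn => if_neg hn
  have hyz : ∀ n, n ∈ Icc 1 K → y n = z n := fun n hn => if_pos hn
  have hynorm : ∀ n, ‖y n‖ ≤ 1 := by
    intro n
    by_cases hn : n ∈ Icc 1 K
    · rw [hyz n hn]; exact hz n
    · rw [hy0 n hn]; simp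
  set M := K + H - 1 with hM
  set B : ℕ → ℂ := fun m => ∑ h ∈ range H, y (m - h) with hB
  -- Step 1 : sum of B equals H * sum z
  have step1 : ∑ m ∈ Icc 1 M, B m = (H : ℂ) * ∑ n ∈ Icc 1 K, z n := by
    rw [hB]
    rw [Finset.sum_comm]
    have h1 : ∀ h ∈ range H, ∑ m ∈ Icc 1 M, y (m - h) = ∑ n ∈ Icc 1 K, z n := by
      intro h hh
      rw [Finset.mem_range] at hh
      rw [hM, vdc_shift_sum K H h hh y hy0]
      exact Finset.sum_congr rfl hyz
    rw [Finset.sum_congr rfl h1, Finset.sum_const, Finset.card_range, nsmul_eq_mul]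
  -- T and Qf
  set T : ℕ → ℕ → ℂ := fun h h' => ∑ m ∈ Icc 1 M, y (m - h) * conj (y (m - h')) with hT
  set Qf : ℕ → ℂ := fun d => ∑ n ∈ Icc 1 K, y (n + d) * conj (y n) with hQf
  have hTQ : ∀ h h', h ≤ h' → h' < H → T h h' = Qf (h' - h) := by
    intro h h' hle hlt
    rw [hT, hQf]
    simp only
    have key : ∀ m, y (m - h) * conj (y (m - h')) = y ((m - h') + (h' - h)) * conj (y (m - h')) := by
      intro m
      rcases le_or_gt m h' with hm | hm
      · have h0 : m - h' = 0 := by omega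
        rw [h0]
        have : y 0 = 0 := hy0 0 (by simp)
        rw [this]
        simp
      · congr 2
        omega
    rw [Finset.sum_congr rfl (fun m _ => key m)]
    exact vdc_shift_sum K H h' hlt (fun n => y (n + (h' - h)) * conj (y n))
      (fun n hn => by show y (n + (h' - h)) * conj (y n) = 0; rw [hy0 n hn]; simp)
  have hTconj : ∀ h h', T h' h = conj (T h h') := by
    intro h h'
    rw [hT]
    simp only [map_sum]
    apply Finset.sum_congr rfl
    intro m _
    rw [map_mul, Complex.conj_conj]
    ring
  -- Step 2 : Cauchy-Schwarz
  have step2 : ‖∑ m ∈ Icc 1 M, B m‖ ^ 2 ≤ (M : ℝ) * ∑ m ∈ Icc 1 M, ‖B m‖ ^ 2 := by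
    calc ‖∑ m ∈ Icc 1 M, B m‖ ^ 2 ≤ (∑ m ∈ Icc 1 M, ‖B m‖) ^ 2 := by
          apply pow_le_pow_left₀ (norm_nonneg _)
          exact norm_sum_le _ _
      _ = (∑ m ∈ Icc 1 M, 1 * ‖B m‖) ^ 2 := by simp
      _ ≤ (∑ m ∈ Icc 1 M, (1 : ℝ) ^ 2) * ∑ m ∈ Icc 1 M, ‖B m‖ ^ 2 :=
          Finset.sum_mul_sq_le_sq_mul_sq _ _ _
      _ = (M : ℝ) * ∑ m ∈ Icc 1 M, ‖B m‖ ^ 2 := by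
          simp [Nat.card_Icc]
  -- Step 3 : expansion
  have step3 : ∑ m ∈ Icc 1 M, ‖B m‖ ^ 2
      = (∑ h ∈ range H, ∑ h' ∈ range H, T h h').re := by
    have e1 : ∀ m, ‖B m‖ ^ 2 = (B m * conj (B m)).re := by
      intro m
      rw [Complex.mul_conj, Complex.ofReal_re, Complex.normSq_eq_norm_sq]
    have e3 : ∀ m, B m * conj (B m)
        = ∑ h ∈ range H, ∑ h' ∈ range H, y (m - h) * conj (y (m - h')) := by
      intro m
      rw [hB]
      simp only [map_sum]
      rw [Finset.sum_mul_sum]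
    have e2 : ∑ m ∈ Icc 1 M, B m * conj (B m) = ∑ h ∈ range H, ∑ h' ∈ range H, T h h' := by
      rw [Finset.sum_congr rfl (fun m _ => e3 m)]
      rw [Finset.sum_comm]
      apply Finset.sum_congr rfl
      intro h _
      rw [Finset.sum_comm]
    rw [Finset.sum_congr rfl (fun m _ => e1 m), ← Complex.re_sum, e2]
  -- splitting the double sum
  have split : ∑ h ∈ range H, ∑ h' ∈ range H, T h h'
      = (∑ d ∈ range H, ((H - d : ℕ) : ℂ) * Qf d)
        + ∑ d ∈ Icc 1 (H - 1), ((H - d : ℕ) : ℂ) * conj (Qf d) := by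
    rw [← Finset.sum_product']
    rw [← Finset.sum_filter_add_sum_filter_not (range H ×ˢ range H) (fun p => p.1 ≤ p.2)]
    congr 1
    · rw [show (∑ d ∈ range H, ((H - d : ℕ) : ℂ) * Qf d)
          = ∑ d ∈ range H, ∑ i ∈ range (H - d), Qf d by
        refine Finset.sum_congr rfl fun d _ => ?_
        rw [Finset.sum_const, Finset.card_range, nsmul_eq_mul]]
      rw [Finset.sum_sigma' (range H) (fun d => range (H - d)) (fun d _ => Qf d)]
      apply Finset.sum_nbij' (fun p => (⟨p.2 - p.1, p.1⟩ : Σ _ : ℕ, ℕ)) (fun q => (q.2, q.2 + q.1))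
      · intro p hp
        simp only [Finset.mem_filter, Finset.mem_product, Finset.mem_range] at hp
        simp only [Finset.mem_sigma, Finset.mem_range]
        omega
      · intro q hq
        simp only [Finset.mem_sigma, Finset.mem_range] at hq
        simp only [Finset.mem_filter, Finset.mem_product, Finset.mem_range]
        omega
      · intro p hp
        simp only [Finset.mem_filter, Finset.mem_product, Finset.mem_range] at hp
        have : p.1 + (p.2 - p.1) = p.2 := by omega
        simp [this]
      · intro q hq
        simp only [Finset.mem_sigma, Finset.mem_range] at hq
        have : q.2 + q.1 - q.2 = q.1 := by omega
        simp [this]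
      · intro p hp
        simp only [Finset.mem_filter, Finset.mem_product, Finset.mem_range] at hp
        exact hTQ p.1 p.2 hp.2 hp.1.2
    · rw [show (∑ d ∈ Icc 1 (H - 1), ((H - d : ℕ) : ℂ) * conj (Qf d))
          = ∑ d ∈ Icc 1 (H - 1), ∑ i ∈ range (H - d), conj (Qf d) by
        refine Finset.sum_congr rfl fun d _ => ?_
        rw [Finset.sum_const, Finset.card_range, nsmul_eq_mul]]
      rw [Finset.sum_sigma' (Icc 1 (H - 1)) (fun d => range (H - d)) (fun d _ => conj (Qf d))]
      apply Finset.sum_nbij' (fun p => (⟨p.1 - p.2, p.2⟩ : Σ _ : ℕ, ℕ)) (fun q => (q.2 + q.1, q.2))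
      · intro p hp
        simp only [Finset.mem_filter, Finset.mem_product, Finset.mem_range] at hp
        simp only [Finset.mem_sigma, Finset.mem_range, Finset.mem_Icc]
        omega
      · intro q hq
        simp only [Finset.mem_sigma, Finset.mem_range, Finset.mem_Icc] at hq
        simp only [Finset.mem_filter, Finset.mem_product, Finset.mem_range]
        omega
      · intro p hp
        simp only [Finset.mem_filter, Finset.mem_product, Finset.mem_range] at hp
        have : p.2 + (p.1 - p.2) = p.1 := by omega
        simp [this]
      · intro q hq
        simp only [Finset.mem_sigma, Finset.mem_range, Finset.mem_Icc] at hq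
        have : q.2 + q.1 - q.2 = q.1 := by omega
        simp [this]
      · intro p hp
        simp only [Finset.mem_filter, Finset.mem_product, Finset.mem_range] at hp
        rw [hTconj p.2 p.1, hTQ p.2 p.1 (by omega) hp.1.1]
  -- bounds on Qf
  have hQf0 : (Qf 0).re ≤ (K : ℝ) := by
    rw [hQf]
    simp only [add_zero]
    rw [Complex.re_sum]
    calc ∑ n ∈ Icc 1 K, (y n * conj (y n)).re ≤ ∑ n ∈ Icc 1 K, 1 := by
          apply Finset.sum_le_sum
          intro n _
          rw [Complex.mul_conj, Complex.ofReal_re]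
          calc Complex.normSq (y n) = ‖y n‖ ^ 2 := by
                rw [Complex.normSq_eq_norm_sq]
            _ ≤ 1 := by
                have := hynorm n
                nlinarith [norm_nonneg (y n)]
      _ = (K : ℝ) := by simp [Nat.card_Icc]
  have hQfz : ∀ d, 1 ≤ d → Qf d = ∑ n ∈ Icc 1 (K - d), z (n + d) * conj (z n) := by
    intro d hd
    rw [hQf]
    simp only
    rw [← Finset.sum_subset (s₁ := Icc 1 (K - d)) (Finset.Icc_subset_Icc le_rfl (by omega))
      (by
        intro n hn hn2
        rw [Finset.mem_Icc] at hn hn2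
        rw [hy0 (n + d) (by rw [Finset.mem_Icc]; omega)]
        simp)]
    apply Finset.sum_congr rfl
    intro n hn
    rw [Finset.mem_Icc] at hn
    rw [hyz n (by rw [Finset.mem_Icc]; omega), hyz (n + d) (by rw [Finset.mem_Icc]; omega)]
  -- final bound on the real part
  have castre : ∀ (c : ℕ) (Q : ℂ), ((c : ℂ) * Q).re = (c : ℝ) * Q.re := by
    intro c Q
    simp [Complex.mul_re]
  have final : (∑ h ∈ range H, ∑ h' ∈ range H, T h h').re
      ≤ (H : ℝ) * K + 2 * ∑ d ∈ Icc 1 (H - 1), ((H : ℝ) - d) *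
          (∑ n ∈ Icc 1 (K - d), z (n + d) * conj (z n)).re := by
    rw [split, Complex.add_re, Complex.re_sum, Complex.re_sum]
    have r1 : ∑ d ∈ range H, (((H - d : ℕ) : ℂ) * Qf d).re
        = ((H : ℝ) * (Qf 0).re) + ∑ d ∈ Icc 1 (H - 1), ((H : ℝ) - d) * (Qf d).re := by
      rw [Finset.range_eq_Ico, Finset.sum_eq_sum_Ico_succ_bot hH]
      congr 1
      · rw [castre]; simp
      · rw [show Ico 1 H = Icc 1 (H - 1) by ext m; simp [Finset.mem_Ico, Finset.mem_Icc]; omega]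
        apply Finset.sum_congr rfl
        intro d hd
        rw [Finset.mem_Icc] at hd
        rw [castre, Nat.cast_sub (by omega)]
    have r2 : ∑ d ∈ Icc 1 (H - 1), (((H - d : ℕ) : ℂ) * conj (Qf d)).re
        = ∑ d ∈ Icc 1 (H - 1), ((H : ℝ) - d) * (Qf d).re := by
      apply Finset.sum_congr rfl
      intro d hd
      rw [Finset.mem_Icc] at hd
      rw [castre, Complex.conj_re, Nat.cast_sub (by omega)]
    rw [r1, r2]
    have r3 : ∀ d ∈ Icc 1 (H - 1), ((H : ℝ) - d) * (Qf d).re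
        = ((H : ℝ) - d) * (∑ n ∈ Icc 1 (K - d), z (n + d) * conj (z n)).re := by
      intro d hd
      rw [Finset.mem_Icc] at hd
      rw [hQfz d (by omega)]
    rw [Finset.sum_congr rfl r3]
    have hHK : (H : ℝ) * (Qf 0).re ≤ (H : ℝ) * K :=
      mul_le_mul_of_nonneg_left hQf0 (by positivity)
    linarith
  -- conclusion
  have hBnn : (0 : ℝ) ≤ ∑ m ∈ Icc 1 M, ‖B m‖ ^ 2 := by positivity
  calc ‖∑ n ∈ Icc 1 K, z n‖ ^ 2 * (H : ℝ) ^ 2 = ‖∑ m ∈ Icc 1 M, B m‖ ^ 2 := by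
        rw [step1, norm_mul, Complex.norm_natCast, mul_pow]
        ring
    _ ≤ (M : ℝ) * ∑ m ∈ Icc 1 M, ‖B m‖ ^ 2 := step2
    _ ≤ ((K : ℝ) + H) * ∑ m ∈ Icc 1 M, ‖B m‖ ^ 2 := by
        apply mul_le_mul_of_nonneg_right _ hBnn
        rw [hM]
        push_cast [Nat.cast_sub (by omega : 1 ≤ K + H)]
        linarith
    _ ≤ ((K : ℝ) + H) * ((H : ℝ) * K +
        2 * ∑ d ∈ Icc 1 (H - 1), ((H : ℝ) - d) *
          (∑ n ∈ Icc 1 (K - d), z (n + d) * conj (z n)).re) := by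
        apply mul_le_mul_of_nonneg_left _ (by positivity)
        rw [step3]
        exact final

private lemma sum_w_sub (w : ℕ → ℝ) (hpos : ∀ n, 0 < w n) (hanti : Antitone w) (M d : ℕ) :
    ∑ n ∈ Icc 1 M, (w n - w (n + d)) ≤ d * w 1 := by
  rw [Finset.sum_sub_distrib]
  have h1 : ∑ n ∈ Icc 1 M, w (n + d) = ∑ m ∈ Icc (d + 1) (d + M), w m := by
    rw [show Icc (d + 1) (d + M) = Finset.map (addLeftEmbedding d) (Icc 1 M) from
      (Finset.map_add_left_Icc 1 M d).symm, Finset.sum_map]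
    apply Finset.sum_congr rfl
    intro n _
    simp only [addLeftEmbedding_apply]
    rw [add_comm]
  rw [h1]
  have h2 : ∑ n ∈ Icc 1 M, w n ≤ ∑ n ∈ Icc 1 (d + M), w n :=
    Finset.sum_le_sum_of_subset_of_nonneg (Finset.Icc_subset_Icc le_rfl (by omega))
      (fun i _ _ => (hpos i).le)
  have h3 : ∑ n ∈ Icc 1 (d + M), w n = ∑ n ∈ Icc 1 d, w n + ∑ n ∈ Icc (d + 1) (d + M), w n := by
    rw [show Icc 1 (d + M) = Ioc 0 (d + M) from Finset.Icc_add_one_left_eq_Ioc 0 (d + M),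
        show Icc 1 d = Ioc 0 d from Finset.Icc_add_one_left_eq_Ioc 0 d,
        show Icc (d + 1) (d + M) = Ioc d (d + M) from Finset.Icc_add_one_left_eq_Ioc d (d + M)]
    exact (Finset.sum_Ioc_consecutive _ (by omega) (by omega)).symm
  have h4 : ∑ n ∈ Icc 1 d, w n ≤ d * w 1 := by
    calc ∑ n ∈ Icc 1 d, w n ≤ ∑ n ∈ Icc 1 d, w 1 := by
          apply Finset.sum_le_sum
          intro i hi
          rw [Finset.mem_Icc] at hi
          exact hanti hi.1
      _ = d * w 1 := by
          rw [Finset.sum_const, Nat.card_Icc, nsmul_eq_mul]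
          simp
  linarith

private lemma key_ineq (w : ℕ → ℝ) (hpos : ∀ n, 0 < w n) (hmono : ∀ n, w (n + 1) ≤ w n)
    (a : ℕ → ℂ) (ha : ∀ n, ‖a n‖ = 1) (N H : ℕ) (hH : 1 ≤ H) (hN : 1 ≤ N) :
    ‖∑ n ∈ Icc 1 N, (w n : ℂ) * a n‖ ^ 2 ≤
      ((∑ n ∈ Icc 1 N, w n) + H * w 1) *
        ((∑ n ∈ Icc 1 N, w n) / H + 2 * w 1 * H +
          (2 / H) * ∑ d ∈ Icc 1 (H - 1), ‖∑ n ∈ Icc 1 N, (w n : ℂ) * (a (n + d) * conj (a n))‖) := by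
  have hanti : Antitone w := antitone_nat_of_succ_le hmono
  have hHpos : (0 : ℝ) < H := by exact_mod_cast hH
  set W := ∑ n ∈ Icc 1 N, w n with hWdef
  set μ : ℕ → ℝ := fun k => if k = N then w N else w k - w (k + 1) with hμ
  have hμ0 : ∀ k, 0 ≤ μ k := by
    intro k
    rw [hμ]
    simp only
    split
    · exact (hpos N).le
    · have := hmono k; linarith
  set P : ℕ → ℂ := fun k => ∑ n ∈ Icc 1 k, a n with hP
  set Q : ℕ → ℕ → ℂ := fun k d => ∑ n ∈ Icc 1 (k - d), a (n + d) * conj (a n) with hQdef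
  set R : ℕ → ℝ := fun k =>
    ((H : ℝ) * k + 2 * ∑ d ∈ Icc 1 (H - 1), ((H : ℝ) - d) * (Q k d).re) / H ^ 2 with hR
  have hPR : ∀ k, ‖P k‖ ^ 2 ≤ ((k : ℝ) + H) * R k := by
    intro k
    rw [hR]
    simp only
    rw [mul_div_assoc', le_div_iff₀ (by positivity)]
    exact vdc_core k H hH a (fun n => (ha n).le)
  have hkH : ∀ k : ℕ, (0 : ℝ) < (k : ℝ) + H :=
    fun k => add_pos_of_nonneg_of_pos (Nat.cast_nonneg k) hHpos
  have hR0 : ∀ k, 0 ≤ R k := by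
    intro k
    nlinarith [hPR k, sq_nonneg ‖P k‖, hkH k]
  -- decomposition of the main sum
  have hS : ∑ n ∈ Icc 1 N, (w n : ℂ) * a n = ∑ k ∈ Icc 1 N, ((μ k : ℝ) : ℂ) * P k := by
    have h := mu_decomp w N 0 a
    simp only [Nat.sub_zero, add_zero] at h
    simp only [hμ, hP]
    exact h.symm
  have hnorm1 : ‖∑ n ∈ Icc 1 N, (w n : ℂ) * a n‖ ≤ ∑ k ∈ Icc 1 N, μ k * ‖P k‖ := by
    rw [hS]
    refine le_trans (norm_sum_le _ _) (Finset.sum_le_sum fun k _ => ?_)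
    rw [norm_mul, Complex.norm_real, Real.norm_eq_abs, abs_of_nonneg (hμ0 k)]
  -- Cauchy-Schwarz
  have hCS : (∑ k ∈ Icc 1 N, μ k * ‖P k‖) ^ 2 ≤
      (∑ k ∈ Icc 1 N, μ k * ((k : ℝ) + H)) * (∑ k ∈ Icc 1 N, μ k * R k) := by
    have hfg : ∀ k ∈ Icc 1 N, μ k * ‖P k‖ ≤
        Real.sqrt (μ k * ((k : ℝ) + H)) * Real.sqrt (μ k * R k) := by
      intro k _
      rw [← Real.sqrt_mul (mul_nonneg (hμ0 k) (hkH k).le)]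
      rw [show μ k * ‖P k‖ = Real.sqrt ((μ k * ‖P k‖) ^ 2) from
        (Real.sqrt_sq (mul_nonneg (hμ0 k) (norm_nonneg _))).symm]
      apply Real.sqrt_le_sqrt
      calc (μ k * ‖P k‖) ^ 2 = μ k ^ 2 * ‖P k‖ ^ 2 := by ring
        _ ≤ μ k ^ 2 * (((k : ℝ) + H) * R k) := mul_le_mul_of_nonneg_left (hPR k) (sq_nonneg _)
        _ = μ k * ((k : ℝ) + H) * (μ k * R k) := by ring
    calc (∑ k ∈ Icc 1 N, μ k * ‖P k‖) ^ 2
        ≤ (∑ k ∈ Icc 1 N, Real.sqrt (μ k * ((k : ℝ) + H)) * Real.sqrt (μ k * R k)) ^ 2 := by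
          apply pow_le_pow_left₀
            (Finset.sum_nonneg fun k _ => mul_nonneg (hμ0 k) (norm_nonneg _))
            (Finset.sum_le_sum hfg)
      _ ≤ (∑ k ∈ Icc 1 N, Real.sqrt (μ k * ((k : ℝ) + H)) ^ 2) *
            ∑ k ∈ Icc 1 N, Real.sqrt (μ k * R k) ^ 2 :=
          Finset.sum_mul_sq_le_sq_mul_sq _ _ _
      _ = (∑ k ∈ Icc 1 N, μ k * ((k : ℝ) + H)) * ∑ k ∈ Icc 1 N, μ k * R k := by
          congr 1
          · exact Finset.sum_congr rfl fun k _ =>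
              Real.sq_sqrt (mul_nonneg (hμ0 k) (hkH k).le)
          · exact Finset.sum_congr rfl fun k _ =>
              Real.sq_sqrt (mul_nonneg (hμ0 k) (hR0 k))
  -- evaluation of the first factor
  have hW2 : ∑ k ∈ Icc 1 N, μ k * (k : ℝ) = W := by
    simp only [hμ]
    exact mu_W w N
  have hμsum : ∑ k ∈ Icc 1 N, μ k = w 1 := by
    simp only [hμ]
    exact mu_tel w N 1 le_rfl hN
  have hsum1 : ∑ k ∈ Icc 1 N, μ k * ((k : ℝ) + H) = W + H * w 1 := by
    rw [Finset.sum_congr rfl (fun k (_ : k ∈ Icc 1 N) => by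
      show μ k * ((k : ℝ) + H) = μ k * (k : ℝ) + μ k * H
      ring), Finset.sum_add_distrib, hW2, ← Finset.sum_mul, hμsum]
    ring
  -- correlation reassembly
  have ofre : ∀ (r : ℝ) (Z : ℂ), (((r : ℝ) : ℂ) * Z).re = r * Z.re := by
    intro r Z
    simp [Complex.mul_re]
  have hC'd : ∀ d, ∑ k ∈ Icc 1 N, μ k * (Q k d).re
      = (∑ n ∈ Icc 1 (N - d), ((w (n + d) : ℝ) : ℂ) * (a (n + d) * conj (a n))).re := by
    intro d
    have h := mu_decomp w N d (fun n => a (n + d) * conj (a n))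
    rw [← h, Complex.re_sum]
    apply Finset.sum_congr rfl
    intro k _
    simp only [hμ, hQdef]
    rw [ofre]
  have hCbound : ∀ d, 1 ≤ d →
      (∑ n ∈ Icc 1 (N - d), ((w (n + d) : ℝ) : ℂ) * (a (n + d) * conj (a n))).re
        ≤ ‖∑ n ∈ Icc 1 N, (w n : ℂ) * (a (n + d) * conj (a n))‖ + 2 * d * w 1 := by
    intro d hd
    set z : ℕ → ℂ := fun n => a (n + d) * conj (a n) with hz
    have hz1 : ∀ n, ‖z n‖ = 1 := by
      intro n
      rw [hz]
      simp only
      rw [norm_mul, RCLike.norm_conj, ha, ha, mul_one]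
    set C' := ∑ n ∈ Icc 1 (N - d), ((w (n + d) : ℝ) : ℂ) * z n with hC'
    set C := ∑ n ∈ Icc 1 N, (w n : ℂ) * z n with hC
    have hsplit : C = (∑ n ∈ Icc 1 (N - d), (w n : ℂ) * z n)
        + ∑ n ∈ Ioc (N - d) N, (w n : ℂ) * z n := by
      rw [hC, show Icc 1 N = Ioc 0 N from Finset.Icc_add_one_left_eq_Ioc 0 N,
          show Icc 1 (N - d) = Ioc 0 (N - d) from Finset.Icc_add_one_left_eq_Ioc 0 (N - d)]
      exact (Finset.sum_Ioc_consecutive _ (Nat.zero_le _) (Nat.sub_le N d)).symm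
    have hdiff : ‖C - C'‖ ≤ 2 * d * w 1 := by
      rw [hsplit, hC']
      rw [show (∑ n ∈ Icc 1 (N - d), (w n : ℂ) * z n)
            + (∑ n ∈ Ioc (N - d) N, (w n : ℂ) * z n)
            - (∑ n ∈ Icc 1 (N - d), ((w (n + d) : ℝ) : ℂ) * z n)
          = (∑ n ∈ Icc 1 (N - d), ((w n - w (n + d) : ℝ) : ℂ) * z n)
            + ∑ n ∈ Ioc (N - d) N, (w n : ℂ) * z n by
        rw [show (∑ n ∈ Icc 1 (N - d), (w n : ℂ) * z n)
              + (∑ n ∈ Ioc (N - d) N, (w n : ℂ) * z n)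
              - (∑ n ∈ Icc 1 (N - d), ((w (n + d) : ℝ) : ℂ) * z n)
            = ((∑ n ∈ Icc 1 (N - d), (w n : ℂ) * z n)
              - (∑ n ∈ Icc 1 (N - d), ((w (n + d) : ℝ) : ℂ) * z n))
              + ∑ n ∈ Ioc (N - d) N, (w n : ℂ) * z n by ring]
        congr 1
        rw [← Finset.sum_sub_distrib]
        apply Finset.sum_congr rfl
        intro n _
        push_cast
        ring]
      refine le_trans (norm_add_le _ _) ?_
      have b1 : ‖∑ n ∈ Icc 1 (N - d), ((w n - w (n + d) : ℝ) : ℂ) * z n‖ ≤ d * w 1 := by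
        refine le_trans (norm_sum_le _ _) ?_
        calc ∑ n ∈ Icc 1 (N - d), ‖((w n - w (n + d) : ℝ) : ℂ) * z n‖
            = ∑ n ∈ Icc 1 (N - d), (w n - w (n + d)) := by
              apply Finset.sum_congr rfl
              intro n hn
              rw [norm_mul, hz1, mul_one, Complex.norm_real, Real.norm_eq_abs,
                abs_of_nonneg (by have := hanti (show n ≤ n + d by omega); linarith)]
          _ ≤ d * w 1 := sum_w_sub w hpos hanti (N - d) d
      have b2 : ‖∑ n ∈ Ioc (N - d) N, (w n : ℂ) * z n‖ ≤ d * w 1 := by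
        refine le_trans (norm_sum_le _ _) ?_
        calc ∑ n ∈ Ioc (N - d) N, ‖(w n : ℂ) * z n‖ = ∑ n ∈ Ioc (N - d) N, w n := by
              apply Finset.sum_congr rfl
              intro n _
              rw [norm_mul, hz1, mul_one, Complex.norm_real, Real.norm_eq_abs,
                abs_of_pos (hpos n)]
          _ ≤ ∑ n ∈ Ioc (N - d) N, w 1 := by
              apply Finset.sum_le_sum
              intro n hn
              rw [Finset.mem_Ioc] at hn
              exact hanti (by omega)
          _ = ((N - (N - d) : ℕ) : ℝ) * w 1 := by
              rw [Finset.sum_const, Nat.card_Ioc, nsmul_eq_mul]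
          _ ≤ d * w 1 := by
              apply mul_le_mul_of_nonneg_right _ (hpos 1).le
              exact_mod_cast Nat.cast_le.mpr (by omega : N - (N - d) ≤ d)
      linarith
    calc C'.re ≤ ‖C'‖ := by
          exact Complex.re_le_norm C'
      _ = ‖C - (C - C')‖ := by
          congr 1
          ring
      _ ≤ ‖C‖ + ‖C - C'‖ := norm_sub_le _ _
      _ ≤ ‖C‖ + 2 * d * w 1 := by linarith
  -- summing up
  have inner : ∀ k, μ k * ∑ d ∈ Icc 1 (H - 1), ((H : ℝ) - d) * (Q k d).re
      = ∑ d ∈ Icc 1 (H - 1), ((H : ℝ) - d) * (μ k * (Q k d).re) := by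
    intro k
    rw [Finset.mul_sum]
    exact Finset.sum_congr rfl fun d _ => by ring
  have step_k : ∀ k ∈ Icc 1 N, μ k * R k
      = ((H : ℝ) * (μ k * k) + 2 * ∑ d ∈ Icc 1 (H - 1), ((H : ℝ) - d) * (μ k * (Q k d).re)) / H ^ 2 := by
    intro k _
    rw [hR]
    simp only
    rw [← mul_div_assoc]
    congr 1
    rw [← inner k]
    ring
  have swap2 : ∑ k ∈ Icc 1 N, ∑ d ∈ Icc 1 (H - 1), ((H : ℝ) - d) * (μ k * (Q k d).re)
      = ∑ d ∈ Icc 1 (H - 1), ((H : ℝ) - d) * ∑ k ∈ Icc 1 N, μ k * (Q k d).re := by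
    rw [Finset.sum_comm]
    exact Finset.sum_congr rfl fun d _ => by rw [Finset.mul_sum]
  set Sn := ∑ d ∈ Icc 1 (H - 1), ‖∑ n ∈ Icc 1 N, (w n : ℂ) * (a (n + d) * conj (a n))‖ with hSn
  have hnum : (H : ℝ) * W + 2 * ∑ d ∈ Icc 1 (H - 1), ((H : ℝ) - d) * ∑ k ∈ Icc 1 N, μ k * (Q k d).re
      ≤ H ^ 2 * (W / H + 2 * w 1 * H + (2 / H) * Sn) := by
    have t1 : ∑ d ∈ Icc 1 (H - 1), ((H : ℝ) - d) * ∑ k ∈ Icc 1 N, μ k * (Q k d).re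
        ≤ ∑ d ∈ Icc 1 (H - 1), ((H : ℝ) - d) *
            (‖∑ n ∈ Icc 1 N, (w n : ℂ) * (a (n + d) * conj (a n))‖ + 2 * d * w 1) := by
      apply Finset.sum_le_sum
      intro d hd
      rw [Finset.mem_Icc] at hd
      have hdH : (d : ℝ) ≤ H := by exact_mod_cast (by omega : d ≤ H)
      apply mul_le_mul_of_nonneg_left _ (by linarith)
      rw [hC'd d]
      exact hCbound d hd.1
    have t2 : ∑ d ∈ Icc 1 (H - 1), ((H : ℝ) - d) *
            (‖∑ n ∈ Icc 1 N, (w n : ℂ) * (a (n + d) * conj (a n))‖ + 2 * d * w 1)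
        ≤ (H : ℝ) * Sn + ∑ d ∈ Icc 1 (H - 1), ((H : ℝ) - d) * (2 * d * w 1) := by
      rw [hSn, Finset.mul_sum, ← Finset.sum_add_distrib]
      apply Finset.sum_le_sum
      intro d hd
      rw [Finset.mem_Icc] at hd
      have hdH : (d : ℝ) ≤ H := by exact_mod_cast (by omega : d ≤ H)
      have e : ((H : ℝ) - d) * ‖∑ n ∈ Icc 1 N, (w n : ℂ) * (a (n + d) * conj (a n))‖
          ≤ (H : ℝ) * ‖∑ n ∈ Icc 1 N, (w n : ℂ) * (a (n + d) * conj (a n))‖ := by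
        apply mul_le_mul_of_nonneg_right _ (norm_nonneg _)
        have : (0 : ℝ) ≤ (d : ℝ) := Nat.cast_nonneg d
        linarith
      nlinarith [e]
    have t3 : ∑ d ∈ Icc 1 (H - 1), ((H : ℝ) - d) * (2 * d * w 1) ≤ (H : ℝ) * (w 1 * H ^ 2 / 2) := by
      calc ∑ d ∈ Icc 1 (H - 1), ((H : ℝ) - d) * (2 * d * w 1)
          ≤ ∑ d ∈ Icc 1 (H - 1), w 1 * H ^ 2 / 2 := by
            apply Finset.sum_le_sum
            intro d hd
            rw [Finset.mem_Icc] at hd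
            have hdH : (d : ℝ) ≤ H := by exact_mod_cast (by omega : d ≤ H)
            have hd0 : (0 : ℝ) ≤ (d : ℝ) := Nat.cast_nonneg d
            nlinarith [sq_nonneg ((H : ℝ) - 2 * d), (hpos 1).le]
        _ = ((H - 1 : ℕ) : ℝ) * (w 1 * H ^ 2 / 2) := by
            rw [Finset.sum_const, Nat.card_Icc, nsmul_eq_mul]
            have e2 : H - 1 + 1 - 1 = H - 1 := by omega
            rw [e2]
        _ ≤ (H : ℝ) * (w 1 * H ^ 2 / 2) := by
            apply mul_le_mul_of_nonneg_right _
              (div_nonneg (mul_nonneg (hpos 1).le (sq_nonneg _)) (by norm_num))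
            exact_mod_cast Nat.cast_le.mpr (by omega : H - 1 ≤ H)
    have expand : (H : ℝ) ^ 2 * (W / H + 2 * w 1 * H + (2 / H) * Sn)
        = (H : ℝ) * W + 2 * w 1 * (H : ℝ) ^ 3 + 2 * (H : ℝ) * Sn := by
      field_simp
    have hw10 : (0 : ℝ) ≤ w 1 * (H : ℝ) ^ 3 := mul_nonneg (hpos 1).le (by positivity)
    rw [expand]
    linarith
  have hsum2 : ∑ k ∈ Icc 1 N, μ k * R k ≤ W / H + 2 * w 1 * H + (2 / H) * Sn := by
    rw [Finset.sum_congr rfl step_k, ← Finset.sum_div, Finset.sum_add_distrib,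
      ← Finset.mul_sum, ← Finset.mul_sum, hW2, swap2]
    rw [div_le_iff₀ (by positivity : (0 : ℝ) < (H : ℝ) ^ 2)]
    linarith [hnum]
  have hW0 : (0 : ℝ) ≤ W := by
    rw [hWdef]
    exact Finset.sum_nonneg fun n _ => (hpos n).le
  calc ‖∑ n ∈ Icc 1 N, (w n : ℂ) * a n‖ ^ 2
      ≤ (∑ k ∈ Icc 1 N, μ k * ‖P k‖) ^ 2 := pow_le_pow_left₀ (norm_nonneg _) hnorm1 2
    _ ≤ (∑ k ∈ Icc 1 N, μ k * ((k : ℝ) + H)) * ∑ k ∈ Icc 1 N, μ k * R k := hCS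
    _ = (W + H * w 1) * ∑ k ∈ Icc 1 N, μ k * R k := by rw [hsum1]
    _ ≤ (W + H * w 1) * (W / H + 2 * w 1 * H + (2 / H) * Sn) := by
        apply mul_le_mul_of_nonneg_left hsum2
        have : (0 : ℝ) ≤ (H : ℝ) * w 1 := mul_nonneg hHpos.le (hpos 1).le
        linarith

theorem weighted_van_der_corput
    (w : ℕ → ℝ) (hpos : ∀ n, 0 < w n) (hmono : ∀ n, w (n + 1) ≤ w n)
    (hW : Tendsto (fun N : ℕ => ∑ n ∈ Icc 1 N, w n) atTop atTop)
    (x : ℕ → ℝ)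
    (hvdc : Tendsto (fun h : ℕ =>
        limsup (fun N : ℕ => ‖((∑ n ∈ Icc 1 N, w n : ℝ) : ℂ)⁻¹ *
          ∑ n ∈ Icc 1 N, (w n : ℂ) *
            Complex.exp (2 * Real.pi * Complex.I * (x (n + h) - x n))‖) atTop)
        atTop (𝓝 0)) :
    Tendsto (fun N : ℕ => ((∑ n ∈ Icc 1 N, w n : ℝ) : ℂ)⁻¹ *
      ∑ n ∈ Icc 1 N, (w n : ℂ) *
        Complex.exp (2 * Real.pi * Complex.I * x n)) atTop (𝓝 0) := by
  have hanti : Antitone w := antitone_nat_of_succ_le hmono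
  set a : ℕ → ℂ := fun n => Complex.exp (2 * Real.pi * Complex.I * x n) with hadef
  have ha : ∀ n, ‖a n‖ = 1 := by
    intro n
    rw [hadef]
    show ‖Complex.exp (2 * Real.pi * Complex.I * x n)‖ = 1
    rw [show (2 * (Real.pi : ℂ) * Complex.I * (x n : ℝ)) = ((2 * Real.pi * x n : ℝ) : ℂ) * Complex.I by
      push_cast; ring]
    exact Complex.norm_exp_ofReal_mul_I _
  have hcorr : ∀ d n, Complex.exp (2 * Real.pi * Complex.I * ((x (n + d) : ℝ) - (x n : ℝ)))
      = a (n + d) * conj (a n) := by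
    intro d n
    rw [hadef]
    show _ = Complex.exp (2 * Real.pi * Complex.I * x (n + d)) *
      conj (Complex.exp (2 * Real.pi * Complex.I * x n))
    rw [← Complex.exp_conj, ← Complex.exp_add]
    congr 1
    rw [show (starRingEnd ℂ) (2 * (Real.pi : ℂ) * Complex.I * (x n : ℝ))
        = 2 * (Real.pi : ℂ) * -Complex.I * (x n : ℝ) by
      rw [map_mul, map_mul, map_mul, map_ofNat, Complex.conj_ofReal, Complex.conj_I,
        Complex.conj_ofReal]]
    ring
  -- the correlation sums agree with the a-form ones
  have hCeq : ∀ d N, (∑ n ∈ Icc 1 N, (w n : ℂ) *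
        Complex.exp (2 * Real.pi * Complex.I * (x (n + d) - x n)))
      = ∑ n ∈ Icc 1 N, (w n : ℂ) * (a (n + d) * conj (a n)) := by
    intro d N
    exact Finset.sum_congr rfl fun n _ => by rw [hcorr d n]
  have hWnn : ∀ N, (0 : ℝ) ≤ ∑ n ∈ Icc 1 N, w n :=
    fun N => Finset.sum_nonneg fun n _ => (hpos n).le
  have hWpos : ∀ N, 1 ≤ N → (0 : ℝ) < ∑ n ∈ Icc 1 N, w n :=
    fun N hN => Finset.sum_pos (fun n _ => hpos n) ⟨1, by simp [Finset.mem_Icc, hN]⟩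
  have hCle : ∀ d N, ‖∑ n ∈ Icc 1 N, (w n : ℂ) * (a (n + d) * conj (a n))‖
      ≤ ∑ n ∈ Icc 1 N, w n := by
    intro d N
    refine le_trans (norm_sum_le _ _) (le_of_eq (Finset.sum_congr rfl fun n _ => ?_))
    rw [norm_mul, norm_mul, RCLike.norm_conj, ha, ha, mul_one, mul_one,
      Complex.norm_real, Real.norm_eq_abs, abs_of_pos (hpos n)]
  have hu1 : ∀ d N, ‖((∑ n ∈ Icc 1 N, w n : ℝ) : ℂ)⁻¹ *
      ∑ n ∈ Icc 1 N, (w n : ℂ) *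
        Complex.exp (2 * Real.pi * Complex.I * (x (n + d) - x n))‖ ≤ 1 := by
    intro d N
    rw [hCeq d N, norm_mul, norm_inv, Complex.norm_real, Real.norm_eq_abs,
      abs_of_nonneg (hWnn N)]
    rcases eq_or_lt_of_le (hWnn N) with h | h
    · have h0 : ‖∑ n ∈ Icc 1 N, (w n : ℂ) * (a (n + d) * conj (a n))‖ = 0 := by
        have := hCle d N
        have := norm_nonneg (∑ n ∈ Icc 1 N, (w n : ℂ) * (a (n + d) * conj (a n)))
        linarith
      rw [h0]
      simp
    · calc (∑ n ∈ Icc 1 N, w n)⁻¹ * ‖∑ n ∈ Icc 1 N, (w n : ℂ) * (a (n + d) * conj (a n))‖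
          ≤ (∑ n ∈ Icc 1 N, w n)⁻¹ * ∑ n ∈ Icc 1 N, w n :=
            mul_le_mul_of_nonneg_left (hCle d N) (inv_nonneg.mpr (hWnn N))
        _ = 1 := inv_mul_cancel₀ h.ne'
  set c : ℕ → ℝ := fun h : ℕ =>
    limsup (fun N : ℕ => ‖((∑ n ∈ Icc 1 N, w n : ℝ) : ℂ)⁻¹ *
      ∑ n ∈ Icc 1 N, (w n : ℂ) *
        Complex.exp (2 * Real.pi * Complex.I * (x (n + h) - x n))‖) atTop with hcdef
  have hc : Tendsto c atTop (𝓝 0) := hvdc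
  have hc0 : ∀ d, 0 ≤ c d := by
    intro d
    exact le_limsup_of_frequently_le (Frequently.of_forall fun N => norm_nonneg _)
      (isBoundedUnder_of ⟨1, fun N => hu1 d N⟩)
  -- main claim : squares eventually small
  have claim : ∀ ε : ℝ, 0 < ε → ∀ᶠ N : ℕ in atTop,
      ‖((∑ n ∈ Icc 1 N, w n : ℝ) : ℂ)⁻¹ *
        ∑ n ∈ Icc 1 N, (w n : ℂ) * Complex.exp (2 * Real.pi * Complex.I * x n)‖ ^ 2 < ε := by
    intro ε hε
    obtain ⟨H, hH1, hHa, hHb⟩ : ∃ H : ℕ, 1 ≤ H ∧ (H : ℝ)⁻¹ < ε / 16 ∧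
        (H : ℝ)⁻¹ * ∑ i ∈ range H, c i < ε / 32 := by
      have h3 : ∀ᶠ H : ℕ in atTop, 1 ≤ H := eventually_ge_atTop 1
      have h2 : ∀ᶠ H : ℕ in atTop, (H : ℝ)⁻¹ < ε / 16 :=
        tendsto_inv_atTop_nhds_zero_nat.eventually_lt_const (by positivity)
      have h1 : ∀ᶠ H : ℕ in atTop, (H : ℝ)⁻¹ * ∑ i ∈ range H, c i < ε / 32 :=
        (hc.cesaro).eventually_lt_const (by positivity)
      exact ((h3.and (h2.and h1)).exists).imp fun H h => ⟨h.1, h.2.1, h.2.2⟩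
    have hHR : (0 : ℝ) < H := by exact_mod_cast hH1
    have e1 : ∀ᶠ N : ℕ in atTop, 1 ≤ N := eventually_ge_atTop 1
    have e2 : ∀ᶠ N : ℕ in atTop, (H : ℝ) * w 1 ≤ ∑ n ∈ Icc 1 N, w n :=
      hW.eventually_ge_atTop _
    have e3 : ∀ᶠ N : ℕ in atTop, 32 * w 1 * H / ε ≤ ∑ n ∈ Icc 1 N, w n :=
      hW.eventually_ge_atTop _
    have e4 : ∀ᶠ N : ℕ in atTop, ∀ d ∈ Icc 1 (H - 1),
        ‖((∑ n ∈ Icc 1 N, w n : ℝ) : ℂ)⁻¹ *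
          ∑ n ∈ Icc 1 N, (w n : ℂ) *
            Complex.exp (2 * Real.pi * Complex.I * (x (n + d) - x n))‖ < c d + ε / 32 := by
      rw [Finset.eventually_all]
      intro d _
      refine eventually_lt_of_limsup_lt ?_ (isBoundedUnder_of ⟨1, fun N => hu1 d N⟩)
      have : c d < c d + ε / 32 := by linarith
      exact this
    filter_upwards [e1, e2, e3, e4] with N hN1 hN2 hN3 hN4
    set WN := ∑ n ∈ Icc 1 N, w n with hWNdef
    have hWN : 0 < WN := hWpos N hN1
    have key := key_ineq w hpos hmono a ha N H hH1 hN1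
    set Sd := ∑ d ∈ Icc 1 (H - 1), ‖∑ n ∈ Icc 1 N, (w n : ℂ) * (a (n + d) * conj (a n))‖ with hSddef
    -- bound Sd
    have hper : ∀ d ∈ Icc 1 (H - 1), ‖∑ n ∈ Icc 1 N, (w n : ℂ) * (a (n + d) * conj (a n))‖
        ≤ WN * (c d + ε / 32) := by
      intro d hd
      have h4 := (hN4 d hd).le
      rw [hCeq d N, norm_mul, norm_inv, Complex.norm_real, Real.norm_eq_abs,
        abs_of_pos hWN] at h4
      calc ‖∑ n ∈ Icc 1 N, (w n : ℂ) * (a (n + d) * conj (a n))‖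
          = WN * (WN⁻¹ * ‖∑ n ∈ Icc 1 N, (w n : ℂ) * (a (n + d) * conj (a n))‖) := by
            field_simp
        _ ≤ WN * (c d + ε / 32) := mul_le_mul_of_nonneg_left h4 hWN.le
    have hcsum : ∑ d ∈ Icc 1 (H - 1), (c d + ε / 32) ≤ (H : ℝ) * (ε / 16) := by
      rw [Finset.sum_add_distrib]
      have s1 : ∑ d ∈ Icc 1 (H - 1), c d ≤ ∑ i ∈ range H, c i :=
        Finset.sum_le_sum_of_subset_of_nonneg
          (by intro i hi; rw [Finset.mem_Icc] at hi; rw [Finset.mem_range]; omega)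
          (fun i _ _ => hc0 i)
      have s2 : ∑ i ∈ range H, c i ≤ (H : ℝ) * (ε / 32) := by
        have := mul_le_mul_of_nonneg_left hHb.le hHR.le
        rw [← mul_assoc, mul_inv_cancel₀ hHR.ne', one_mul] at this
        linarith
      have s3 : ∑ d ∈ Icc 1 (H - 1), (ε / 32 : ℝ) ≤ (H : ℝ) * (ε / 32) := by
        rw [Finset.sum_const, Nat.card_Icc, nsmul_eq_mul]
        apply mul_le_mul_of_nonneg_right _ (by positivity)
        exact_mod_cast Nat.cast_le.mpr (by omega : H - 1 + 1 - 1 ≤ H)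
      linarith
    have hSd2 : Sd ≤ WN * ((H : ℝ) * (ε / 16)) := by
      calc Sd ≤ ∑ d ∈ Icc 1 (H - 1), WN * (c d + ε / 32) := Finset.sum_le_sum hper
        _ = WN * ∑ d ∈ Icc 1 (H - 1), (c d + ε / 32) := by rw [Finset.mul_sum]
        _ ≤ WN * ((H : ℝ) * (ε / 16)) := mul_le_mul_of_nonneg_left hcsum hWN.le
    -- bound the bracket
    have hbr : WN / H + 2 * w 1 * H + (2 / H) * Sd ≤ WN * (ε / 4) := by
      have b1 : WN / H ≤ WN * (ε / 16) := by
        rw [div_eq_mul_inv]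
        exact mul_le_mul_of_nonneg_left hHa.le hWN.le
      have b2 : 2 * w 1 * (H : ℝ) ≤ WN * (ε / 16) := by
        rw [div_le_iff₀ hε] at hN3
        nlinarith
      have b3 : (2 / H) * Sd ≤ WN * (ε / 8) := by
        calc (2 / (H : ℝ)) * Sd ≤ (2 / H) * (WN * ((H : ℝ) * (ε / 16))) := by
              apply mul_le_mul_of_nonneg_left hSd2 (by positivity)
          _ = WN * (ε / 8) := by field_simp; ring
      linarith
    have hfac : WN + (H : ℝ) * w 1 ≤ 2 * WN := by linarith
    have hkey2 : ‖∑ n ∈ Icc 1 N, (w n : ℂ) * a n‖ ^ 2 ≤ 2 * WN * (WN * (ε / 4)) := by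
      calc ‖∑ n ∈ Icc 1 N, (w n : ℂ) * a n‖ ^ 2
          ≤ (WN + (H : ℝ) * w 1) * (WN / H + 2 * w 1 * H + (2 / H) * Sd) := key
        _ ≤ (2 * WN) * (WN * (ε / 4)) := by
            apply mul_le_mul hfac hbr _ (by positivity)
            have hb0 : (0 : ℝ) ≤ WN / H := by positivity
            have hb1 : (0 : ℝ) ≤ 2 * w 1 * (H : ℝ) :=
              mul_nonneg (mul_nonneg (by norm_num) (hpos 1).le) hHR.le
            have hb2 : (0 : ℝ) ≤ (2 / (H : ℝ)) * Sd := by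
              apply mul_nonneg (by positivity)
              rw [hSddef]
              exact Finset.sum_nonneg fun d _ => norm_nonneg _
            linarith
    -- conclude
    have hgoal : (∑ n ∈ Icc 1 N, (w n : ℂ) * Complex.exp (2 * Real.pi * Complex.I * x n))
        = ∑ n ∈ Icc 1 N, (w n : ℂ) * a n := by
      exact Finset.sum_congr rfl fun n _ => by rw [hadef]
    rw [hgoal, norm_mul, norm_inv, Complex.norm_real, Real.norm_eq_abs, abs_of_pos hWN]
    calc (WN⁻¹ * ‖∑ n ∈ Icc 1 N, (w n : ℂ) * a n‖) ^ 2
        = ‖∑ n ∈ Icc 1 N, (w n : ℂ) * a n‖ ^ 2 * (WN ^ 2)⁻¹ := by ring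
      _ ≤ 2 * WN * (WN * (ε / 4)) * (WN ^ 2)⁻¹ := by
          apply mul_le_mul_of_nonneg_right hkey2 (by positivity)
      _ = ε / 2 := by field_simp; ring
      _ < ε := by linarith
  -- from the claim to the limit
  rw [NormedAddCommGroup.tendsto_nhds_zero]
  intro ε hε
  filter_upwards [claim (ε ^ 2) (by positivity)] with N hN
  have h0 : (0 : ℝ) ≤ ‖((∑ n ∈ Icc 1 N, w n : ℝ) : ℂ)⁻¹ *
      ∑ n ∈ Icc 1 N, (w n : ℂ) * Complex.exp (2 * Real.pi * Complex.I * x n)‖ := norm_nonneg _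
  nlinarith [hN, h0]
end

section
/- Let (w(n)) be positive non-increasing with W(N) → ∞. If for every positive integer h the difference sequence (x_{n+h} − x_n)_{n∈ℕ} is w(n)-uniformly distributed mod 1, then (x_n) is w(n)-uniformly distributed mod 1. -/
open Filter Finset Topology

private lemma sqrtAdd {a b : ℝ} (ha : 0 ≤ a) (hb : 0 ≤ b) :
    Real.sqrt (a + b) ≤ Real.sqrt a + Real.sqrt b := by
  rw [show Real.sqrt a + Real.sqrt b = Real.sqrt ((Real.sqrt a + Real.sqrt b) ^ 2) from
    (Real.sqrt_sq (by positivity)).symm]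
  apply Real.sqrt_le_sqrt
  nlinarith [Real.sq_sqrt ha, Real.sq_sqrt hb, Real.sqrt_nonneg a, Real.sqrt_nonneg b]

private lemma telescopeC (w : ℕ → ℝ) (u : ℕ → ℂ) (N : ℕ) :
    ∑ n ∈ Icc 1 N, ((w n : ℂ) * u (n + 1) - (w n : ℂ) * u n) =
      (∑ n ∈ Icc 1 N, ((w n : ℂ) - (w (n + 1) : ℂ)) * u (n + 1)) +
        ((w (N + 1) : ℂ) * u (N + 1) - (w 1 : ℂ) * u 1) := by
  induction N with
  | zero => simp
  | succ N ih =>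
      rw [Finset.sum_Icc_succ_top (Nat.succ_le_succ (Nat.zero_le N)),
        Finset.sum_Icc_succ_top (Nat.succ_le_succ (Nat.zero_le N)), ih]
      ring

private lemma teleR (w : ℕ → ℝ) (N : ℕ) :
    ∑ n ∈ Icc 1 N, (w n - w (n + 1)) = w 1 - w (N + 1) := by
  induction N with
  | zero => simp
  | succ N ih =>
      rw [Finset.sum_Icc_succ_top (Nat.succ_le_succ (Nat.zero_le N)), ih]; ring

private lemma one_shift (w : ℕ → ℝ) (hpos : ∀ n, 0 < w n) (hmono : ∀ n, w (n + 1) ≤ w n)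
    (u : ℕ → ℂ) (hu : ∀ n, ‖u n‖ ≤ 1) (N : ℕ) :
    ‖(∑ n ∈ Icc 1 N, (w n : ℂ) * u (n + 1)) - ∑ n ∈ Icc 1 N, (w n : ℂ) * u n‖ ≤ 3 * w 1 := by
  have hanti : Antitone w := antitone_nat_of_succ_le hmono
  rw [← Finset.sum_sub_distrib, telescopeC]
  have h1 : ‖∑ n ∈ Icc 1 N, ((w n : ℂ) - (w (n + 1) : ℂ)) * u (n + 1)‖ ≤ w 1 - w (N + 1) := by
    calc ‖∑ n ∈ Icc 1 N, ((w n : ℂ) - (w (n + 1) : ℂ)) * u (n + 1)‖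
        ≤ ∑ n ∈ Icc 1 N, ‖((w n : ℂ) - (w (n + 1) : ℂ)) * u (n + 1)‖ := norm_sum_le _ _
      _ ≤ ∑ n ∈ Icc 1 N, (w n - w (n + 1)) := by
          apply Finset.sum_le_sum
          intro n _
          rw [norm_mul, ← Complex.ofReal_sub, Complex.norm_real]
          have hnn : 0 ≤ w n - w (n + 1) := by linarith [hmono n]
          rw [Real.norm_eq_abs, abs_of_nonneg hnn]
          calc (w n - w (n + 1)) * ‖u (n + 1)‖ ≤ (w n - w (n + 1)) * 1 := by
                exact mul_le_mul_of_nonneg_left (hu _) hnn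
            _ = w n - w (n + 1) := mul_one _
      _ = w 1 - w (N + 1) := teleR w N
  have h2 : ‖(w (N + 1) : ℂ) * u (N + 1)‖ ≤ w 1 := by
    rw [norm_mul, Complex.norm_real, Real.norm_eq_abs, abs_of_pos (hpos _)]
    calc w (N + 1) * ‖u (N + 1)‖ ≤ w (N + 1) * 1 :=
          mul_le_mul_of_nonneg_left (hu _) (hpos _).le
      _ = w (N + 1) := mul_one _
      _ ≤ w 1 := hanti (Nat.succ_le_succ (Nat.zero_le N))
  have h3 : ‖(w 1 : ℂ) * u 1‖ ≤ w 1 := by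
    rw [norm_mul, Complex.norm_real, Real.norm_eq_abs, abs_of_pos (hpos _)]
    calc w 1 * ‖u 1‖ ≤ w 1 * 1 := mul_le_mul_of_nonneg_left (hu _) (hpos _).le
      _ = w 1 := mul_one _
  have hw1 : 0 < w 1 := hpos 1
  have hwN : 0 < w (N + 1) := hpos _
  calc ‖(∑ n ∈ Icc 1 N, ((w n : ℂ) - (w (n + 1) : ℂ)) * u (n + 1)) +
        ((w (N + 1) : ℂ) * u (N + 1) - (w 1 : ℂ) * u 1)‖
      ≤ ‖∑ n ∈ Icc 1 N, ((w n : ℂ) - (w (n + 1) : ℂ)) * u (n + 1)‖ +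
        (‖(w (N + 1) : ℂ) * u (N + 1)‖ + ‖(w 1 : ℂ) * u 1‖) :=
        (norm_add_le _ _).trans (by gcongr; exact norm_sub_le _ _)
    _ ≤ (w 1 - w (N + 1)) + (w 1 + w 1) := by gcongr
    _ ≤ 3 * w 1 := by linarith

private lemma shift_sum (w : ℕ → ℝ) (hpos : ∀ n, 0 < w n) (hmono : ∀ n, w (n + 1) ≤ w n)
    (u : ℕ → ℂ) (hu : ∀ n, ‖u n‖ ≤ 1) (h N : ℕ) :
    ‖(∑ n ∈ Icc 1 N, (w n : ℂ) * u (n + h)) - ∑ n ∈ Icc 1 N, (w n : ℂ) * u n‖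
      ≤ 3 * h * w 1 := by
  induction h with
  | zero => simp
  | succ h ih =>
      have key := one_shift w hpos hmono (fun k => u (k + h)) (fun n => hu _) N
      have hrw : (∑ n ∈ Icc 1 N, (w n : ℂ) * u (n + (h + 1)))
          = ∑ n ∈ Icc 1 N, (w n : ℂ) * u (n + 1 + h) := by
        apply Finset.sum_congr rfl
        intro n _
        rw [show n + (h + 1) = n + 1 + h by omega]
      calc ‖(∑ n ∈ Icc 1 N, (w n : ℂ) * u (n + (h + 1))) - ∑ n ∈ Icc 1 N, (w n : ℂ) * u n‖
          ≤ ‖(∑ n ∈ Icc 1 N, (w n : ℂ) * u (n + (h + 1))) - ∑ n ∈ Icc 1 N, (w n : ℂ) * u (n + h)‖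
            + ‖(∑ n ∈ Icc 1 N, (w n : ℂ) * u (n + h)) - ∑ n ∈ Icc 1 N, (w n : ℂ) * u n‖ := by
            exact norm_sub_le_norm_sub_add_norm_sub _ _ _
        _ ≤ 3 * w 1 + 3 * h * w 1 := by
            refine add_le_add ?_ ih
            rw [hrw]; exact key
        _ = 3 * (h + 1 : ℕ) * w 1 := by push_cast; ring

private lemma arg_rw (μ : ℤ) (c : ℝ) :
    2 * (Real.pi : ℂ) * Complex.I * (μ : ℂ) * (c : ℂ)
      = ((2 * Real.pi * μ * c : ℝ) : ℂ) * Complex.I := by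
  push_cast; ring

private lemma norm_exp_one (μ : ℤ) (c : ℝ) :
    ‖Complex.exp (2 * (Real.pi : ℂ) * Complex.I * (μ : ℂ) * (c : ℂ))‖ = 1 := by
  rw [arg_rw, Complex.norm_exp_ofReal_mul_I]

private lemma exp_mul_conj (μ : ℤ) (a b : ℝ) :
    Complex.exp (2 * (Real.pi : ℂ) * Complex.I * (μ : ℂ) * (a : ℂ)) *
      (starRingEnd ℂ) (Complex.exp (2 * (Real.pi : ℂ) * Complex.I * (μ : ℂ) * (b : ℂ)))
    = Complex.exp (2 * (Real.pi : ℂ) * Complex.I * (μ : ℂ) * ((a : ℂ) - (b : ℂ))) := by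
  rw [← Complex.exp_conj, ← Complex.exp_add]
  congr 1
  have h2 : (starRingEnd ℂ) (2 * (Real.pi : ℂ) * Complex.I * (μ : ℂ) * (b : ℂ))
      = 2 * (Real.pi : ℂ) * (-Complex.I) * (μ : ℂ) * (b : ℂ) := by
    rw [map_mul, map_mul, map_mul, map_mul, Complex.conj_I, Complex.conj_ofReal,
      map_intCast]
    rw [map_ofNat, Complex.conj_ofReal]
  rw [h2]; ring

private lemma norm_exp_one' (μ : ℤ) (a b : ℝ) :
    ‖Complex.exp (2 * (Real.pi : ℂ) * Complex.I * (μ : ℂ) * ((a:ℂ) - (b:ℂ)))‖ = 1 := by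
  rw [show ((a:ℂ) - (b:ℂ)) = ((a - b : ℝ) : ℂ) by push_cast; ring]
  exact norm_exp_one μ (a - b)

set_option maxHeartbeats 1600000 in
theorem weighted_van_der_corput_difference
    (w : ℕ → ℝ) (hpos : ∀ n, 0 < w n) (hmono : ∀ n, w (n + 1) ≤ w n)
    (hW : Tendsto (fun N : ℕ => ∑ n ∈ Icc 1 N, w n) atTop atTop)
    (x : ℕ → ℝ)
    (hdiff : ∀ h : ℕ, 0 < h → ∀ m : ℤ, m ≠ 0 →
      Tendsto (fun N : ℕ => ((∑ n ∈ Icc 1 N, w n : ℝ) : ℂ)⁻¹ *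
        ∑ n ∈ Icc 1 N, (w n : ℂ) *
          Complex.exp (2 * Real.pi * Complex.I * m * (x (n + h) - x n))) atTop (𝓝 0)) :
    ∀ m : ℤ, m ≠ 0 →
      Tendsto (fun N : ℕ => ((∑ n ∈ Icc 1 N, w n : ℝ) : ℂ)⁻¹ *
        ∑ n ∈ Icc 1 N, (w n : ℂ) *
          Complex.exp (2 * Real.pi * Complex.I * m * x n)) atTop (𝓝 0) := by
  intro m hm
  have hanti : Antitone w := antitone_nat_of_succ_le hmono
  have hw1 : 0 < w 1 := hpos 1
  rw [NormedAddCommGroup.tendsto_nhds_zero]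
  intro ε hε
  obtain ⟨H, hHgt⟩ := exists_nat_gt (max 1 ((2 / ε) ^ 2))
  have hH1R : (1:ℝ) < H := lt_of_le_of_lt (le_max_left _ _) hHgt
  have hH1 : 1 ≤ H := by exact_mod_cast hH1R.le
  have hHposR : (0:ℝ) < H := lt_trans one_pos hH1R
  have hsqHpos : 0 < Real.sqrt H := Real.sqrt_pos.2 hHposR
  have hsqH : Real.sqrt H / H < ε / 2 := by
    have h2e : (2 / ε) < Real.sqrt H := by
      rw [Real.lt_sqrt (by positivity)]
      exact lt_of_le_of_lt (le_max_right _ _) hHgt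
    have hHs : Real.sqrt H * Real.sqrt H = H := Real.mul_self_sqrt hHposR.le
    rw [div_lt_div_iff₀ hHposR (by norm_num : (0:ℝ) < 2)]
    rw [div_lt_iff₀ hε] at h2e
    nlinarith [mul_lt_mul_of_pos_left h2e hsqHpos]
  set z : ℕ → ℂ := fun n => Complex.exp (2 * Real.pi * Complex.I * m * x n) with hzdef
  set T : ℤ → ℕ → ℕ → ℂ := fun μ d N => ∑ n ∈ Icc 1 N, (w n : ℂ) *
      Complex.exp (2 * Real.pi * Complex.I * μ * (x (n + d) - x n)) with hTdef
  set R : ℕ → ℝ := fun N => ∑ d ∈ Icc 1 (H - 1), (‖T m d N‖ + ‖T (-m) d N‖) with hRdef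
  set W : ℕ → ℝ := fun N => ∑ n ∈ Icc 1 N, w n with hWdef
  set Z : ℕ → ℂ := fun N => ∑ n ∈ Icc 1 N, (w n : ℂ) * z n with hZdef
  set g : ℕ → ℂ := fun n => ∑ h ∈ range H, z (n + h) with hgdef
  set G : ℕ → ℂ := fun N => ∑ n ∈ Icc 1 N, (w n : ℂ) * g n with hGdef
  set Q : ℕ → ℝ := fun N => ∑ n ∈ Icc 1 N, w n * ‖g n‖ ^ 2 with hQdef
  clear_value z T R W Z g G Q
  have hzn : ∀ n, ‖z n‖ = 1 := fun n => by
    simp only [hzdef]; exact norm_exp_one m (x n)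
  have hznle : ∀ n, ‖z n‖ ≤ 1 := fun n => (hzn n).le
  have hWposN : ∀ N, 1 ≤ N → 0 < W N := fun N hN => by
    simp only [hWdef]
    exact Finset.sum_pos (fun i _ => hpos i) ⟨1, Finset.mem_Icc.2 ⟨le_refl 1, hN⟩⟩
  have hWnn : ∀ N, 0 ≤ W N := fun N => by
    simp only [hWdef]
    exact Finset.sum_nonneg fun i _ => (hpos i).le
  have hRnn : ∀ N, 0 ≤ R N := fun N => by
    simp only [hRdef]
    exact Finset.sum_nonneg fun d _ => by positivity
  -- Step A
  have stepA : ∀ N, (H:ℝ) * ‖Z N‖ ≤ ‖G N‖ + 3 * (H:ℝ)^2 * w 1 := by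
    intro N
    have hswap : G N = ∑ h ∈ range H, ∑ n ∈ Icc 1 N, (w n:ℂ) * z (n + h) := by
      simp only [hGdef, hgdef, Finset.mul_sum]
      exact Finset.sum_comm
    have hZsum : (H:ℂ) * Z N = ∑ _h ∈ range H, Z N := by
      rw [Finset.sum_const, Finset.card_range, nsmul_eq_mul]
    have hdiffb : ‖G N - (H:ℂ) * Z N‖ ≤ (H:ℝ) * (3 * (H:ℝ) * w 1) := by
      rw [hZsum, hswap, ← Finset.sum_sub_distrib]
      refine (norm_sum_le _ _).trans ?_
      have hbd : ∀ h ∈ range H,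
          ‖(∑ n ∈ Icc 1 N, (w n:ℂ) * z (n + h)) - Z N‖ ≤ 3 * (H:ℝ) * w 1 := by
        intro h hh
        have hs := shift_sum w hpos hmono z hznle h N
        have hZN : Z N = ∑ n ∈ Icc 1 N, (w n:ℂ) * z n := by rw [hZdef]
        rw [hZN]
        refine hs.trans ?_
        have hhH : (h:ℝ) ≤ (H:ℝ) := by exact_mod_cast (mem_range.1 hh).le
        nlinarith
      calc ∑ h ∈ range H, ‖(∑ n ∈ Icc 1 N, (w n:ℂ) * z (n + h)) - Z N‖
          ≤ ∑ _h ∈ range H, (3 * (H:ℝ) * w 1) := Finset.sum_le_sum hbd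
        _ = (H:ℝ) * (3 * (H:ℝ) * w 1) := by
            rw [Finset.sum_const, Finset.card_range, nsmul_eq_mul]
    have h1 : (H:ℝ) * ‖Z N‖ = ‖(H:ℂ) * Z N‖ := by
      rw [norm_mul, Complex.norm_natCast]
    have h2 : (H:ℂ) * Z N = G N - (G N - (H:ℂ) * Z N) := by ring
    rw [h1, h2]
    refine (norm_sub_le _ _).trans ?_
    nlinarith [hdiffb]
  -- Step B
  have stepB : ∀ N, ‖G N‖^2 ≤ W N * Q N := by
    intro N
    have h1 : ‖G N‖ ≤ ∑ n ∈ Icc 1 N, w n * ‖g n‖ := by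
      rw [hGdef]
      refine (norm_sum_le _ _).trans (le_of_eq (Finset.sum_congr rfl ?_))
      intro n _
      rw [norm_mul, Complex.norm_real, Real.norm_eq_abs, abs_of_pos (hpos n)]
    have h2 : (∑ n ∈ Icc 1 N, w n * ‖g n‖)^2 ≤ W N * Q N := by
      have hcs := Finset.sum_mul_sq_le_sq_mul_sq (Icc 1 N)
        (fun n => Real.sqrt (w n)) (fun n => Real.sqrt (w n) * ‖g n‖)
      have e1 : ∑ n ∈ Icc 1 N, Real.sqrt (w n) * (Real.sqrt (w n) * ‖g n‖)
          = ∑ n ∈ Icc 1 N, w n * ‖g n‖ := by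
        refine Finset.sum_congr rfl fun n _ => ?_
        rw [← mul_assoc, Real.mul_self_sqrt (hpos n).le]
      have e2 : ∑ n ∈ Icc 1 N, Real.sqrt (w n) ^ 2 = W N := by
        rw [hWdef]
        exact Finset.sum_congr rfl fun n _ => Real.sq_sqrt (hpos n).le
      have e3 : ∑ n ∈ Icc 1 N, (Real.sqrt (w n) * ‖g n‖) ^ 2 = Q N := by
        rw [hQdef]
        refine Finset.sum_congr rfl fun n _ => ?_
        rw [mul_pow, Real.sq_sqrt (hpos n).le]
      rw [e1, e2, e3] at hcs
      exact hcs
    calc ‖G N‖^2 ≤ (∑ n ∈ Icc 1 N, w n * ‖g n‖)^2 :=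
          pow_le_pow_left₀ (norm_nonneg _) h1 2
      _ ≤ W N * Q N := h2
  -- Step C
  have stepC : ∀ N, Q N ≤ (H:ℝ) * W N + (H:ℝ)^2 * (R N + 3 * (H:ℝ) * w 1) := by
    intro N
    set A : ℕ → ℕ → ℂ := fun a b => ∑ n ∈ Icc 1 N,
      (w n : ℂ) * (z (n + a) * (starRingEnd ℂ) (z (n + b))) with hAdef
    clear_value A
    have hgg : ∀ n : ℕ, ((w n : ℂ) * (g n * (starRingEnd ℂ) (g n)))
        = ((w n * ‖g n‖^2 : ℝ) : ℂ) := by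
      intro n
      rw [Complex.mul_conj, Complex.normSq_eq_norm_sq]
      push_cast
      ring
    have hQ1 : Q N = (∑ n ∈ Icc 1 N, (w n : ℂ) * (g n * (starRingEnd ℂ) (g n))).re := by
      rw [Complex.re_sum, hQdef]
      refine Finset.sum_congr rfl fun n _ => ?_
      rw [hgg n, Complex.ofReal_re]
    have hQ2 : Q N ≤ ‖∑ n ∈ Icc 1 N, (w n:ℂ) * (g n * (starRingEnd ℂ) (g n))‖ := by
      rw [hQ1]
      exact Complex.re_le_norm _
    have hexpand : ∑ n ∈ Icc 1 N, (w n:ℂ) * (g n * (starRingEnd ℂ) (g n))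
        = ∑ a ∈ range H, ∑ b ∈ range H, A a b := by
      have hg1 : ∀ n : ℕ, g n * (starRingEnd ℂ) (g n)
          = ∑ a ∈ range H, ∑ b ∈ range H, z (n+a) * (starRingEnd ℂ) (z (n+b)) := by
        intro n
        rw [hgdef]
        simp only
        rw [map_sum, Finset.sum_mul_sum]
      calc ∑ n ∈ Icc 1 N, (w n:ℂ) * (g n * (starRingEnd ℂ) (g n))
          = ∑ n ∈ Icc 1 N, ∑ a ∈ range H, ∑ b ∈ range H,
              (w n:ℂ) * (z (n+a) * (starRingEnd ℂ) (z (n+b))) := by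
            refine Finset.sum_congr rfl fun n _ => ?_
            rw [hg1 n, Finset.mul_sum]
            refine Finset.sum_congr rfl fun a _ => ?_
            rw [Finset.mul_sum]
        _ = ∑ a ∈ range H, ∑ b ∈ range H, A a b := by
            rw [Finset.sum_comm]
            refine Finset.sum_congr rfl fun a _ => ?_
            rw [Finset.sum_comm]
            simp only [hAdef]
    have hdiag : ∀ a : ℕ, A a a = ((W N : ℝ) : ℂ) := by
      intro a
      rw [hAdef]
      simp only
      have hone : ∀ n : ℕ, z (n+a) * (starRingEnd ℂ) (z (n+a)) = 1 := by
        intro n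
        rw [Complex.mul_conj, Complex.normSq_eq_norm_sq, hzn]
        norm_num
      calc ∑ n ∈ Icc 1 N, (w n:ℂ) * (z (n+a) * (starRingEnd ℂ) (z (n+a)))
          = ∑ n ∈ Icc 1 N, (w n:ℂ) := by
            refine Finset.sum_congr rfl fun n _ => ?_
            rw [hone n, mul_one]
        _ = ((W N : ℝ) : ℂ) := by rw [hWdef, Complex.ofReal_sum]
    have hToff : ∀ (μ : ℤ), (μ = m ∨ μ = -m) → ∀ (d : ℕ), 1 ≤ d → d ≤ H - 1 →
        ‖T μ d N‖ ≤ R N := by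
      intro μ hμ d hd1 hdH
      have hmem : d ∈ Icc 1 (H - 1) := Finset.mem_Icc.2 ⟨hd1, hdH⟩
      have hs := Finset.single_le_sum (f := fun d => ‖T m d N‖ + ‖T (-m) d N‖)
        (fun i _ => by positivity) hmem
      have hR : R N = ∑ d ∈ Icc 1 (H - 1), (‖T m d N‖ + ‖T (-m) d N‖) := by
        simp only [hRdef]
      cases hμ with
      | inl h =>
          rw [h, hR]
          have := norm_nonneg (T (-m) d N)
          linarith
      | inr h =>
          rw [h, hR]
          have := norm_nonneg (T m d N)
          linarith
    have hoff : ∀ a b : ℕ, a < H → b < H → a ≠ b → ‖A a b‖ ≤ R N + 3 * (H:ℝ) * w 1 := by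
      intro a b ha hb hab
      rcases Nat.lt_or_ge a b with hlt | hge
      · -- a < b : use μ = -m, d = b - a, shift by a
        set d := b - a with hd
        have hd1 : 1 ≤ d := by omega
        have hdH : d ≤ H - 1 := by omega
        set u : ℕ → ℂ := fun k => Complex.exp (2 * Real.pi * Complex.I * ((-m : ℤ) : ℂ) *
          ((x (k + d) : ℂ) - (x k : ℂ))) with hudef
        have hu : ∀ k, ‖u k‖ ≤ 1 := fun k => by
          simp only [hudef]; exact (norm_exp_one' (-m) (x (k + d)) (x k)).le
        have hTeq : (∑ n ∈ Icc 1 N, (w n : ℂ) * u n) = T (-m) d N := by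
          simp only [hudef, hTdef]
        have hrw : A a b = ∑ n ∈ Icc 1 N, (w n : ℂ) * u (n + a) := by
          simp only [hAdef, hudef]
          refine Finset.sum_congr rfl fun n _ => ?_
          congr 1
          simp only [hzdef]
          rw [exp_mul_conj m (x (n + a)) (x (n + b))]
          rw [show n + b = n + a + d by omega]
          congr 1
          push_cast
          ring
        have hshift := shift_sum w hpos hmono u hu a N
        have h3 : ‖A a b‖ ≤ ‖A a b - T (-m) d N‖ + ‖T (-m) d N‖ := by
          have := norm_add_le (A a b - T (-m) d N) (T (-m) d N)
          simpa using this
        have h4 : ‖A a b - T (-m) d N‖ ≤ 3 * (a:ℝ) * w 1 := by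
          rw [hrw, ← hTeq]
          exact hshift
        have h5 : ‖T (-m) d N‖ ≤ R N := hToff (-m) (Or.inr rfl) d hd1 hdH
        have haH : (a:ℝ) ≤ (H:ℝ) := by exact_mod_cast ha.le
        nlinarith
      · -- b < a : use μ = m, d = a - b, shift by b
        have hlt : b < a := by omega
        set d := a - b with hd
        have hd1 : 1 ≤ d := by omega
        have hdH : d ≤ H - 1 := by omega
        set u : ℕ → ℂ := fun k => Complex.exp (2 * Real.pi * Complex.I * (m : ℂ) *
          ((x (k + d) : ℂ) - (x k : ℂ))) with hudef
        have hu : ∀ k, ‖u k‖ ≤ 1 := fun k => by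
          simp only [hudef]; exact (norm_exp_one' m (x (k + d)) (x k)).le
        have hTeq : (∑ n ∈ Icc 1 N, (w n : ℂ) * u n) = T m d N := by
          simp only [hudef, hTdef]
        have hrw : A a b = ∑ n ∈ Icc 1 N, (w n : ℂ) * u (n + b) := by
          simp only [hAdef, hudef]
          refine Finset.sum_congr rfl fun n _ => ?_
          congr 1
          simp only [hzdef]
          rw [exp_mul_conj m (x (n + a)) (x (n + b))]
          rw [show n + a = n + b + d by omega]
        have hshift := shift_sum w hpos hmono u hu b N
        have h3 : ‖A a b‖ ≤ ‖A a b - T m d N‖ + ‖T m d N‖ := by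
          have := norm_add_le (A a b - T m d N) (T m d N)
          simpa using this
        have h4 : ‖A a b - T m d N‖ ≤ 3 * (b:ℝ) * w 1 := by
          rw [hrw, ← hTeq]
          exact hshift
        have h5 : ‖T m d N‖ ≤ R N := hToff m (Or.inl rfl) d hd1 hdH
        have hbH : (b:ℝ) ≤ (H:ℝ) := by exact_mod_cast hb.le
        nlinarith
    have hsum : Q N ≤ ∑ a ∈ range H, ∑ b ∈ range H, ‖A a b‖ := by
      refine hQ2.trans ?_
      rw [hexpand]
      refine (norm_sum_le _ _).trans (Finset.sum_le_sum fun a _ => norm_sum_le _ _)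
    have hWabs : ‖((W N : ℝ) : ℂ)‖ = W N := by
      rw [Complex.norm_real, Real.norm_eq_abs, abs_of_nonneg (hWnn N)]
    have hinner : ∀ a ∈ range H, ∑ b ∈ range H, ‖A a b‖
        ≤ W N + (H:ℝ) * (R N + 3 * (H:ℝ) * w 1) := by
      intro a ha
      rw [← Finset.add_sum_erase _ _ ha]
      have h1 : ‖A a a‖ = W N := by rw [hdiag a, hWabs]
      have h2 : ∑ b ∈ (range H).erase a, ‖A a b‖
          ≤ (H:ℝ) * (R N + 3 * (H:ℝ) * w 1) := by
        have hcb : ∀ b ∈ (range H).erase a, ‖A a b‖ ≤ R N + 3 * (H:ℝ) * w 1 := by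
          intro b hb
          exact hoff a b (mem_range.1 ha) (mem_range.1 (Finset.mem_of_mem_erase hb))
            (Ne.symm (Finset.ne_of_mem_erase hb))
        refine (Finset.sum_le_sum hcb).trans ?_
        rw [Finset.sum_const, nsmul_eq_mul]
        have hcard : ((((range H).erase a).card : ℝ)) ≤ (H:ℝ) := by
          have := Finset.card_erase_le (s := range H) (a := a)
          rw [Finset.card_range] at this
          exact_mod_cast this
        have hnn : (0:ℝ) ≤ R N + 3 * (H:ℝ) * w 1 :=
          add_nonneg (hRnn N) (by positivity)
        exact mul_le_mul_of_nonneg_right hcard hnn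
      linarith
    calc Q N ≤ ∑ a ∈ range H, ∑ b ∈ range H, ‖A a b‖ := hsum
      _ ≤ ∑ _a ∈ range H, (W N + (H:ℝ) * (R N + 3 * (H:ℝ) * w 1)) :=
          Finset.sum_le_sum hinner
      _ = (H:ℝ) * (W N + (H:ℝ) * (R N + 3 * (H:ℝ) * w 1)) := by
          rw [Finset.sum_const, Finset.card_range, nsmul_eq_mul]
      _ = (H:ℝ) * W N + (H:ℝ)^2 * (R N + 3 * (H:ℝ) * w 1) := by ring
  -- Step D : per-N bound for N ≥ 1
  have stepD : ∀ N : ℕ, 1 ≤ N → ‖((W N : ℝ) : ℂ)⁻¹ * Z N‖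
      ≤ Real.sqrt H / H + Real.sqrt (R N / W N)
        + Real.sqrt (3 * (H:ℝ) * w 1 / W N) + 3 * (H:ℝ) * w 1 / W N := by
    intro N hN
    have hWp : 0 < W N := hWposN N hN
    have hGb : ‖G N‖ ≤ Real.sqrt H * W N + (H:ℝ) * Real.sqrt (W N * R N)
        + (H:ℝ) * Real.sqrt (3 * (H:ℝ) * w 1 * W N) := by
      have h0 : ‖G N‖ = Real.sqrt (‖G N‖^2) := (Real.sqrt_sq (norm_nonneg _)).symm
      rw [h0]
      have hc1 : W N * Q N ≤ (H:ℝ) * W N^2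
          + ((H:ℝ)^2 * (W N * R N) + (H:ℝ)^2 * (3 * (H:ℝ) * w 1 * W N)) := by
        have h1 : W N * Q N ≤ W N * ((H:ℝ) * W N + (H:ℝ)^2 * (R N + 3 * (H:ℝ) * w 1)) :=
          mul_le_mul_of_nonneg_left (stepC N) (hWnn N)
        nlinarith [h1]
      calc Real.sqrt (‖G N‖^2) ≤ Real.sqrt (W N * Q N) := Real.sqrt_le_sqrt (stepB N)
        _ ≤ Real.sqrt ((H:ℝ) * W N^2
            + ((H:ℝ)^2 * (W N * R N) + (H:ℝ)^2 * (3 * (H:ℝ) * w 1 * W N))) :=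
            Real.sqrt_le_sqrt hc1
        _ ≤ Real.sqrt ((H:ℝ) * W N^2)
            + (Real.sqrt ((H:ℝ)^2 * (W N * R N))
              + Real.sqrt ((H:ℝ)^2 * (3 * (H:ℝ) * w 1 * W N))) := by
            have hq1 : (0:ℝ) ≤ (H:ℝ)^2 * (W N * R N) :=
              mul_nonneg (sq_nonneg _) (mul_nonneg (hWnn N) (hRnn N))
            have hq2 : (0:ℝ) ≤ (H:ℝ)^2 * (3 * (H:ℝ) * w 1 * W N) :=
              mul_nonneg (sq_nonneg _) (mul_nonneg (by positivity) (hWnn N))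
            exact (sqrtAdd (mul_nonneg hHposR.le (sq_nonneg _)) (add_nonneg hq1 hq2)).trans
              (add_le_add_right (sqrtAdd hq1 hq2) _)
        _ = Real.sqrt H * W N + ((H:ℝ) * Real.sqrt (W N * R N)
            + (H:ℝ) * Real.sqrt (3 * (H:ℝ) * w 1 * W N)) := by
            rw [Real.sqrt_mul (by positivity : (0:ℝ) ≤ (H:ℝ)), Real.sqrt_sq (hWnn N),
              Real.sqrt_mul (sq_nonneg (H:ℝ)), Real.sqrt_mul (sq_nonneg (H:ℝ)),
              Real.sqrt_sq hHposR.le]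
        _ = _ := by ring
    have hZb : (H:ℝ) * ‖Z N‖ ≤ Real.sqrt H * W N + (H:ℝ) * Real.sqrt (W N * R N)
        + (H:ℝ) * Real.sqrt (3 * (H:ℝ) * w 1 * W N) + 3 * (H:ℝ)^2 * w 1 := by
      have := stepA N
      linarith
    have hZb2 : ‖Z N‖ ≤ Real.sqrt H / H * W N + Real.sqrt (W N * R N)
        + Real.sqrt (3 * (H:ℝ) * w 1 * W N) + 3 * (H:ℝ) * w 1 := by
      rw [← mul_le_mul_iff_of_pos_left hHposR]
      calc (H:ℝ) * ‖Z N‖ ≤ Real.sqrt H * W N + (H:ℝ) * Real.sqrt (W N * R N)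
          + (H:ℝ) * Real.sqrt (3 * (H:ℝ) * w 1 * W N) + 3 * (H:ℝ)^2 * w 1 := hZb
        _ = (H:ℝ) * (Real.sqrt H / H * W N + Real.sqrt (W N * R N)
            + Real.sqrt (3 * (H:ℝ) * w 1 * W N) + 3 * (H:ℝ) * w 1) := by
            field_simp
    have hnorm : ‖((W N : ℝ) : ℂ)⁻¹ * Z N‖ = ‖Z N‖ / W N := by
      rw [norm_mul, norm_inv, Complex.norm_real, Real.norm_eq_abs, abs_of_pos hWp,
        div_eq_inv_mul]
    have e1 : Real.sqrt (R N / W N) = Real.sqrt (W N * R N) / W N := by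
      rw [show R N / W N = (W N * R N) / W N^2 by field_simp,
        Real.sqrt_div (mul_nonneg (hWnn N) (hRnn N)), Real.sqrt_sq hWp.le]
    have e2 : Real.sqrt (3 * (H:ℝ) * w 1 / W N)
        = Real.sqrt (3 * (H:ℝ) * w 1 * W N) / W N := by
      rw [show 3 * (H:ℝ) * w 1 / W N = (3 * (H:ℝ) * w 1 * W N) / W N^2 by field_simp,
        Real.sqrt_div (mul_nonneg (by positivity) (hWnn N)), Real.sqrt_sq hWp.le]
    rw [hnorm, e1, e2]
    calc ‖Z N‖ / W N ≤ (Real.sqrt H / H * W N + Real.sqrt (W N * R N)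
        + Real.sqrt (3 * (H:ℝ) * w 1 * W N) + 3 * (H:ℝ) * w 1) / W N :=
          (div_le_div_iff_of_pos_right hWp).2 hZb2
      _ = Real.sqrt H / H + Real.sqrt (W N * R N) / W N
          + Real.sqrt (3 * (H:ℝ) * w 1 * W N) / W N + 3 * (H:ℝ) * w 1 / W N := by
          field_simp
  -- limits
  have hWtop : Tendsto W atTop atTop := hW
  have hTd : ∀ (μ : ℤ), μ ≠ 0 → ∀ d : ℕ, 0 < d →
      Tendsto (fun N => ‖T μ d N‖ / W N) atTop (𝓝 0) := by
    intro μ hμ d hd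
    have h1 := hdiff d hd μ hμ
    have h2 := tendsto_zero_iff_norm_tendsto_zero.1 h1
    refine Filter.Tendsto.congr' ?_ h2
    filter_upwards [eventually_ge_atTop 1] with N hN
    have hWp : 0 < W N := hWposN N hN
    have hWeq : (∑ n ∈ Icc 1 N, w n) = W N := by simp only [hWdef]
    have hTeq : (∑ n ∈ Icc 1 N, (w n : ℂ) *
        Complex.exp (2 * Real.pi * Complex.I * μ * (x (n + d) - x n))) = T μ d N := by
      simp only [hTdef]
    rw [hWeq, hTeq, norm_mul, norm_inv, Complex.norm_real, Real.norm_eq_abs,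
      abs_of_pos hWp, div_eq_inv_mul]
  have hRW : Tendsto (fun N => R N / W N) atTop (𝓝 0) := by
    have heq : (fun N => R N / W N)
        = fun N => ∑ d ∈ Icc 1 (H - 1), (‖T m d N‖ / W N + ‖T (-m) d N‖ / W N) := by
      funext N
      simp only [hRdef]
      rw [Finset.sum_div]
      exact Finset.sum_congr rfl fun d _ => add_div _ _ _
    rw [heq]
    have h0 := tendsto_finset_sum (Icc 1 (H - 1))
      (f := fun (d : ℕ) (N : ℕ) => ‖T m d N‖ / W N + ‖T (-m) d N‖ / W N)
      (x := atTop) (a := fun _ => 0) ?_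
    · simpa using h0
    · intro d hd
      have hd1 : 0 < d := by
        have := (Finset.mem_Icc.1 hd).1; omega
      have := (hTd m hm d hd1).add (hTd (-m) (neg_ne_zero.2 hm) d hd1)
      simpa using this
  have hconst : Tendsto (fun N => 3 * (H:ℝ) * w 1 / W N) atTop (𝓝 0) :=
    Tendsto.div_atTop tendsto_const_nhds hWtop
  have hB : Tendsto (fun N => Real.sqrt H / H + Real.sqrt (R N / W N)
      + Real.sqrt (3 * (H:ℝ) * w 1 / W N) + 3 * (H:ℝ) * w 1 / W N) atTop
      (𝓝 (Real.sqrt H / H + Real.sqrt 0 + Real.sqrt 0 + 0)) :=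
    ((tendsto_const_nhds.add hRW.sqrt).add hconst.sqrt).add hconst
  rw [Real.sqrt_zero, add_zero, add_zero, add_zero] at hB
  have hlt : Real.sqrt H / H < ε := by linarith
  have hev1 := hB.eventually_lt_const hlt
  filter_upwards [hev1, eventually_ge_atTop 1] with N h1 h2
  have hfin := lt_of_le_of_lt (stepD N h2) h1
  simp only [hWdef, hZdef, hzdef] at hfin
  exact hfin
end

section
/- The sequence (log n)_{n≥1} is (1/n)-uniformly distributed mod 1: for every interval [a,b) ⊆ [0,1), (1/log N) Σ_{n=1}^N (1/n)·1_{[a,b)}({log n}) → b − a. -/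
open Filter Finset Topology

lemma aux_log_diff_le (x : ℝ) (hx : 0 < x) : Real.log (x+1) - Real.log x ≤ x⁻¹ := by
  have h := Real.log_le_sub_one_of_pos (x := (x+1)/x) (by positivity)
  rw [Real.log_div (by positivity) (ne_of_gt hx)] at h
  have h2 : (x+1)/x - 1 = x⁻¹ := by field_simp; ring
  linarith

lemma aux_inv_le_log_diff (x : ℝ) (hx : 0 < x) : (x+1)⁻¹ ≤ Real.log (x+1) - Real.log x := by
  have h := Real.log_le_sub_one_of_pos (x := x/(x+1)) (by positivity)
  rw [Real.log_div (ne_of_gt hx) (by positivity)] at h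
  have h2 : x/(x+1) - 1 = -(x+1)⁻¹ := by field_simp; ring
  linarith

lemma aux_sum_inv_le_log (s : ℕ) (hs : 2 ≤ s) :
    ∀ t : ℕ, s ≤ t + 1 → ∑ n ∈ Icc s t, ((n:ℝ))⁻¹ ≤ Real.log t - Real.log ((s:ℝ) - 1) := by
  intro t
  induction t with
  | zero => intro h; omega
  | succ t ih =>
    intro h
    rcases Nat.lt_or_ge t (s - 1) with h1 | h1
    · -- s = t + 2, Icc s (t+1) empty
      have hst : s = t + 2 := by omega
      subst hst
      rw [Finset.Icc_eq_empty (by omega), Finset.sum_empty]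
      have : ((t:ℝ) + 2) - 1 = (t:ℝ) + 1 := by ring
      push_cast
      rw [this]
      simp
    · have hst : s ≤ t + 1 := by omega
      have ht1 : 1 ≤ t := by omega
      rw [Finset.sum_Icc_succ_top hst]
      have h3 := ih (by omega)
      have h4 := aux_inv_le_log_diff (t:ℝ) (by exact_mod_cast ht1)
      push_cast
      linarith

lemma aux_log_le_sum_inv (s : ℕ) (hs : 1 ≤ s) :
    ∀ t : ℕ, Real.log ((t:ℝ)+1) - Real.log s ≤ ∑ n ∈ Icc s t, ((n:ℝ))⁻¹ := by
  intro t
  induction t with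
  | zero =>
    rw [Finset.Icc_eq_empty (by omega), Finset.sum_empty]
    have : Real.log ((0:ℕ)+1:ℝ) = 0 := by norm_num
    have h2 : 0 ≤ Real.log s := Real.log_nonneg (by exact_mod_cast hs)
    push_cast
    norm_num
    linarith
  | succ t ih =>
    rcases Nat.lt_or_ge (t+1) s with h1 | h1
    · rw [Finset.Icc_eq_empty (by omega), Finset.sum_empty]
      have : Real.log ((t:ℝ)+1+1) ≤ Real.log s := by
        apply Real.log_le_log (by positivity)
        have : (t:ℝ) + 1 + 1 ≤ s := by exact_mod_cast (by omega : t + 2 ≤ s)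
        linarith
      push_cast
      linarith
    · rw [Finset.sum_Icc_succ_top h1]
      have h4 := aux_log_diff_le ((t:ℝ)+1) (by positivity)
      push_cast
      push_cast at ih
      linarith

lemma aux_geom_le (F : Finset ℕ) : ∑ k ∈ F, Real.exp (-(k:ℝ)) ≤ 2 := by
  classical
  obtain ⟨n, hn⟩ : ∃ n, F ⊆ Finset.range n := ⟨F.sup id + 1, fun x hx => Finset.mem_range.mpr (Nat.lt_succ_of_le (Finset.le_sup (f := id) hx))⟩
  have h1 : ∑ k ∈ F, Real.exp (-(k:ℝ)) ≤ ∑ k ∈ Finset.range n, Real.exp (-(k:ℝ)) :=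
    Finset.sum_le_sum_of_subset_of_nonneg hn (fun i _ _ => (Real.exp_pos _).le)
  have h2 : ∀ k : ℕ, Real.exp (-(k:ℝ)) = (Real.exp (-1))^k := by
    intro k
    rw [← Real.exp_nat_mul]
    norm_num
  have hr0 : (0:ℝ) ≤ Real.exp (-1) := (Real.exp_pos _).le
  have hr : Real.exp (-1) ≤ 1/2 := by
    rw [Real.exp_neg]
    rw [inv_le_comm₀ (Real.exp_pos 1) (by norm_num)]
    have := Real.exp_one_gt_d9
    norm_num
    linarith
  have h3 : ∑ k ∈ Finset.range n, Real.exp (-(k:ℝ)) = ∑ k ∈ Finset.range n, (Real.exp (-1))^k := by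
    exact Finset.sum_congr rfl (fun k _ => h2 k)
  rw [h3] at h1
  have h4 : ∑ k ∈ Finset.range n, (Real.exp (-1))^k ≤ 2 := by
    rw [geom_sum_eq (by intro h; rw [h] at hr; norm_num at hr)]
    rw [div_le_iff_of_neg (by linarith)]
    nlinarith [pow_nonneg hr0 n]
  linarith

open Filter Finset Topology

theorem log_n_one_over_n_ud :
    ∀ a b : ℝ, 0 ≤ a → a < b → b ≤ 1 →
      Tendsto (fun N : ℕ => (Real.log N)⁻¹ *
        ∑ n ∈ Icc 1 N, (n : ℝ)⁻¹ *
          (if Int.fract (Real.log n) ∈ Set.Ico a b then (1 : ℝ) else 0))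
        atTop (𝓝 (b - a)) := by
  intro a b ha hab hb
  classical
  set f : ℕ → ℝ := fun n => (n : ℝ)⁻¹ *
      (if Int.fract (Real.log n) ∈ Set.Ico a b then (1 : ℝ) else 0) with hf
  have hfnonneg : ∀ n, 0 ≤ f n := by
    intro n
    simp only [hf]
    split <;> positivity
  set s : ℕ → ℕ := fun k => ⌈Real.exp (k + a)⌉₊ with hsdef
  set t : ℕ → ℕ := fun k => ⌈Real.exp (k + b)⌉₊ - 1 with htdef
  have hs_le : ∀ k : ℕ, Real.exp (k + a) ≤ (s k : ℝ) := fun k => Nat.le_ceil _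
  have hs_lt : ∀ k : ℕ, (s k : ℝ) < Real.exp (k + a) + 1 :=
    fun k => Nat.ceil_lt_add_one (Real.exp_pos _).le
  have hs_pos : ∀ k : ℕ, 1 ≤ s k := fun k => Nat.ceil_pos.mpr (Real.exp_pos _)
  have ht_add : ∀ k : ℕ, t k + 1 = ⌈Real.exp (k + b)⌉₊ :=
    fun k => Nat.sub_add_cancel (Nat.ceil_pos.mpr (Real.exp_pos _))
  have ht_lt : ∀ k : ℕ, (t k : ℝ) < Real.exp (k + b) := by
    intro k
    have h1 : (⌈Real.exp (k + b)⌉₊ : ℝ) < Real.exp (k + b) + 1 :=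
      Nat.ceil_lt_add_one (Real.exp_pos _).le
    have h2 : ((t k : ℕ) : ℝ) + 1 = (⌈Real.exp (k + b)⌉₊ : ℝ) := by
      exact_mod_cast congrArg (Nat.cast (R := ℝ)) (ht_add k)
    linarith
  have ht1_ge : ∀ k : ℕ, Real.exp (k + b) ≤ (t k : ℝ) + 1 := by
    intro k
    have h1 := Nat.le_ceil (Real.exp (k + b))
    have h2 : ((t k : ℕ) : ℝ) + 1 = (⌈Real.exp (k + b)⌉₊ : ℝ) := by
      exact_mod_cast congrArg (Nat.cast (R := ℝ)) (ht_add k)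
    linarith
  -- block membership gives indicator = 1
  have hblock : ∀ k n : ℕ, n ∈ Icc (s k) (t k) → Int.fract (Real.log n) ∈ Set.Ico a b := by
    intro k n hn
    obtain ⟨h1, h2⟩ := Finset.mem_Icc.mp hn
    have hle : Real.exp (k + a) ≤ (n : ℝ) := le_trans (hs_le k) (by exact_mod_cast h1)
    have hlt : (n : ℝ) < Real.exp (k + b) := lt_of_le_of_lt (by exact_mod_cast h2) (ht_lt k)
    have hnpos : (0 : ℝ) < n := lt_of_lt_of_le (Real.exp_pos _) hle
    have hlog1 : (k : ℝ) + a ≤ Real.log n := (Real.le_log_iff_exp_le hnpos).mpr hle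
    have hlog2 : Real.log n < (k : ℝ) + b := (Real.log_lt_iff_lt_exp hnpos).mpr hlt
    have hfloor : ⌊Real.log n⌋ = (k : ℤ) := by
      rw [Int.floor_eq_iff]
      constructor
      · push_cast; linarith
      · push_cast; linarith
    have hfract : Int.fract (Real.log n) = Real.log n - (k : ℝ) := by
      rw [Int.fract, hfloor]; push_cast; ring
    rw [hfract]
    exact ⟨by linarith, by linarith⟩
  -- converse
  have hmem : ∀ n : ℕ, 1 ≤ n → Int.fract (Real.log n) ∈ Set.Ico a b →
      n ∈ Icc (s (⌊Real.log n⌋.toNat)) (t (⌊Real.log n⌋.toNat)) := by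
    intro n hn hfr
    have hnpos : (0 : ℝ) < n := by exact_mod_cast hn
    have hlognn : 0 ≤ Real.log n := Real.log_nonneg (by exact_mod_cast hn)
    have hkfloor : ((⌊Real.log n⌋.toNat : ℕ) : ℤ) = ⌊Real.log n⌋ :=
      Int.toNat_of_nonneg (Int.floor_nonneg.mpr hlognn)
    set k : ℕ := ⌊Real.log n⌋.toNat with hk
    have hkr : (k : ℝ) = ((⌊Real.log n⌋ : ℤ) : ℝ) := by exact_mod_cast hkfloor
    obtain ⟨hfr1, hfr2⟩ := hfr
    rw [Int.fract] at hfr1 hfr2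
    have h1 : (k : ℝ) + a ≤ Real.log n := by rw [hkr]; linarith
    have h2 : Real.log n < (k : ℝ) + b := by rw [hkr]; linarith
    have hexp1 : Real.exp ((k : ℝ) + a) ≤ (n : ℝ) := by
      have := Real.exp_le_exp.mpr h1
      rwa [Real.exp_log hnpos] at this
    have hexp2 : (n : ℝ) < Real.exp ((k : ℝ) + b) := by
      have := Real.exp_lt_exp.mpr h2
      rwa [Real.exp_log hnpos] at this
    rw [Finset.mem_Icc]
    constructor
    · exact Nat.ceil_le.mpr hexp1
    · have h3 : (n : ℝ) < (⌈Real.exp ((k : ℝ) + b)⌉₊ : ℝ) :=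
        lt_of_lt_of_le hexp2 (Nat.le_ceil _)
      have h4 : n < ⌈Real.exp ((k : ℝ) + b)⌉₊ := by exact_mod_cast h3
      have := ht_add k
      omega
  -- block sum upper bound
  have hupper_block : ∀ k : ℕ,
      ∑ n ∈ Icc (s k) (t k), ((n:ℝ))⁻¹ ≤ (b - a) + 2 * Real.exp (-(k : ℝ)) := by
    intro k
    rcases Nat.eq_zero_or_pos k with hk0 | hk1
    · subst hk0
      have ht02 : t 0 ≤ 2 := by
        have h1 : Real.exp ((0:ℕ) + b) ≤ 3 := by
          have h2 : Real.exp ((0:ℕ) + b) ≤ Real.exp 1 := by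
            apply Real.exp_le_exp.mpr; push_cast; linarith
          have := Real.exp_one_lt_d9
          linarith
        have h3 : ⌈Real.exp ((0:ℕ) + b)⌉₊ ≤ 3 := Nat.ceil_le.mpr (by exact_mod_cast h1)
        have := ht_add 0
        omega
      have hsub : Icc (s 0) (t 0) ⊆ Icc (1:ℕ) 2 := by
        intro n hn
        rw [Finset.mem_Icc] at *
        exact ⟨le_trans (hs_pos 0) hn.1, le_trans hn.2 ht02⟩
      have h5 : ∑ n ∈ Icc (s 0) (t 0), ((n:ℝ))⁻¹ ≤ ∑ n ∈ Icc (1:ℕ) 2, ((n:ℝ))⁻¹ :=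
        Finset.sum_le_sum_of_subset_of_nonneg hsub (fun i _ _ => by positivity)
      have h6 : ∑ n ∈ Icc (1:ℕ) 2, ((n:ℝ))⁻¹ = (1:ℝ) + 2⁻¹ := by
        have heq12 : (Icc (1:ℕ) 2) = {1, 2} := by decide
        rw [heq12, Finset.sum_pair (by norm_num)]
        norm_num
      have h7 : Real.exp (-((0:ℕ):ℝ)) = 1 := by norm_num
      have h8 : (2:ℝ) * Real.exp (-((0:ℕ):ℝ)) = 2 := by rw [h7]; ring
      rw [h8]
      linarith
    · by_cases hst : s k ≤ t k
      · have hexpk : Real.exp 1 ≤ Real.exp ((k:ℝ) + a) := by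
          apply Real.exp_le_exp.mpr
          have : (1:ℝ) ≤ (k:ℝ) := by exact_mod_cast hk1
          linarith
        have he1 := Real.exp_one_gt_d9
        have hs2r : (2:ℝ) < (s k : ℝ) := lt_of_lt_of_le (by linarith) (hs_le k)
        have hs2 : 2 ≤ s k := by exact_mod_cast hs2r.le
        have h1 := aux_sum_inv_le_log (s k) hs2 (t k) (by omega)
        have htpos : (0:ℝ) < (t k : ℝ) := by
          have : (0:ℕ) < t k := lt_of_lt_of_le (by omega) hst
          exact_mod_cast this
        have hlogt : Real.log (t k) ≤ (k:ℝ) + b :=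
          le_of_lt ((Real.log_lt_iff_lt_exp htpos).mpr (ht_lt k))
        have hxpos : (0:ℝ) < Real.exp ((k:ℝ) + a) - 1 := by linarith
        have hlogs : Real.log (Real.exp ((k:ℝ) + a) - 1) ≤ Real.log ((s k : ℝ) - 1) := by
          apply Real.log_le_log hxpos
          have := hs_le k
          linarith
        have haux : Real.log (Real.exp ((k:ℝ)+a) - 1 + 1) - Real.log (Real.exp ((k:ℝ)+a) - 1)
            ≤ (Real.exp ((k:ℝ)+a) - 1)⁻¹ := aux_log_diff_le _ hxpos
        have heq : Real.exp ((k:ℝ)+a) - 1 + 1 = Real.exp ((k:ℝ)+a) := by ring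
        rw [heq, Real.log_exp] at haux
        have hbound : (Real.exp ((k:ℝ)+a) - 1)⁻¹ ≤ 2 * Real.exp (-(k:ℝ)) := by
          have hek : (2:ℝ) ≤ Real.exp (k:ℝ) := by
            have : Real.exp 1 ≤ Real.exp (k:ℝ) := by
              apply Real.exp_le_exp.mpr
              exact_mod_cast hk1
            linarith
          have hea : Real.exp (k:ℝ) ≤ Real.exp ((k:ℝ) + a) := by
            apply Real.exp_le_exp.mpr; linarith
          have h9 : Real.exp (k:ℝ) / 2 ≤ Real.exp ((k:ℝ)+a) - 1 := by linarith
          have h10 : (Real.exp ((k:ℝ)+a) - 1)⁻¹ ≤ (Real.exp (k:ℝ) / 2)⁻¹ := by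
            apply inv_anti₀ (by positivity) h9
          have h11 : (Real.exp (k:ℝ) / 2)⁻¹ = 2 * Real.exp (-(k:ℝ)) := by
            rw [Real.exp_neg]
            field_simp
          linarith
        linarith
      · rw [Finset.Icc_eq_empty hst, Finset.sum_empty]
        have := Real.exp_pos (-(k:ℝ))
        linarith
  -- block sum lower bound
  have hlower_block : ∀ k : ℕ,
      (b - a) - Real.exp (-(k : ℝ)) ≤ ∑ n ∈ Icc (s k) (t k), ((n:ℝ))⁻¹ := by
    intro k
    have h1 := aux_log_le_sum_inv (s k) (hs_pos k) (t k)
    have h2 : (k:ℝ) + b ≤ Real.log ((t k : ℝ) + 1) := by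
      have := Real.log_le_log (Real.exp_pos _) (ht1_ge k)
      rwa [Real.log_exp] at this
    have h3 : Real.log (s k) ≤ (k:ℝ) + a + Real.exp (-((k:ℝ) + a)) := by
      have hxpos : (0:ℝ) < Real.exp ((k:ℝ) + a) := Real.exp_pos _
      have h4 : Real.log (s k) ≤ Real.log (Real.exp ((k:ℝ)+a) + 1) := by
        apply Real.log_le_log (by exact_mod_cast Nat.cast_pos.mpr (hs_pos k))
        linarith [hs_lt k]
      have h5 := aux_log_diff_le (Real.exp ((k:ℝ)+a)) hxpos
      rw [Real.log_exp, ← Real.exp_neg] at h5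
      linarith
    have h6 : Real.exp (-((k:ℝ) + a)) ≤ Real.exp (-(k:ℝ)) := by
      apply Real.exp_le_exp.mpr; linarith
    linarith
  -- disjointness of blocks
  have hdisj_lt : ∀ k1 k2 : ℕ, k1 < k2 → t k1 < s k2 := by
    intro k1 k2 hlt
    have h1 : (t k1 : ℝ) < Real.exp (k1 + b) := ht_lt k1
    have h2 : Real.exp ((k1:ℝ) + b) ≤ Real.exp ((k2:ℝ) + a) := by
      apply Real.exp_le_exp.mpr
      have : (k1:ℝ) + 1 ≤ (k2:ℝ) := by exact_mod_cast hlt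
      linarith
    have h3 : (t k1 : ℝ) < (s k2 : ℝ) := lt_of_lt_of_le (lt_of_lt_of_le h1 h2) (hs_le k2)
    exact_mod_cast h3
  have hdisj : ∀ (u : Finset ℕ), Set.PairwiseDisjoint ↑u (fun k => Icc (s k) (t k)) := by
    intro u k1 _ k2 _ hne
    rw [Function.onFun, Finset.disjoint_left]
    intro n hn1 hn2
    rw [Finset.mem_Icc] at hn1 hn2
    rcases lt_trichotomy k1 k2 with h | h | h
    · have := hdisj_lt k1 k2 h; omega
    · exact hne h
    · have := hdisj_lt k2 k1 h; omega
  -- upper bound for S N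
  have hupper : ∀ N : ℕ, 1 ≤ N → ∑ n ∈ Icc 1 N, f n ≤ (b - a) * Real.log N + 5 := by
    intro N hN
    set K : ℕ := (⌊Real.log N⌋).toNat with hK
    have hlogN0 : 0 ≤ Real.log N := Real.log_nonneg (by exact_mod_cast hN)
    have hKle : (K : ℝ) ≤ Real.log N := by
      have h1 : ((K : ℕ) : ℤ) = ⌊Real.log N⌋ := Int.toNat_of_nonneg (Int.floor_nonneg.mpr hlogN0)
      have h2 : ((K : ℕ) : ℝ) = ((⌊Real.log N⌋ : ℤ) : ℝ) := by exact_mod_cast h1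
      rw [h2]; exact Int.floor_le _
    set U : Finset ℕ := (Finset.range (K + 1)).biUnion (fun k => Icc (s k) (t k)) with hU
    have hstep1 : ∑ n ∈ Icc 1 N, f n = ∑ n ∈ (Icc (1:ℕ) N).filter
        (fun n : ℕ => Int.fract (Real.log n) ∈ Set.Ico a b), f n := by
      symm
      apply Finset.sum_filter_of_ne
      intro n _ hfn
      simp only [hf] at hfn
      by_contra hc
      rw [if_neg hc, mul_zero] at hfn
      exact hfn rfl
    have hsubU : (Icc (1:ℕ) N).filter
        (fun n : ℕ => Int.fract (Real.log n) ∈ Set.Ico a b) ⊆ U := by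
      intro n hn
      rw [Finset.mem_filter, Finset.mem_Icc] at hn
      obtain ⟨⟨hn1, hn2⟩, hfr⟩ := hn
      rw [hU, Finset.mem_biUnion]
      refine ⟨⌊Real.log n⌋.toNat, ?_, hmem n hn1 hfr⟩
      rw [Finset.mem_range]
      have hmono : ⌊Real.log n⌋ ≤ ⌊Real.log N⌋ := by
        apply Int.floor_le_floor
        apply Real.log_le_log (by exact_mod_cast hn1)
        exact_mod_cast hn2
      have := Int.toNat_le_toNat hmono
      omega
    have hstep2 : ∑ n ∈ Icc 1 N, f n ≤ ∑ n ∈ U, f n := by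
      rw [hstep1]
      exact Finset.sum_le_sum_of_subset_of_nonneg hsubU (fun i _ _ => hfnonneg i)
    have hstep3 : ∑ n ∈ U, f n ≤ ∑ k ∈ Finset.range (K+1), ((b-a) + 2 * Real.exp (-(k:ℝ))) := by
      rw [hU, Finset.sum_biUnion (hdisj _)]
      apply Finset.sum_le_sum
      intro k _
      refine le_trans ?_ (hupper_block k)
      apply Finset.sum_le_sum
      intro n _
      simp only [hf]
      split
      · rw [mul_one]
      · rw [mul_zero]; positivity
    have hstep4 : ∑ k ∈ Finset.range (K+1), ((b-a) + 2 * Real.exp (-(k:ℝ)))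
        ≤ (K+1) * (b-a) + 4 := by
      rw [Finset.sum_add_distrib, Finset.sum_const, Finset.card_range, nsmul_eq_mul]
      have := aux_geom_le (Finset.range (K+1))
      rw [← Finset.mul_sum]
      push_cast
      linarith
    have hfinal : ((K:ℝ)+1) * (b-a) + 4 ≤ (b-a) * Real.log N + 5 := by
      have h1 : (K:ℝ) * (b-a) ≤ Real.log N * (b-a) :=
        mul_le_mul_of_nonneg_right hKle (by linarith)
      nlinarith
    push_cast at hstep4
    linarith
  -- lower bound for S N
  have hlower : ∀ N : ℕ, 3 ≤ N → (b - a) * Real.log N - 4 ≤ ∑ n ∈ Icc 1 N, f n := by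
    intro N hN
    have hNpos : (0:ℝ) < N := by exact_mod_cast (by omega : 0 < N)
    have hlog1 : (1:ℝ) ≤ Real.log N := by
      rw [Real.le_log_iff_exp_le hNpos]
      have := Real.exp_one_lt_d9
      have h3 : (3:ℝ) ≤ (N:ℝ) := by exact_mod_cast hN
      linarith
    set K : ℕ := (⌊Real.log N⌋).toNat with hK
    have hK1 : 1 ≤ K := by
      have : (1:ℤ) ≤ ⌊Real.log N⌋ := Int.le_floor.mpr (by exact_mod_cast hlog1)
      omega
    have hKr : ((K:ℕ):ℝ) = ((⌊Real.log N⌋:ℤ):ℝ) := by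
      exact_mod_cast Int.toNat_of_nonneg (Int.floor_nonneg.mpr (by linarith))
    have hKle : (K : ℝ) ≤ Real.log N := by rw [hKr]; exact Int.floor_le _
    have hKge : Real.log N - 1 ≤ (K:ℝ) := by
      rw [hKr]
      have := Int.sub_one_lt_floor (Real.log N)
      linarith
    set K' : ℕ := K - 1 with hK'
    have hK'r : (K':ℝ) = (K:ℝ) - 1 := by
      rw [hK']; push_cast [hK1]; ring
    set U' : Finset ℕ := (Finset.Icc 1 K').biUnion (fun k => Icc (s k) (t k)) with hU'
    have hsubU' : U' ⊆ Icc 1 N := by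
      intro n hn
      rw [hU', Finset.mem_biUnion] at hn
      obtain ⟨k, hk, hnk⟩ := hn
      rw [Finset.mem_Icc] at hk hnk ⊢
      constructor
      · exact le_trans (hs_pos k) hnk.1
      · have h1 : (n:ℝ) ≤ (t k : ℝ) := by exact_mod_cast hnk.2
        have h2 : (t k : ℝ) < Real.exp ((k:ℝ) + b) := ht_lt k
        have h3 : Real.exp ((k:ℝ) + b) ≤ Real.exp (Real.log N) := by
          apply Real.exp_le_exp.mpr
          have hkK : (k:ℝ) ≤ (K':ℝ) := by exact_mod_cast hk.2
          rw [hK'r] at hkK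
          linarith
        rw [Real.exp_log hNpos] at h3
        have : (n:ℝ) < (N:ℝ) := by linarith
        exact_mod_cast this.le
    have hstep1 : ∑ n ∈ U', f n ≤ ∑ n ∈ Icc 1 N, f n :=
      Finset.sum_le_sum_of_subset_of_nonneg hsubU' (fun i _ _ => hfnonneg i)
    have hstep2 : ∑ n ∈ U', f n = ∑ k ∈ Finset.Icc 1 K', ∑ n ∈ Icc (s k) (t k), ((n:ℝ))⁻¹ := by
      rw [hU', Finset.sum_biUnion (hdisj _)]
      apply Finset.sum_congr rfl
      intro k _
      apply Finset.sum_congr rfl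
      intro n hn
      simp only [hf]
      rw [if_pos (hblock k n hn), mul_one]
    have hstep3 : ∑ k ∈ Finset.Icc 1 K', ((b-a) - Real.exp (-(k:ℝ)))
        ≤ ∑ k ∈ Finset.Icc 1 K', ∑ n ∈ Icc (s k) (t k), ((n:ℝ))⁻¹ :=
      Finset.sum_le_sum (fun k _ => hlower_block k)
    have hstep4 : (K':ℝ) * (b-a) - 2 ≤ ∑ k ∈ Finset.Icc 1 K', ((b-a) - Real.exp (-(k:ℝ))) := by
      rw [Finset.sum_sub_distrib, Finset.sum_const, Nat.card_Icc, nsmul_eq_mul]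
      have hgeom := aux_geom_le (Finset.Icc 1 K')
      have hcard : ((K' + 1 - 1 : ℕ) : ℝ) = (K' : ℝ) := by push_cast; ring
      rw [hcard]
      linarith
    have hfinal : (b - a) * Real.log N - 4 ≤ (K':ℝ) * (b-a) - 2 := by
      have h1 : Real.log N - 2 ≤ (K':ℝ) := by rw [hK'r]; linarith
      nlinarith
    linarith
  -- squeeze
  have hinv : Tendsto (fun N : ℕ => (Real.log N)⁻¹) atTop (𝓝 0) :=
    Tendsto.inv_tendsto_atTop (Real.tendsto_log_atTop.comp tendsto_natCast_atTop_atTop)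
  apply tendsto_of_tendsto_of_tendsto_of_le_of_le'
    (g := fun N : ℕ => (b-a) - 4 * (Real.log N)⁻¹)
    (h := fun N : ℕ => (b-a) + 5 * (Real.log N)⁻¹)
  · have := (tendsto_const_nhds (x := b - a) (f := atTop (α := ℕ))).sub (hinv.const_mul 4)
    simpa using this
  · have := (tendsto_const_nhds (x := b - a) (f := atTop (α := ℕ))).add (hinv.const_mul 5)
    simpa using this
  · filter_upwards [eventually_ge_atTop 3] with N hN
    have hNpos : (0:ℝ) < N := by exact_mod_cast (by omega : 0 < N)
    have hlogpos : (0:ℝ) < Real.log N := by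
      rw [Real.lt_log_iff_exp_lt hNpos]
      have := Real.exp_one_lt_d9
      have h3 : (3:ℝ) ≤ (N:ℝ) := by exact_mod_cast hN
      calc Real.exp 0 = 1 := Real.exp_zero
        _ < (N:ℝ) := by linarith
    have hlo := hlower N hN
    have h1 := mul_le_mul_of_nonneg_left hlo (inv_nonneg.mpr hlogpos.le)
    have h2 : (Real.log N)⁻¹ * ((b - a) * Real.log N - 4)
        = (b - a) - 4 * (Real.log N)⁻¹ := by
      field_simp
    rw [h2] at h1
    exact h1
  · filter_upwards [eventually_ge_atTop 3] with N hN
    have hNpos : (0:ℝ) < N := by exact_mod_cast (by omega : 0 < N)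
    have hlogpos : (0:ℝ) < Real.log N := by
      rw [Real.lt_log_iff_exp_lt hNpos]
      have := Real.exp_one_lt_d9
      have h3 : (3:ℝ) ≤ (N:ℝ) := by exact_mod_cast hN
      calc Real.exp 0 = 1 := Real.exp_zero
        _ < (N:ℝ) := by linarith
    have hup := hupper N (by omega)
    have h1 := mul_le_mul_of_nonneg_left hup (inv_nonneg.mpr hlogpos.le)
    have h2 : (Real.log N)⁻¹ * ((b - a) * Real.log N + 5)
        = (b - a) + 5 * (Real.log N)⁻¹ := by
      field_simp
    rw [h2] at h1
    exact h1
end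

section
/- Let (w(n)) be positive non-increasing with W(N) → ∞. If (x_n) is a monotone real sequence that is w(n)-uniformly distributed mod 1, then limsup_{n→∞} |x_n| / log W(n) = ∞. -/
open Filter Finset Topology

set_option maxHeartbeats 2000000 in
theorem niederreiter_necessary_condition
    (w : ℕ → ℝ) (hpos : ∀ n, 0 < w n) (hmono : ∀ n, w (n + 1) ≤ w n)
    (hW : Tendsto (fun N : ℕ => ∑ n ∈ Icc 1 N, w n) atTop atTop)
    (x : ℕ → ℝ) (hxmono : Monotone x ∨ Antitone x)
    (hud : ∀ m : ℤ, m ≠ 0 →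
      Tendsto (fun N : ℕ => ((∑ n ∈ Icc 1 N, w n : ℝ) : ℂ)⁻¹ *
        ∑ n ∈ Icc 1 N, (w n : ℂ) *
          Complex.exp (2 * Real.pi * Complex.I * m * x n)) atTop (𝓝 0)) :
    ∀ M : ℝ, ∃ᶠ n : ℕ in atTop,
      M < |x n| / Real.log (∑ k ∈ Icc 1 n, w k) := by
  set W : ℕ → ℝ := fun N => ∑ n ∈ Icc 1 N, w n with hWdef
  set S : ℕ → ℂ := fun N => ∑ n ∈ Icc 1 N, (w n : ℂ) *
      Complex.exp (2 * Real.pi * Complex.I * (x n)) with hSdef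
  intro M
  by_contra hcon
  rw [Filter.not_frequently] at hcon
  -- basic facts
  have hWpos : ∀ n, 1 ≤ n → 0 < W n := fun n hn =>
    Finset.sum_pos (fun i _ => hpos i) (Finset.nonempty_Icc.2 hn)
  have hWmono : Monotone W := fun a b hab =>
    Finset.sum_le_sum_of_subset_of_nonneg (Finset.Icc_subset_Icc_right hab)
      (fun i _ _ => (hpos i).le)
  have hwanti : Antitone w := antitone_nat_of_succ_le hmono
  set M₁ : ℝ := max M 1 with hM₁def
  have hM₁ : (1:ℝ) ≤ M₁ := le_max_right _ _
  have hM₁pos : (0:ℝ) < M₁ := by linarith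
  set ℓ : ℝ := 1 / (16 * M₁) with hℓdef
  have hℓpos : 0 < ℓ := by positivity
  have hℓ1 : ℓ ≤ 1 := by
    rw [hℓdef, div_le_one (by positivity)]; linarith
  have hMℓ : M₁ * ℓ = 1 / 16 := by
    rw [hℓdef]; field_simp
  set η : ℝ := ℓ / 32 with hηdef
  have hηpos : 0 < η := by positivity
  -- Weyl criterion at m = 1
  have hS0 := hud 1 one_ne_zero
  simp only [Int.cast_one, mul_one] at hS0
  have hS0' : Tendsto (fun N : ℕ => ((W N : ℝ) : ℂ)⁻¹ * S N) atTop (𝓝 0) := hS0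
  have hev1 : ∀ᶠ n in atTop, ‖((W n : ℝ) : ℂ)⁻¹ * S n‖ < η := by
    have h := hS0'.norm
    rw [norm_zero] at h
    exact h.eventually (gt_mem_nhds hηpos)
  have hev2 : ∀ᶠ n in atTop, max (Real.exp 1) (2 * w 1 / ℓ) ≤ W n :=
    hW.eventually_ge_atTop _
  obtain ⟨n₀, hn₀⟩ := eventually_atTop.1 ((hev1.and hev2).and hcon)
  set n₁ : ℕ := n₀ + 1 with hn₁def
  have hn₁1 : 1 ≤ n₁ := by omega
  -- packaged eventual facts
  have h3 : ∀ n, n₁ ≤ n → 1 ≤ Real.log (W n) := by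
    intro n hn
    have h := ((hn₀ n (by omega)).1.2).trans' (le_max_left _ _)
    have := Real.log_le_log (Real.exp_pos 1) h
    rwa [Real.log_exp] at this
  have hWbig : ∀ n, n₁ ≤ n → 2 * w 1 / ℓ ≤ W n := fun n hn =>
    ((hn₀ n (by omega)).1.2).trans' (le_max_right _ _)
  have h1 : ∀ n, n₁ ≤ n → |x n| ≤ M₁ * Real.log (W n) := by
    intro n hn
    have hnot := (hn₀ n (by omega)).2
    rw [not_lt] at hnot
    have hlog : (0:ℝ) < Real.log (W n) := lt_of_lt_of_le one_pos (h3 n hn)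
    have := (div_le_iff₀ hlog).1 hnot
    calc |x n| ≤ M * Real.log (W n) := this
      _ ≤ M₁ * Real.log (W n) := by
          apply mul_le_mul_of_nonneg_right (le_max_left _ _) hlog.le
  have h2 : ∀ n, n₁ ≤ n → ‖S n‖ ≤ η * W n := by
    intro n hn
    have h := (hn₀ n (by omega)).1.1
    have hWn : 0 < W n := hWpos n (by omega)
    rw [norm_mul, norm_inv, Complex.norm_real, Real.norm_eq_abs,
      abs_of_pos hWn] at h
    have hlt : (W n)⁻¹ * ‖S n‖ < η := h
    calc ‖S n‖ = W n * ((W n)⁻¹ * ‖S n‖) := by field_simp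
      _ ≤ W n * η := mul_le_mul_of_nonneg_left hlt.le hWn.le
      _ = η * W n := mul_comm _ _
  have h4 : ∀ n, n₁ ≤ n → Real.log (W (n + 1)) ≤ Real.log (W n) + ℓ / 2 := by
    intro n hn
    have hWn : 0 < W n := hWpos n (by omega)
    have hw1 : w (n + 1) ≤ w 1 := hwanti (by omega)
    have hbig := hWbig n hn
    have hstep : W (n + 1) = W n + w (n + 1) := by
      rw [hWdef]; exact Finset.sum_Icc_succ_top (by omega) w
    have hsmall : w (n + 1) ≤ ℓ / 2 * W n := by
      have : 2 * w 1 ≤ ℓ * W n := by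
        rw [div_le_iff₀ hℓpos] at hbig; linarith [hbig]
      linarith
    have hub : W (n + 1) ≤ W n * Real.exp (ℓ / 2) := by
      have he : 1 + ℓ / 2 ≤ Real.exp (ℓ / 2) := by
        linarith [Real.add_one_le_exp (ℓ / 2)]
      calc W (n + 1) = W n + w (n + 1) := hstep
        _ ≤ W n * (1 + ℓ / 2) := by nlinarith
        _ ≤ W n * Real.exp (ℓ / 2) := by nlinarith
    have := Real.log_le_log (hWpos (n + 1) (by omega)) hub
    rwa [Real.log_mul (ne_of_gt hWn) (ne_of_gt (Real.exp_pos _)),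
      Real.log_exp] at this
  set s₁ : ℝ := Real.log (W n₁) with hs₁def
  have hs₁ : 1 ≤ s₁ := h3 n₁ le_rfl
  have hIcc : ∀ N : ℕ, Finset.Icc 1 N = Finset.Ioc 0 N := fun N =>
    Finset.Icc_add_one_left_eq_Ioc 0 N
  have hSIoc : ∀ N : ℕ, S N = ∑ n ∈ Finset.Ioc 0 N,
      (w n : ℂ) * Complex.exp (2 * Real.pi * Complex.I * (x n)) := by
    intro N
    rw [hSdef]
    exact Finset.sum_congr (hIcc N) fun _ _ => rfl
  have hWIoc : ∀ N : ℕ, W N = ∑ n ∈ Finset.Ioc 0 N, w n := by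
    intro N
    rw [hWdef]
    exact Finset.sum_congr (hIcc N) fun _ _ => rfl
  clear_value W S
  -- checkpoints
  have hlogW : Tendsto (fun n => Real.log (W n)) atTop atTop :=
    Real.tendsto_log_atTop.comp hW
  have hex : ∀ k : ℕ, ∃ n, n₁ ≤ n ∧ s₁ + k * ℓ ≤ Real.log (W n) := by
    intro k
    obtain ⟨n, hn⟩ := ((hlogW.eventually_ge_atTop (s₁ + k * ℓ)).and
      (eventually_ge_atTop n₁)).exists
    exact ⟨n, hn.2, hn.1⟩
  set a : ℕ → ℕ := fun k => Nat.find (hex k) with hadef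
  have ha_spec : ∀ k, n₁ ≤ a k ∧ s₁ + k * ℓ ≤ Real.log (W (a k)) :=
    fun k => Nat.find_spec (hex k)
  have ha_ub : ∀ k, Real.log (W (a k)) ≤ s₁ + k * ℓ + ℓ / 2 := by
    intro k
    rcases Nat.lt_or_ge n₁ (a k) with h | h
    · obtain ⟨m, hm⟩ : ∃ m, a k = m + 1 := ⟨a k - 1, by omega⟩
      have hmn : n₁ ≤ m := by omega
      have hmin : ¬ (n₁ ≤ m ∧ s₁ + k * ℓ ≤ Real.log (W m)) :=
        Nat.find_min (hex k) (show m < a k by omega)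
      push_neg at hmin
      have hlt := hmin hmn
      have hst := h4 m hmn
      rw [hm]; linarith
    · have heq : a k = n₁ := le_antisymm h (ha_spec k).1
      rw [heq, ← hs₁def]
      have : (0:ℝ) ≤ (k:ℝ) * ℓ := by positivity
      linarith
  have ha_step : ∀ k, a k ≤ a (k + 1) := by
    intro k
    apply Nat.find_min'
    refine ⟨(ha_spec (k + 1)).1, ?_⟩
    have := (ha_spec (k + 1)).2
    push_cast at this ⊢
    linarith
  have ha_mono : Monotone a := monotone_nat_of_le_succ ha_step
  clear_value a
  -- pigeonhole: a good block exists
  obtain ⟨K, hK⟩ := exists_nat_ge (16 * M₁ * (2 * s₁ + ℓ))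
  have hK1 : 1 ≤ K := by
    have h32 : (32:ℝ) ≤ 16 * M₁ * (2 * s₁ + ℓ) := by nlinarith
    have : (1:ℝ) ≤ (K:ℝ) := by linarith
    exact_mod_cast this
  have htel : ∑ k ∈ range K, |x (a (k + 1)) - x (a k)| = |x (a K) - x (a 0)| := by
    rcases hxmono with hx | hx
    · have : ∀ k, |x (a (k + 1)) - x (a k)| = x (a (k + 1)) - x (a k) :=
        fun k => abs_of_nonneg (by linarith [hx (ha_step k)])
      simp only [this]
      rw [Finset.sum_range_sub (fun k => x (a k))]
      exact (abs_of_nonneg (by linarith [hx (ha_mono (Nat.zero_le K))])).symm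
    · have : ∀ k, |x (a (k + 1)) - x (a k)| = x (a k) - x (a (k + 1)) := fun k => by
        rw [abs_of_nonpos (by linarith [hx (ha_step k)] :
          x (a (k + 1)) - x (a k) ≤ 0)]
        ring
      simp only [this]
      rw [Finset.sum_range_sub' (fun k => x (a k))]
      rw [abs_sub_comm]
      exact (abs_of_nonneg (by linarith [hx (ha_mono (Nat.zero_le K))])).symm
  have htot : ∑ k ∈ range K, |x (a (k + 1)) - x (a k)| ≤
      M₁ * (2 * s₁ + K * ℓ + ℓ) := by
    rw [htel]
    have hK0 := h1 (a K) (ha_spec K).1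
    have h00 := h1 (a 0) (ha_spec 0).1
    have hubK := ha_ub K
    have hub0 := ha_ub 0
    have hlogKnn : (0:ℝ) ≤ Real.log (W (a K)) := by
      linarith [h3 (a K) (ha_spec K).1]
    have hlog0nn : (0:ℝ) ≤ Real.log (W (a 0)) := by
      linarith [h3 (a 0) (ha_spec 0).1]
    calc |x (a K) - x (a 0)| ≤ |x (a K)| + |x (a 0)| := abs_sub _ _
      _ ≤ M₁ * Real.log (W (a K)) + M₁ * Real.log (W (a 0)) := by linarith
      _ ≤ M₁ * (s₁ + K * ℓ + ℓ / 2) + M₁ * (s₁ + 0 * ℓ + ℓ / 2) := by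
          have t1 := mul_le_mul_of_nonneg_left hubK hM₁pos.le
          have t2 := mul_le_mul_of_nonneg_left hub0 hM₁pos.le
          push_cast at t2 ⊢
          linarith
      _ = M₁ * (2 * s₁ + K * ℓ + ℓ) := by ring
  have hgoodex : ∃ k, k < K ∧ |x (a (k + 1)) - x (a k)| ≤ 1 / 8 := by
    by_contra hbad
    push_neg at hbad
    have hlt : (K : ℝ) * (1 / 8) < ∑ k ∈ range K, |x (a (k + 1)) - x (a k)| := by
      calc (K : ℝ) * (1 / 8) = ∑ _k ∈ range K, (1 / 8 : ℝ) := by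
            rw [Finset.sum_const, Finset.card_range, nsmul_eq_mul]
        _ < _ := Finset.sum_lt_sum_of_nonempty
            (Finset.nonempty_range_iff.2 (by omega))
            (fun i hi => hbad i (Finset.mem_range.1 hi))
    have hexp : M₁ * (2 * s₁ + K * ℓ + ℓ) = M₁ * (2 * s₁ + ℓ) + (K : ℝ) * (M₁ * ℓ) := by
      ring
    rw [hMℓ] at hexp
    have hbound : M₁ * (2 * s₁ + ℓ) ≤ (K : ℝ) / 16 := by linarith
    have hfin : ∑ k ∈ range K, |x (a (k + 1)) - x (a k)| ≤ (K : ℝ) / 8 := by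
      rw [hexp] at htot; linarith
    linarith
  obtain ⟨k, hkK, hd⟩ := hgoodex
  set A : ℕ := a k with hAdef
  set B : ℕ := a (k + 1) with hBdef
  have hA1 : n₁ ≤ A := (ha_spec k).1
  have hB1 : n₁ ≤ B := (ha_spec (k + 1)).1
  have hAB : A ≤ B := ha_step k
  have hWA : 0 < W A := hWpos A (by omega)
  have hWB : 0 < W B := hWpos B (by omega)
  -- mass gap
  have hgap : Real.log (W A) + ℓ / 2 ≤ Real.log (W B) := by
    have hu := ha_ub k
    have hl := (ha_spec (k + 1)).2
    push_cast at hl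
    linarith
  have hratio : W A * Real.exp (ℓ / 2) ≤ W B := by
    have := Real.exp_le_exp.2 hgap
    rwa [Real.exp_add, Real.exp_log hWA, Real.exp_log hWB] at this
  have h5 : W A * (1 + ℓ / 2) ≤ W B := by
    have he : 1 + ℓ / 2 ≤ Real.exp (ℓ / 2) := by
      linarith [Real.add_one_le_exp (ℓ / 2)]
    nlinarith
  have hmass : ℓ / 4 * W B ≤ W B - W A := by
    rcases le_or_gt (W B) (2 * W A) with hc | hc
    · have f1 : ℓ / 4 * W B ≤ ℓ / 4 * (2 * W A) :=
        mul_le_mul_of_nonneg_left hc (by positivity)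
      linarith only [f1, h5]
    · have f2 : (0:ℝ) ≤ (1 - ℓ) * W B :=
        mul_nonneg (by linarith only [hℓ1]) hWB.le
      linarith only [f2, hc, hWB]
  -- phase control on the block
  have hxn : ∀ n, A ≤ n → n ≤ B → |x n - x A| ≤ 1 / 8 := by
    intro n hAn hnB
    rcases hxmono with hx | hx
    · have h₁ := hx hAn
      have h₂ := hx hnB
      have h₃ := le_abs_self (x B - x A)
      rw [abs_le]
      exact ⟨by linarith only [h₁], by linarith only [h₂, h₃, hd]⟩
    · have h₁ := hx hAn
      have h₂ := hx hnB
      have h₃ := le_abs_self (x A - x B)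
      rw [abs_sub_comm] at hd
      rw [abs_le]
      exact ⟨by linarith only [h₂, h₃, hd], by linarith only [h₁]⟩
  -- sum over the block
  have hdiffS : S B - S A = ∑ n ∈ Finset.Ioc A B,
      (w n : ℂ) * Complex.exp (2 * Real.pi * Complex.I * (x n)) := by
    rw [hSIoc A, hSIoc B]
    exact sub_eq_of_eq_add' (Finset.sum_Ioc_consecutive
      (fun n => (w n : ℂ) * Complex.exp (2 * Real.pi * Complex.I * (x n)))
      (Nat.zero_le A) hAB).symm
  have hdiffW : W B - W A = ∑ n ∈ Finset.Ioc A B, w n := by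
    rw [hWIoc A, hWIoc B]
    exact sub_eq_of_eq_add' (Finset.sum_Ioc_consecutive w
      (Nat.zero_le A) hAB).symm
  -- real part identity
  set θ : ℝ := 2 * Real.pi * x A with hθdef
  have hre : (Complex.exp (-(θ:ℂ) * Complex.I) * (S B - S A)).re =
      ∑ n ∈ Finset.Ioc A B, w n * Real.cos (2 * Real.pi * x n - θ) := by
    rw [hdiffS, Finset.mul_sum, Complex.re_sum]
    refine Finset.sum_congr rfl fun n hn => ?_
    have hexp : Complex.exp (-(θ:ℂ) * Complex.I) *
        ((w n : ℂ) * Complex.exp (2 * Real.pi * Complex.I * (x n))) =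
        (w n : ℂ) * Complex.exp ((2 * Real.pi * x n - θ : ℝ) * Complex.I) := by
      rw [mul_left_comm, ← Complex.exp_add]
      congr 1
      push_cast
      ring
    rw [hexp, Complex.re_ofReal_mul, Complex.exp_ofReal_mul_I_re]
  -- lower bound
  have hlower : 1 / 2 * (W B - W A) ≤
      (Complex.exp (-(θ:ℂ) * Complex.I) * (S B - S A)).re := by
    rw [hre, hdiffW, Finset.mul_sum]
    apply Finset.sum_le_sum
    intro n hn
    obtain ⟨hAn, hnB⟩ := Finset.mem_Ioc.1 hn
    have hx8 := hxn n hAn.le hnB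
    have hcos : (1 / 2 : ℝ) ≤ Real.cos (2 * Real.pi * x n - θ) := by
      have heq : 2 * Real.pi * x n - θ = 2 * Real.pi * (x n - x A) := by
        rw [hθdef]; ring
      rw [heq, ← Real.cos_abs]
      have habs : |2 * Real.pi * (x n - x A)| ≤ Real.pi / 3 := by
        rw [abs_mul, abs_of_pos (by positivity : (0:ℝ) < 2 * Real.pi)]
        have f := mul_le_mul_of_nonneg_left hx8
          (by positivity : (0:ℝ) ≤ 2 * Real.pi)
        linarith only [f, Real.pi_pos]
      calc (1 / 2 : ℝ) = Real.cos (Real.pi / 3) := Real.cos_pi_div_three.symm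
        _ ≤ Real.cos |2 * Real.pi * (x n - x A)| :=
            Real.cos_le_cos_of_nonneg_of_le_pi (abs_nonneg _)
              (by linarith only [Real.pi_pos]) habs
    have f := mul_le_mul_of_nonneg_left hcos (hpos n).le
    linarith only [f]
  -- upper bound
  have hupper : (Complex.exp (-(θ:ℂ) * Complex.I) * (S B - S A)).re ≤
      2 * η * W B := by
    have h₁ := Complex.re_le_norm (Complex.exp (-(θ:ℂ) * Complex.I) * (S B - S A))
    rw [norm_mul] at h₁
    have hz : ‖Complex.exp (-(θ:ℂ) * Complex.I)‖ = 1 := by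
      rw [Complex.norm_exp]
      have hre0 : (-(θ:ℂ) * Complex.I).re = 0 := by simp
      rw [hre0, Real.exp_zero]
    have h₂ : ‖S B - S A‖ ≤ η * W B + η * W A :=
      (norm_sub_le _ _).trans (add_le_add (h2 B hB1) (h2 A hA1))
    have hWAB : W A ≤ W B := hWmono hAB
    rw [hz, one_mul] at h₁
    linarith only [h₁, h₂, mul_le_mul_of_nonneg_left hWAB hηpos.le]
  -- contradiction
  have hfinal : ℓ / 8 * W B ≤ ℓ / 16 * W B := by
    have := hlower.trans hupper
    rw [hηdef] at this
    linarith only [hmass, this]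
  linarith only [hfinal, mul_pos hℓpos hWB]
end

section
/- Let (w(n)) be positive non-increasing with W(N) → ∞, and let u : ℝ → ℝ satisfy: (u(p_n)) is w(n)-uniformly distributed mod 1, and |u(p_n) − u(n log n)| → 0 as n → ∞. Let D = {n : ⌊u(n log n)⌋ ≠ ⌊u(p_n)⌋}. Then (1/W(N)) Σ_{n=1}^N w(n)·1_D(n) → 0. -/
set_option maxHeartbeats 1000000
open Filter Finset Topology

noncomputable def ee (t : ℝ) : ℂ := Complex.exp (2 * Real.pi * Complex.I * t)

lemma ee_zero : ee 0 = 1 := by simp [ee]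

lemma ee_add (s t : ℝ) : ee (s + t) = ee s * ee t := by
  simp only [ee, ← Complex.exp_add]; push_cast; ring_nf

lemma ee_int (m : ℤ) : ee (m : ℝ) = 1 := by
  have := Complex.exp_int_mul_two_pi_mul_I m
  rw [ee]; rw [← this]; push_cast; ring_nf

lemma conj_ee (t : ℝ) : (starRingEnd ℂ) (ee t) = ee (-t) := by
  rw [ee, ← Complex.exp_conj]
  congr 1
  simp [Complex.ext_iff]

lemma avg_kernel (w : ℕ → ℝ) (x : ℕ → ℝ)
    (hW : Tendsto (fun N : ℕ => ∑ n ∈ Icc 1 N, w n) atTop atTop)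
    (hud : ∀ m : ℤ, m ≠ 0 →
      Tendsto (fun N : ℕ => ((∑ n ∈ Icc 1 N, w n : ℝ) : ℂ)⁻¹ *
        ∑ n ∈ Icc 1 N, (w n : ℂ) * ee ((m : ℝ) * x n)) atTop (𝓝 0))
    (K : ℕ) :
    Tendsto (fun N : ℕ => (∑ n ∈ Icc 1 N, w n)⁻¹ *
      ∑ n ∈ Icc 1 N, w n * ‖∑ j ∈ range K, ee (j * x n)‖^2) atTop (𝓝 K) := by
  have hS1 : ∀ᶠ N in atTop, (1:ℝ) ≤ ∑ n ∈ Icc 1 N, w n := hW.eventually_ge_atTop 1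
  have hf : ∀ m : ℤ, Tendsto (fun N : ℕ => ((∑ n ∈ Icc 1 N, w n : ℝ) : ℂ)⁻¹ *
      ∑ n ∈ Icc 1 N, (w n : ℂ) * ee ((m : ℝ) * x n)) atTop
      (𝓝 (if m = 0 then 1 else 0)) := by
    intro m
    by_cases hm : m = 0
    · subst hm
      simp only [Int.cast_zero, zero_mul, ee_zero, mul_one, if_pos rfl]
      have hev : ∀ᶠ N in atTop, ((∑ n ∈ Icc 1 N, w n : ℝ):ℂ)⁻¹ *
          (∑ n ∈ Icc 1 N, (w n : ℂ)) = 1 := by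
        filter_upwards [hS1] with N hN
        have hne : ((∑ n ∈ Icc 1 N, w n : ℝ):ℂ) ≠ 0 := by
          simp only [ne_eq, Complex.ofReal_eq_zero]; intro h; rw [h] at hN; linarith
        rw [show (∑ n ∈ Icc 1 N, (w n : ℂ)) = ((∑ n ∈ Icc 1 N, w n : ℝ):ℂ) by push_cast; rfl,
          inv_mul_cancel₀ hne]
      refine Tendsto.congr' ?_ tendsto_const_nhds
      filter_upwards [hev] with N h
      exact h.symm
    · simp only [if_neg hm]; exact hud m hm
  -- value of the double sum of Kronecker deltas
  have hval : (∑ j ∈ range K, ∑ j' ∈ range K,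
      (if ((j:ℤ) - (j':ℤ) = 0) then (1:ℂ) else 0)) = (K : ℂ) := by
    have h1 : ∀ j ∈ range K, (∑ j' ∈ range K,
        (if ((j:ℤ) - (j':ℤ) = 0) then (1:ℂ) else 0)) = 1 := by
      intro j hj
      have h2 : ∀ j' ∈ range K, (if ((j:ℤ) - (j':ℤ) = 0) then (1:ℂ) else 0)
          = (if j = j' then (1:ℂ) else 0) := by
        intro j' _
        congr 1
        simp [sub_eq_zero]
      rw [Finset.sum_congr rfl h2, Finset.sum_ite_eq, if_pos hj]
    rw [Finset.sum_congr rfl h1]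
    simp
  have hΦ : Tendsto (fun N : ℕ => ∑ j ∈ range K, ∑ j' ∈ range K,
      (((∑ n ∈ Icc 1 N, w n : ℝ) : ℂ)⁻¹ *
        ∑ n ∈ Icc 1 N, (w n : ℂ) * ee ((Int.cast ((j:ℤ) - (j':ℤ)) : ℝ) * x n))) atTop (𝓝 (K:ℂ)) := by
    have h1 := tendsto_finset_sum (range K) (fun j (_ : j ∈ range K) =>
      tendsto_finset_sum (range K) (fun j' (_ : j' ∈ range K) => hf ((j:ℤ) - j')))
    rwa [hval] at h1
  -- expansion identity
  have hz : ∀ n : ℕ, (∑ j ∈ range K, ee (j * x n)) *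
      (starRingEnd ℂ) (∑ j ∈ range K, ee (j * x n))
      = ∑ j ∈ range K, ∑ j' ∈ range K, ee ((Int.cast ((j:ℤ) - (j':ℤ)) : ℝ) * x n) := by
    intro n
    rw [map_sum, Finset.sum_mul_sum]
    refine Finset.sum_congr rfl fun j _ => Finset.sum_congr rfl fun j' _ => ?_
    rw [conj_ee, ← ee_add]
    congr 1
    push_cast
    ring
  have hkey : ∀ N : ℕ, (∑ j ∈ range K, ∑ j' ∈ range K,
      (((∑ n ∈ Icc 1 N, w n : ℝ) : ℂ)⁻¹ *
        ∑ n ∈ Icc 1 N, (w n : ℂ) * ee ((Int.cast ((j:ℤ) - (j':ℤ)) : ℝ) * x n)))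
      = ((∑ n ∈ Icc 1 N, w n : ℝ) : ℂ)⁻¹ * ∑ n ∈ Icc 1 N, (w n : ℂ) *
        ((∑ j ∈ range K, ee (j * x n)) * (starRingEnd ℂ) (∑ j ∈ range K, ee (j * x n))) := by
    intro N
    have e1 : ∀ n ∈ Icc 1 N, (w n : ℂ) *
        ((∑ j ∈ range K, ee (j * x n)) * (starRingEnd ℂ) (∑ j ∈ range K, ee (j * x n)))
        = ∑ j ∈ range K, ∑ j' ∈ range K, (w n : ℂ) * ee ((Int.cast ((j:ℤ) - (j':ℤ)) : ℝ) * x n) := by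
      intro n _
      rw [hz n, Finset.mul_sum]
      exact Finset.sum_congr rfl fun j _ => Finset.mul_sum _ _ _
    rw [Finset.sum_congr rfl e1]
    simp only [← Finset.mul_sum]
    congr 1
    calc ∑ j ∈ range K, ∑ j' ∈ range K, ∑ n ∈ Icc 1 N,
          (w n : ℂ) * ee (Int.cast ((j:ℤ) - (j':ℤ)) * x n)
        = ∑ j ∈ range K, ∑ n ∈ Icc 1 N, ∑ j' ∈ range K,
          (w n : ℂ) * ee (Int.cast ((j:ℤ) - (j':ℤ)) * x n) :=
          Finset.sum_congr rfl (fun j _ => Finset.sum_comm)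
      _ = ∑ n ∈ Icc 1 N, ∑ j ∈ range K, ∑ j' ∈ range K,
          (w n : ℂ) * ee (Int.cast ((j:ℤ) - (j':ℤ)) * x n) := Finset.sum_comm
      _ = ∑ n ∈ Icc 1 N, (w n : ℂ) * ∑ j ∈ range K, ∑ j' ∈ range K,
          ee (Int.cast ((j:ℤ) - (j':ℤ)) * x n) := by
          refine Finset.sum_congr rfl fun n _ => ?_
          rw [Finset.mul_sum]
          exact Finset.sum_congr rfl fun j _ => (Finset.mul_sum _ _ _).symm
  -- pass to the real part
  have hΦ' : Tendsto (fun N : ℕ => ((∑ n ∈ Icc 1 N, w n : ℝ) : ℂ)⁻¹ *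
      ∑ n ∈ Icc 1 N, (w n : ℂ) *
        ((∑ j ∈ range K, ee (j * x n)) * (starRingEnd ℂ) (∑ j ∈ range K, ee (j * x n))))
      atTop (𝓝 (K:ℂ)) := by
    refine hΦ.congr fun N => hkey N
  have hRC : ∀ N : ℕ, (∑ n ∈ Icc 1 N, w n)⁻¹ *
      (∑ n ∈ Icc 1 N, w n * ‖∑ j ∈ range K, ee (j * x n)‖^2)
      = (((∑ n ∈ Icc 1 N, w n : ℝ) : ℂ)⁻¹ * ∑ n ∈ Icc 1 N, (w n : ℂ) *
        ((∑ j ∈ range K, ee (j * x n)) * (starRingEnd ℂ) (∑ j ∈ range K, ee (j * x n)))).re := by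
    intro N
    have e2 : ∀ n ∈ Icc 1 N, (w n : ℂ) *
        ((∑ j ∈ range K, ee (j * x n)) * (starRingEnd ℂ) (∑ j ∈ range K, ee (j * x n)))
        = (((w n * ‖∑ j ∈ range K, ee (j * x n)‖^2 : ℝ)) : ℂ) := by
      intro n _
      rw [Complex.mul_conj]
      rw [Complex.normSq_eq_norm_sq]
      push_cast
      ring
    rw [Finset.sum_congr rfl e2, ← Complex.ofReal_sum, ← Complex.ofReal_inv,
      ← Complex.ofReal_mul, Complex.ofReal_re]
  have hre : ((K:ℂ)).re = (K:ℝ) := by simp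
  refine Tendsto.congr (fun N => (hRC N).symm) ?_
  rw [← hre]
  exact Tendsto.comp (Complex.continuous_re.tendsto _) hΦ'
lemma ee_re (t : ℝ) : (ee t).re = Real.cos (2 * Real.pi * t) := by
  have h : (2 * Real.pi * Complex.I * t) = ((2 * Real.pi * t : ℝ) : ℂ) * Complex.I := by
    push_cast; ring
  rw [ee, h, Complex.exp_ofReal_mul_I_re]

lemma sum_sq_le (K : ℕ) : ∑ j ∈ range K, (j : ℝ)^2 ≤ K^3 / 3 := by
  induction K with
  | zero => simp
  | succ K ih =>
    rw [Finset.sum_range_succ]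
    push_cast
    nlinarith [ih, Nat.cast_nonneg (α := ℝ) K]

lemma kernel_lower (K : ℕ) (hK : 1 ≤ K) (x : ℝ) (m : ℤ) (h : |x - m| ≤ 1/(4*K)) :
    (K:ℝ)^2/4 ≤ ‖∑ j ∈ range K, ee (j * x)‖^2 := by
  set y := x - (m:ℝ) with hy
  clear_value y
  have hK1 : (1:ℝ) ≤ K := by exact_mod_cast hK
  have hK0 : (0:ℝ) < 4*K := by positivity
  rw [le_div_iff₀ hK0] at h
  have h6 : 16*(K:ℝ)^2*y^2 ≤ 1 := by
    have h7 := mul_le_mul h h (by positivity) (by norm_num : (0:ℝ) ≤ 1)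
    nlinarith [sq_abs y, h7]
  have hxy : ∀ j ∈ range K, ee (j * x) = ee (j * y) := by
    intro j _
    have h1 : (j:ℝ) * x = j * y + ((j * m : ℤ) : ℝ) := by push_cast; rw [hy]; ring
    rw [h1, ee_add, ee_int, mul_one]
  rw [Finset.sum_congr rfl hxy]
  have hre : (K:ℝ)/2 ≤ (∑ j ∈ range K, ee (j * y)).re := by
    rw [Complex.re_sum]
    have hterm : ∀ j ∈ range K, 1 - (2*Real.pi*(j:ℝ)*y)^2/2 ≤ (ee (j*y)).re := by
      intro j _
      rw [ee_re]
      rw [show 2*Real.pi*((j:ℝ)*y) = 2*Real.pi*(j:ℝ)*y from by ring]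
      exact Real.one_sub_sq_div_two_le_cos
    have hsum : ∑ j ∈ range K, (1 - (2*Real.pi*(j:ℝ)*y)^2/2)
        = K - (2*Real.pi*y)^2/2 * ∑ j ∈ range K, (j:ℝ)^2 := by
      rw [Finset.sum_sub_distrib, Finset.sum_const, card_range, nsmul_eq_mul, mul_one,
        Finset.mul_sum]
      congr 1
      apply Finset.sum_congr rfl
      intro j _
      ring
    have h4 : (2*Real.pi*y)^2/2 * (∑ j ∈ range K, (j:ℝ)^2) ≤ (2*Real.pi*y)^2/2 * ((K:ℝ)^3/3) :=
      mul_le_mul_of_nonneg_left (sum_sq_le K) (by positivity)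
    have hp2 : Real.pi^2 ≤ 10 := by nlinarith [Real.pi_lt_d2, Real.pi_gt_three]
    have h5 : (2*Real.pi*y)^2/2 * ((K:ℝ)^3/3) ≤ (K:ℝ)/2 := by
      have hK3 := mul_le_mul_of_nonneg_left h6 (by positivity : (0:ℝ) ≤ (K:ℝ))
      have h8 := mul_le_mul_of_nonneg_right hp2
        (mul_nonneg (sq_nonneg y) (by positivity : (0:ℝ) ≤ (K:ℝ)^3))
      have hgoal : (2*Real.pi*y)^2/2 * ((K:ℝ)^3/3) = 2/3*(Real.pi^2*(y^2*(K:ℝ)^3)) := by ring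
      rw [hgoal]
      linarith
    calc (K:ℝ)/2 ≤ ∑ j ∈ range K, (1 - (2*Real.pi*(j:ℝ)*y)^2/2) := by
            rw [hsum]; linarith
      _ ≤ ∑ j ∈ range K, (ee ((j:ℝ)*y)).re := Finset.sum_le_sum hterm
  have hnorm : (K:ℝ)/2 ≤ ‖∑ j ∈ range K, ee (j * y)‖ := by
    refine hre.trans ?_
    exact Complex.re_le_norm _
  have := pow_le_pow_left₀ (by positivity) hnorm 2
  nlinarith [this]
lemma floor_gap (a b : ℝ) (h : ⌊a⌋ ≠ ⌊b⌋) : ∃ m : ℤ, |a - m| ≤ |a - b| := by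
  rcases lt_or_gt_of_ne h with h1 | h1
  · refine ⟨⌊b⌋, ?_⟩
    have hfb : ((⌊b⌋ : ℝ)) ≤ b := Int.floor_le b
    have hab : a < (⌊b⌋ : ℝ) := by
      have : ((⌊a⌋ : ℝ)) + 1 ≤ (⌊b⌋ : ℝ) := by exact_mod_cast h1
      have := Int.lt_floor_add_one a
      linarith
    rw [abs_of_nonpos (by linarith), abs_of_nonpos (by linarith)]
    linarith
  · refine ⟨⌊a⌋, ?_⟩
    have hfa : ((⌊a⌋ : ℝ)) ≤ a := Int.floor_le a
    have hba : b < (⌊a⌋ : ℝ) := by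
      have : ((⌊b⌋ : ℝ)) + 1 ≤ (⌊a⌋ : ℝ) := by exact_mod_cast h1
      have := Int.lt_floor_add_one b
      linarith
    rw [abs_of_nonneg (by linarith), abs_of_nonneg (by linarith)]
    linarith

theorem floor_discrepancy_negligible
    (w : ℕ → ℝ) (hpos : ∀ n, 0 < w n) (hmono : ∀ n, w (n + 1) ≤ w n)
    (hW : Tendsto (fun N : ℕ => ∑ n ∈ Icc 1 N, w n) atTop atTop)
    (u : ℝ → ℝ)
    (hud : ∀ m : ℤ, m ≠ 0 →
      Tendsto (fun N : ℕ => ((∑ n ∈ Icc 1 N, w n : ℝ) : ℂ)⁻¹ *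
        ∑ n ∈ Icc 1 N, (w n : ℂ) *
          Complex.exp (2 * Real.pi * Complex.I * m *
            u (Nat.nth Nat.Prime (n - 1)))) atTop (𝓝 0))
    (hclose : Tendsto (fun n : ℕ =>
      |u (Nat.nth Nat.Prime (n - 1)) - u (n * Real.log n)|) atTop (𝓝 0)) :
    Tendsto (fun N : ℕ => (∑ n ∈ Icc 1 N, w n)⁻¹ *
      ∑ n ∈ Icc 1 N, w n *
        (if ⌊u (n * Real.log n)⌋ ≠ ⌊u (Nat.nth Nat.Prime (n - 1))⌋
          then (1 : ℝ) else 0)) atTop (𝓝 0) := by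
  have hud' : ∀ m : ℤ, m ≠ 0 →
      Tendsto (fun N : ℕ => ((∑ n ∈ Icc 1 N, w n : ℝ) : ℂ)⁻¹ *
        ∑ n ∈ Icc 1 N, (w n : ℂ) * ee ((m : ℝ) * u (Nat.nth Nat.Prime (n - 1))))
        atTop (𝓝 0) := by
    intro m hm
    have heq : ∀ t : ℝ, ee ((m : ℝ) * t) = Complex.exp (2 * Real.pi * Complex.I * m * t) := by
      intro t; rw [ee]; congr 1; push_cast; ring
    simp only [heq]
    exact hud m hm
  have havg : ∀ K : ℕ, Tendsto (fun N : ℕ => (∑ n ∈ Icc 1 N, w n)⁻¹ *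
      ∑ n ∈ Icc 1 N, w n *
        ‖∑ j ∈ range K, ee (j * u (Nat.nth Nat.Prime (n - 1)))‖^2) atTop (𝓝 K) :=
    fun K => avg_kernel w (fun n => u (Nat.nth Nat.Prime (n - 1))) hW hud' K
  refine NormedAddCommGroup.tendsto_nhds_zero.mpr (fun ε hε => ?_)
  -- choose K
  obtain ⟨K, hK1, hKε⟩ : ∃ K : ℕ, 1 ≤ K ∧ 16 / ε < K := by
    obtain ⟨K, hK⟩ := exists_nat_gt (max 1 (16 / ε))
    refine ⟨K, ?_, lt_of_le_of_lt (le_max_right _ _) hK⟩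
    have : (1 : ℝ) < K := lt_of_le_of_lt (le_max_left _ _) hK
    exact_mod_cast this.le
  have hK0 : (0 : ℝ) < K := by
    have : (1 : ℝ) ≤ K := by exact_mod_cast hK1
    linarith
  have h8K : 8 / (K : ℝ) < ε / 2 := by
    rw [div_lt_iff₀ hK0]
    rw [div_lt_iff₀ hε] at hKε
    nlinarith
  -- threshold from hclose
  have hδ : (0 : ℝ) < 1 / (4 * K) := by positivity
  have hcl : ∀ᶠ n in atTop,
      |u (Nat.nth Nat.Prime (n - 1)) - u (n * Real.log n)| ≤ 1 / (4 * K) :=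
    hclose.eventually (eventually_le_nhds hδ)
  obtain ⟨N₀, hN₀⟩ := eventually_atTop.1 hcl
  set N₁ := max 1 N₀ with hN₁def
  have hN₁1 : 1 ≤ N₁ := le_max_left _ _
  set C := ∑ n ∈ Icc 1 N₁, w n with hCdef
  have hC0 : 0 < C := Finset.sum_pos (fun i _ => hpos i) ⟨1, Finset.mem_Icc.2 ⟨le_rfl, hN₁1⟩⟩
  -- eventual facts
  have hE1 : ∀ᶠ N in atTop, max 1 (4 * C / ε) ≤ ∑ n ∈ Icc 1 N, w n :=
    hW.eventually_ge_atTop _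
  have hE2 : ∀ᶠ N in atTop, (∑ n ∈ Icc 1 N, w n)⁻¹ *
      ∑ n ∈ Icc 1 N, w n *
        ‖∑ j ∈ range K, ee (j * u (Nat.nth Nat.Prime (n - 1)))‖^2 < 2 * K :=
    (havg K).eventually_lt_const (by linarith)
  filter_upwards [hE1, hE2, eventually_ge_atTop N₁] with N h1 h2 h3
  have hSN1 : (1 : ℝ) ≤ ∑ n ∈ Icc 1 N, w n := le_trans (le_max_left _ _) h1
  have hSpos : (0 : ℝ) < ∑ n ∈ Icc 1 N, w n := by linarith
  -- notation
  set χ : ℕ → ℝ := fun n => if ⌊u (n * Real.log n)⌋ ≠ ⌊u (Nat.nth Nat.Prime (n - 1))⌋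
    then (1 : ℝ) else 0 with hχdef
  have hχ01 : ∀ n, 0 ≤ χ n ∧ χ n ≤ 1 := by
    intro n; constructor <;> · simp only [hχdef]; split <;> norm_num
  set H : ℕ → ℝ := fun n => ‖∑ j ∈ range K, ee (j * u (Nat.nth Nat.Prime (n - 1)))‖^2
    with hHdef
  have hH0 : ∀ n, 0 ≤ H n := fun n => by positivity
  -- pointwise bound for n > N₁
  have hpoint : ∀ n, N₁ < n → w n * χ n ≤ 4 / (K:ℝ)^2 * (w n * H n) := by
    intro n hn
    by_cases hD : ⌊u (n * Real.log n)⌋ ≠ ⌊u (Nat.nth Nat.Prime (n - 1))⌋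
    · have hχ1 : χ n = 1 := by simp only [hχdef]; rw [if_pos hD]
      obtain ⟨m, hm⟩ := floor_gap (u (Nat.nth Nat.Prime (n - 1))) (u (n * Real.log n))
        (Ne.symm hD)
      have hmle : |u (Nat.nth Nat.Prime (n - 1)) - m| ≤ 1 / (4 * K) :=
        le_trans hm (hN₀ n (le_trans (le_max_right 1 N₀) hn.le))
      have hker := kernel_lower K hK1 (u (Nat.nth Nat.Prime (n - 1))) m hmle
      have hHn : (K:ℝ)^2 / 4 ≤ H n := hker
      have h4K : (1:ℝ) ≤ 4 / (K:ℝ)^2 * H n := by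
        have hq' : (0:ℝ) < 4 / (K:ℝ)^2 := by positivity
        have h5 := mul_le_mul_of_nonneg_left hHn hq'.le
        have h6 : 4 / (K:ℝ)^2 * ((K:ℝ)^2 / 4) = 1 := by
          field_simp
        linarith
      rw [hχ1, mul_one]
      calc w n = w n * 1 := (mul_one _).symm
        _ ≤ w n * (4 / (K:ℝ)^2 * H n) := by
            exact mul_le_mul_of_nonneg_left h4K (hpos n).le
        _ = 4 / (K:ℝ)^2 * (w n * H n) := by ring
    · have hχ0 : χ n = 0 := by simp only [hχdef]; rw [if_neg hD]
      rw [hχ0, mul_zero]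
      exact mul_nonneg (by positivity) (mul_nonneg (hpos n).le (hH0 n))
  -- splitting the sum
  have hIoc : ∀ M : ℕ, Icc 1 M = Ioc 0 M := fun M => by rw [← Finset.Icc_add_one_left_eq_Ioc, zero_add]
  have hsplit : ∑ n ∈ Icc 1 N, w n * χ n
      ≤ C + 4 / (K:ℝ)^2 * ∑ n ∈ Icc 1 N, w n * H n := by
    have hdecomp : ∑ n ∈ Icc 1 N₁, w n * χ n + ∑ n ∈ Ioc N₁ N, w n * χ n
        = ∑ n ∈ Icc 1 N, w n * χ n := by
      rw [hIoc N₁, hIoc N]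
      exact Finset.sum_Ioc_consecutive _ (Nat.zero_le N₁) h3
    have hhead : ∑ n ∈ Icc 1 N₁, w n * χ n ≤ C := by
      refine Finset.sum_le_sum fun n _ => ?_
      calc w n * χ n ≤ w n * 1 := mul_le_mul_of_nonneg_left (hχ01 n).2 (hpos n).le
        _ = w n := mul_one _
    have htail : ∑ n ∈ Ioc N₁ N, w n * χ n
        ≤ 4 / (K:ℝ)^2 * ∑ n ∈ Ioc N₁ N, w n * H n := by
      rw [Finset.mul_sum]
      exact Finset.sum_le_sum fun n hn => hpoint n (Finset.mem_Ioc.1 hn).1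
    have hsub : ∑ n ∈ Ioc N₁ N, w n * H n ≤ ∑ n ∈ Icc 1 N, w n * H n := by
      refine Finset.sum_le_sum_of_subset_of_nonneg ?_
        (fun i _ _ => mul_nonneg (hpos i).le (hH0 i))
      intro a ha
      rw [Finset.mem_Ioc] at ha
      exact Finset.mem_Icc.2 ⟨by omega, ha.2⟩
    have h4 : (0:ℝ) ≤ 4 / (K:ℝ)^2 := by positivity
    nlinarith [mul_le_mul_of_nonneg_left hsub h4]
  -- conclude
  have hA0 : 0 ≤ (∑ n ∈ Icc 1 N, w n)⁻¹ * ∑ n ∈ Icc 1 N, w n * χ n := by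
    apply mul_nonneg (by positivity)
    exact Finset.sum_nonneg fun n _ => mul_nonneg (hpos n).le (hχ01 n).1
  rw [Real.norm_eq_abs, abs_of_nonneg hA0]
  have hsC : (∑ n ∈ Icc 1 N, w n)⁻¹ * C ≤ ε / 4 := by
    rw [inv_mul_le_iff₀ hSpos]
    have h4C : 4 * C / ε ≤ ∑ n ∈ Icc 1 N, w n := le_trans (le_max_right _ _) h1
    rw [div_le_iff₀ hε] at h4C
    nlinarith
  have hq : (0:ℝ) < 4 / (K:ℝ)^2 := by positivity
  have hstep : (∑ n ∈ Icc 1 N, w n)⁻¹ * ∑ n ∈ Icc 1 N, w n * χ n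
      ≤ (∑ n ∈ Icc 1 N, w n)⁻¹ * C
        + 4 / (K:ℝ)^2 * ((∑ n ∈ Icc 1 N, w n)⁻¹ * ∑ n ∈ Icc 1 N, w n * H n) := by
    have := mul_le_mul_of_nonneg_left hsplit (inv_nonneg.2 hSpos.le)
    calc (∑ n ∈ Icc 1 N, w n)⁻¹ * ∑ n ∈ Icc 1 N, w n * χ n
        ≤ (∑ n ∈ Icc 1 N, w n)⁻¹ * (C + 4 / (K:ℝ)^2 * ∑ n ∈ Icc 1 N, w n * H n) := this
      _ = (∑ n ∈ Icc 1 N, w n)⁻¹ * C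
        + 4 / (K:ℝ)^2 * ((∑ n ∈ Icc 1 N, w n)⁻¹ * ∑ n ∈ Icc 1 N, w n * H n) := by ring
  have hmid := mul_lt_mul_of_pos_left h2 hq
  have hfin : 4 / (K:ℝ)^2 * (2 * K) = 8 / K := by
    field_simp
    ring
  calc (∑ n ∈ Icc 1 N, w n)⁻¹ * ∑ n ∈ Icc 1 N, w n * χ n
      ≤ (∑ n ∈ Icc 1 N, w n)⁻¹ * C
        + 4 / (K:ℝ)^2 * ((∑ n ∈ Icc 1 N, w n)⁻¹ * ∑ n ∈ Icc 1 N, w n * H n) := hstep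
    _ < ε / 4 + 8 / K := by
        rw [hfin] at hmid
        exact add_lt_add_of_le_of_lt hsC hmid
    _ < ε := by linarith
end
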